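/- arXiv:math/0407148 — 9 statements merged into one kernel-verified Lean document; each statement's English description precedes it below -/
import Mathlib

section
/- For every odd integer n ≥ 3 there exists a permutation f of F_2^n such that 2-affinity(f) = 0, i.e., no 2-flat of F_2^n is mapped by f onto a 2-flat. -/
/-- A `k`-flat in an `F`-vector space `V`: a coset of a `k`-dimensional `F`-subspace. -/
def IsFlat (F : Type*) {V : Type*} [Field F] [AddCommGroup V] [Module F V]
    (k : ℕ) (X : Set V) : Prop :=
  ∃ (U : Submodule F V) (x : V), Module.finrank F U = k ∧ X = (fun u => u + x) '' (U : Set V)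

/-- The `k`-affinity of a map `f : V → V`: the number of `k`-flats `X` of `V`
such that `f(X)` is also a `k`-flat. -/
noncomputable def affinity (F : Type*) {V : Type*} [Field F] [AddCommGroup V] [Module F V]
    (k : ℕ) (f : V → V) : ℕ :=
  {X : Set V | IsFlat F k X ∧ IsFlat F k (f '' X)}.ncard

section CharTwoModule

variable {V : Type*} [AddCommGroup V] [Module (ZMod 2) V]

lemma self_add_self (v : V) : v + v = 0 := by
  have h := two_smul (ZMod 2) v
  have h2 : (2 : ZMod 2) = 0 := by decide
  rw [h2, zero_smul] at h
  exact h.symm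

lemma add_eq_zero_iff_eq' {a b : V} : a + b = 0 ↔ a = b := by
  constructor
  · intro h
    calc a = a + (b + b) := by rw [self_add_self, add_zero]
    _ = (a + b) + b := by rw [add_assoc]
    _ = b := by rw [h, zero_add]
  · rintro rfl; exact self_add_self a

lemma zmod2_cases (c : ZMod 2) : c = 0 ∨ c = 1 := by revert c; decide

/-- The set underlying the span of a pair over `ZMod 2`. -/
lemma span_pair_set (u v : V) :
    (Submodule.span (ZMod 2) {u, v} : Set V) = {0, u, v, u + v} := by
  ext w
  simp only [SetLike.mem_coe, Submodule.mem_span_pair, Set.mem_insert_iff,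
    Set.mem_singleton_iff]
  constructor
  · rintro ⟨a, b, rfl⟩
    rcases zmod2_cases a with rfl | rfl <;> rcases zmod2_cases b with rfl | rfl <;>
      simp [zero_smul, one_smul]
  · rintro (rfl | rfl | rfl | rfl)
    · exact ⟨0, 0, by simp⟩
    · exact ⟨1, 0, by simp⟩
    · exact ⟨0, 1, by simp⟩
    · exact ⟨1, 1, by simp⟩

/-- Characterization of 2-flats over `ZMod 2`. -/
lemma flat_iff_two (X : Set V) :
    IsFlat (ZMod 2) 2 X ↔
      ∃ x y z : V, x ≠ y ∧ x ≠ z ∧ y ≠ z ∧ X = {x, y, z, x + y + z} := by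
  constructor
  · rintro ⟨U, x, hU, rfl⟩
    haveI : FiniteDimensional (ZMod 2) U := FiniteDimensional.of_finrank_pos (by omega)
    let b := Module.finBasisOfFinrankEq (ZMod 2) U hU
    set u0 : V := (b 0 : V) with hu0
    set u1 : V := (b 1 : V) with hu1
    have hUspan : U = Submodule.span (ZMod 2) {u0, u1} := by
      apply le_antisymm
      · intro w hw
        have hrep := b.sum_repr ⟨w, hw⟩
        rw [Fin.sum_univ_two] at hrep
        have : w = b.repr ⟨w, hw⟩ 0 • u0 + b.repr ⟨w, hw⟩ 1 • u1 := by
          have := congrArg (Subtype.val) hrep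
          simpa [hu0, hu1] using this.symm
        rw [this]
        exact Submodule.add_mem _
          (Submodule.smul_mem _ _ (Submodule.subset_span (by simp)))
          (Submodule.smul_mem _ _ (Submodule.subset_span (by simp)))
      · rw [Submodule.span_le]
        rintro w (rfl | rfl)
        · exact (b 0).2
        · exact (b 1).2
    have hset : (U : Set V) = {0, u0, u1, u0 + u1} := by
      rw [hUspan, span_pair_set]
    refine ⟨x, u0 + x, u1 + x, ?_, ?_, ?_, ?_⟩
    · intro h
      have : u0 = 0 := by
        have := (right_eq_add).mp h
        exact this
      exact (b.ne_zero 0) (by exact_mod_cast Subtype.ext (by simpa [hu0] using this))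
    · intro h
      have : u1 = 0 := (right_eq_add).mp h
      exact (b.ne_zero 1) (by exact_mod_cast Subtype.ext (by simpa [hu1] using this))
    · intro h
      have h01 : u0 = u1 := add_right_cancel h
      have : b 0 = b 1 := Subtype.ext (by simpa [hu0, hu1] using h01)
      exact absurd (b.injective this) (by decide)
    · have hlast : x + (u0 + x) + (u1 + x) = u0 + u1 + x := by
        have hx := self_add_self x
        calc x + (u0 + x) + (u1 + x) = u0 + u1 + x + (x + x) := by abel
        _ = u0 + u1 + x := by rw [hx, add_zero]
      rw [hset, hlast]
      simp [Set.image_insert_eq, Set.image_singleton, zero_add]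
  · rintro ⟨x, y, z, hxy, hxz, hyz, rfl⟩
    refine ⟨Submodule.span (ZMod 2) {x + y, x + z}, x, ?_, ?_⟩
    · have hind : LinearIndependent (ZMod 2) ![x + y, x + z] := by
        rw [LinearIndependent.pair_iff]
        intro s t hst
        have hxy0 : x + y ≠ 0 := fun h => hxy (add_eq_zero_iff_eq'.mp h)
        have hxz0 : x + z ≠ 0 := fun h => hxz (add_eq_zero_iff_eq'.mp h)
        have hsum : (x + y) + (x + z) ≠ 0 := by
          intro h
          exact hyz (add_left_cancel (add_eq_zero_iff_eq'.mp h))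
        rcases zmod2_cases s with rfl | rfl <;> rcases zmod2_cases t with rfl | rfl <;>
          simp_all [zero_smul, one_smul]
      have hrange : Set.range ![x + y, x + z] = {x + y, x + z} := by
        simp [Matrix.range_cons, Matrix.range_empty, Set.pair_comm]
      have := finrank_span_eq_card hind
      rw [hrange] at this
      simpa using this
    · rw [span_pair_set]
      have h1 : (x + y) + x = y := by
        calc (x + y) + x = y + (x + x) := by abel
        _ = y := by rw [self_add_self, add_zero]
      have h2 : (x + z) + x = z := by
        calc (x + z) + x = z + (x + x) := by abel
        _ = z := by rw [self_add_self, add_zero]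
      have h3 : ((x + y) + (x + z)) + x = x + y + z := by
        calc ((x + y) + (x + z)) + x = (x + y + z) + (x + x) := by abel
        _ = x + y + z := by rw [self_add_self, add_zero]
      simp only [Set.image_insert_eq, Set.image_singleton, zero_add, h1, h2, h3]

/-- Sum invariance for 4-element sets. -/
lemma sum_four {x y z w a b c d : V}
    (hxy : x ≠ y) (hxz : x ≠ z) (hxw : x ≠ w) (hyz : y ≠ z) (hyw : y ≠ w) (hzw : z ≠ w)
    (hab : a ≠ b) (hac : a ≠ c) (had : a ≠ d) (hbc : b ≠ c) (hbd : b ≠ d) (hcd : c ≠ d)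
    (h : ({x, y, z, w} : Set V) = {a, b, c, d}) : x + y + z + w = a + b + c + d := by
  classical
  have hfin : ({x, y, z, w} : Finset V) = {a, b, c, d} := by
    apply Finset.coe_injective
    simpa using h
  have h1 : ∑ v ∈ ({x, y, z, w} : Finset V), v = x + y + z + w := by
    rw [Finset.sum_insert (by simp [hxy, hxz, hxw]),
      Finset.sum_insert (by simp [hyz, hyw]),
      Finset.sum_insert (by simp [hzw]), Finset.sum_singleton]
    abel
  have h2 : ∑ v ∈ ({a, b, c, d} : Finset V), v = a + b + c + d := by
    rw [Finset.sum_insert (by simp [hab, hac, had]),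
      Finset.sum_insert (by simp [hbc, hbd]),
      Finset.sum_insert (by simp [hcd]), Finset.sum_singleton]
    abel
  rw [← h1, hfin, h2]

end CharTwoModule

/-- The cube map is injective on a finite field of order `2^n` with `n` odd. -/
lemma cube_injective {K : Type*} [Field K] [Fintype K] {n : ℕ} (hodd : Odd n)
    (hcard : Fintype.card K = 2 ^ n) : Function.Injective fun x : K => x ^ 3 := by
  classical
  intro a b h
  simp only at h
  by_cases hb : b = 0
  · subst hb
    simpa [pow_eq_zero_iff] using h
  · have ht : (a / b) ^ 3 = 1 := by
      rw [div_pow, h, div_self (pow_ne_zero _ hb)]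
    have ht0 : a / b ≠ 0 := by
      intro h0
      rw [h0] at ht
      simpa using ht
    set u : Kˣ := Units.mk0 (a / b) ht0 with hu
    have hu3 : u ^ 3 = 1 := by
      ext
      simpa [hu] using ht
    have hd3 : orderOf u ∣ 3 := orderOf_dvd_of_pow_eq_one hu3
    have hdc : orderOf u ∣ 2 ^ n - 1 := by
      have := orderOf_dvd_card (x := u)
      rwa [Fintype.card_units, hcard] at this
    obtain ⟨m, rfl⟩ := hodd
    have h4m : 4 ^ m % 3 = 1 := by
      rw [Nat.pow_mod]
      norm_num
    have hpow : 2 ^ (2 * m + 1) = 2 * 4 ^ m := by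
      rw [pow_succ, pow_mul]
      ring
    have hnd : ¬ (3 ∣ 2 ^ (2 * m + 1) - 1) := by
      have h1 : 1 ≤ 4 ^ m := Nat.one_le_pow _ _ (by norm_num)
      rw [hpow]
      omega
    have hcop : Nat.Coprime 3 (2 ^ (2 * m + 1) - 1) :=
      (Nat.prime_three.coprime_iff_not_dvd).mpr hnd
    have : orderOf u ∣ 1 := by
      have := Nat.dvd_gcd hd3 hdc
      rwa [Nat.Coprime.gcd_eq_one hcop] at this
    have hu1 : u = 1 := orderOf_eq_one_iff.mp (Nat.dvd_one.mp this)
    have : a / b = 1 := by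
      have := congrArg Units.val hu1
      simpa [hu] using this
    exact (div_eq_one_iff_eq hb).mp this

/-- The cube identity in characteristic 2. -/
lemma cube_sum_ne {K : Type*} [Field K] [CharP K 2] {a b c : K}
    (hab : a ≠ b) (hac : a ≠ c) (hbc : b ≠ c) :
    a ^ 3 + b ^ 3 + c ^ 3 + (a + b + c) ^ 3 ≠ 0 := by
  have h2 : (2 : K) = 0 := by exact_mod_cast CharP.cast_eq_zero K 2
  have key : a ^ 3 + b ^ 3 + c ^ 3 + (a + b + c) ^ 3 = (a + b) * (b + c) * (c + a) := by
    linear_combination (a ^ 3 + b ^ 3 + c ^ 3 + a ^ 2 * b + a ^ 2 * c + a * b ^ 2 +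
      b ^ 2 * c + a * c ^ 2 + b * c ^ 2 + 2 * a * b * c) * h2
  rw [key]
  have hab0 : a + b ≠ 0 := fun h =>
    hab ((eq_neg_of_add_eq_zero_left h).trans (CharTwo.neg_eq b))
  have hbc0 : b + c ≠ 0 := fun h =>
    hbc ((eq_neg_of_add_eq_zero_left h).trans (CharTwo.neg_eq c))
  have hca0 : c + a ≠ 0 := fun h =>
    hac ((eq_neg_of_add_eq_zero_left h).trans (CharTwo.neg_eq a)).symm
  exact mul_ne_zero (mul_ne_zero hab0 hbc0) hca0

/-- For every odd integer `n ≥ 3` there exists a permutation `f` of `𝔽₂ⁿ`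
with `2`-affinity `0`. -/
theorem exists_perm_two_affinity_zero_of_odd (n : ℕ) (hn : 3 ≤ n) (hodd : Odd n) :
    ∃ f : Equiv.Perm (Fin n → ZMod 2),
      affinity (ZMod 2) 2 (⇑f : (Fin n → ZMod 2) → (Fin n → ZMod 2)) = 0 := by
  classical
  haveI : Fact (Nat.Prime 2) := ⟨Nat.prime_two⟩
  have hn0 : n ≠ 0 := by omega
  set K := GaloisField 2 n with hK
  have hfr : Module.finrank (ZMod 2) (Fin n → ZMod 2) = Module.finrank (ZMod 2) K := by
    rw [Module.finrank_pi, GaloisField.finrank 2 hn0, Fintype.card_fin]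
  let e : (Fin n → ZMod 2) ≃ₗ[ZMod 2] K := LinearEquiv.ofFinrankEq _ _ hfr
  haveI : Fintype K := Fintype.ofEquiv _ e.toEquiv
  have hcard : Fintype.card K = 2 ^ n := by
    rw [← Fintype.card_congr e.toEquiv]
    simp [Fintype.card_fun]
  have hinj := cube_injective hodd hcard
  have hbij : Function.Bijective fun x : K => x ^ 3 :=
    (Finite.injective_iff_bijective).mp hinj
  let cubeEquiv : K ≃ K := Equiv.ofBijective _ hbij
  refine ⟨e.toEquiv.trans (cubeEquiv.trans e.toEquiv.symm), ?_⟩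
  rw [affinity, show {X : Set (Fin n → ZMod 2) | IsFlat (ZMod 2) 2 X ∧
      IsFlat (ZMod 2) 2 ((e.toEquiv.trans (cubeEquiv.trans e.toEquiv.symm)) '' X)} = ∅ from ?_,
    Set.ncard_empty]
  rw [Set.eq_empty_iff_forall_notMem]
  rintro X ⟨hX, hfX⟩
  set f : (Fin n → ZMod 2) → (Fin n → ZMod 2) :=
    ⇑(e.toEquiv.trans (cubeEquiv.trans e.toEquiv.symm)) with hf
  have hfdef : ∀ v, f v = e.symm ((e v) ^ 3) := fun v => rfl
  have hfinj : Function.Injective f := (e.toEquiv.trans (cubeEquiv.trans e.toEquiv.symm)).injective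
  obtain ⟨x, y, z, hxy, hxz, hyz, rfl⟩ := (flat_iff_two X).mp hX
  set w := x + y + z with hw
  have hxw : x ≠ w := fun h => hyz (add_eq_zero_iff_eq'.mp (left_eq_add.mp
    (by rw [hw, add_assoc] at h; exact h)))
  have hyw : y ≠ w := fun h => hxz (add_eq_zero_iff_eq'.mp (left_eq_add.mp
    (by rw [hw, show x + y + z = y + (x + z) by abel] at h; exact h)))
  have hzw : z ≠ w := fun h => hxy (add_eq_zero_iff_eq'.mp (left_eq_add.mp
    (by rw [hw, show x + y + z = z + (x + y) by abel] at h; exact h)))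
  obtain ⟨a, b, c, hab, hac, hbc, himg⟩ := (flat_iff_two _).mp hfX
  set d := a + b + c with hd
  have had : a ≠ d := fun h => hbc (add_eq_zero_iff_eq'.mp (left_eq_add.mp
    (by rw [hd, add_assoc] at h; exact h)))
  have hbd : b ≠ d := fun h => hac (add_eq_zero_iff_eq'.mp (left_eq_add.mp
    (by rw [hd, show a + b + c = b + (a + c) by abel] at h; exact h)))
  have hcd : c ≠ d := fun h => hab (add_eq_zero_iff_eq'.mp (left_eq_add.mp
    (by rw [hd, show a + b + c = c + (a + b) by abel] at h; exact h)))
  have himage : f '' ({x, y, z, w} : Set _) = {f x, f y, f z, f w} := by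
    simp [Set.image_insert_eq]
  rw [himage] at himg
  have hsum : f x + f y + f z + f w = a + b + c + d :=
    sum_four (hfinj.ne hxy) (hfinj.ne hxz) (hfinj.ne hxw) (hfinj.ne hyz) (hfinj.ne hyw)
      (hfinj.ne hzw) hab hac had hbc hbd hcd himg
  have hsum0 : f x + f y + f z + f w = 0 := by
    rw [hsum, hd]
    have := self_add_self (a + b + c)
    abel_nf
    abel_nf at this
    exact this
  -- transfer to K
  have hcube : ∀ v, e (f v) = (e v) ^ 3 := by
    intro v
    rw [hfdef]
    simp [cubeEquiv]
  have hE : e (f x) + e (f y) + e (f z) + e (f w) = 0 := by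
    rw [← map_add, ← map_add, ← map_add, hsum0, map_zero]
  rw [hcube, hcube, hcube, hcube] at hE
  have hew : e w = e x + e y + e z := by rw [hw, map_add, map_add]
  rw [hew] at hE
  have hA : e x ≠ e y := fun h => hxy (e.injective h)
  have hB : e x ≠ e z := fun h => hxz (e.injective h)
  have hC : e y ≠ e z := fun h => hyz (e.injective h)
  exact cube_sum_ne hA hB hC hE
end

section
/- For every integer n ≥ 4 there exists a single permutation f of F_2^n such that k-affinity(f) = 0 simultaneously for all integers k with 3 ≤ k ≤ n−1. -/
/-- The `k`-coaffinity of a map `f : V → V`: the number of `k`-flats `X` of `V`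
such that `f(X)` is not a `k`-flat. -/
noncomputable def coaffinity (F : Type*) {V : Type*} [Field F] [AddCommGroup V] [Module F V]
    (k : ℕ) (f : V → V) : ℕ :=
  {X : Set V | IsFlat F k X ∧ ¬ IsFlat F k (f '' X)}.ncard

open Finset Nat

namespace AffAux


/-- `q^m ≤ C(q*m, m)`. -/
lemma pow_le_choose (q m : ℕ) : q ^ m ≤ (q * m).choose m := by
  induction m with
  | zero => simp
  | succ m ih =>
    rcases Nat.eq_zero_or_pos q with rfl | hq
    · simp
    have h1 : q * (m + 1) = (q * (m + 1) - 1) + 1 := by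
      have : 1 ≤ q * (m + 1) := Nat.one_le_iff_ne_zero.mpr (by positivity)
      omega
    have hid : (q * (m+1)) * ((q * (m+1) - 1).choose m)
        = (q * (m+1)).choose (m+1) * (m+1) := by
      have h := Nat.add_one_mul_choose_eq (q * (m+1) - 1) m
      have hN : q * (m+1) - 1 + 1 = q * (m+1) := by omega
      rw [hN] at h
      simpa [Nat.succ_eq_add_one] using h
    have hmono : q ^ m ≤ (q * (m+1) - 1).choose m := by
      refine le_trans ih (Nat.choose_le_choose m ?_)
      have : q * m + q = q * (m+1) := by ring
      omega
    have : q ^ (m+1) * (m+1) ≤ (q * (m+1)).choose (m+1) * (m+1) := by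
      rw [← hid]
      calc q ^ (m+1) * (m+1) = q ^ m * (q * (m+1)) := by ring
        _ ≤ (q * (m+1) - 1).choose m * (q * (m+1)) := by
            exact Nat.mul_le_mul_right _ hmono
        _ = (q * (m+1)) * ((q * (m+1) - 1).choose m) := by ring
    exact Nat.le_of_mul_le_mul_right this (Nat.succ_pos m)

lemma two_pow_choose (n k : ℕ) (hk : k ≤ n) : 2 ^ ((n - k) * 2 ^ k) ≤ (2 ^ n).choose (2 ^ k) := by
  have h : 2 ^ (n - k) * 2 ^ k = 2 ^ n := by
    rw [← pow_add]; congr 1; omega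
  have := pow_le_choose (2 ^ (n - k)) (2 ^ k)
  rwa [h, ← pow_mul] at this

/-- the k = 3 case: `2^(8(n-3)+5) ≤ C(2^n, 8)` for `n ≥ 4`. -/
lemma choose_eight (n : ℕ) (hn : 4 ≤ n) : 2 ^ (8 * (n - 3) + 5) ≤ (2 ^ n).choose 8 := by
  rcases Nat.lt_or_ge n 5 with h5 | h5
  · interval_cases n
    norm_num [Nat.choose]
  obtain ⟨m, rfl⟩ : ∃ m, n = m + 5 := ⟨n - 5, by omega⟩
  have hNbig : 25 * 2 ^ m ≤ 2 ^ (m + 5) - 7 := by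
    have h1 : (1:ℕ) ≤ 2 ^ m := Nat.one_le_two_pow
    have : 2 ^ (m + 5) = 32 * 2 ^ m := by rw [pow_add]; ring
    omega
  have hdesc : (25 * 2 ^ m) ^ 8 ≤ (2 ^ (m + 5)).descFactorial 8 := by
    rw [Nat.descFactorial_eq_prod_range]
    calc (25 * 2 ^ m) ^ 8 = ∏ _i ∈ range 8, (25 * 2 ^ m) := by
          rw [Finset.prod_const, Finset.card_range]
      _ ≤ ∏ i ∈ range 8, (2 ^ (m + 5) - i) := by
          apply Finset.prod_le_prod (fun _ _ => Nat.zero_le _)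
          intro i hi
          have : i ≤ 7 := by simpa using Nat.lt_succ_iff.mp (Finset.mem_range.mp hi)
          omega
  have hfact : (2 ^ (m + 5)).descFactorial 8 = 40320 * (2 ^ (m + 5)).choose 8 := by
    have := Nat.descFactorial_eq_factorial_mul_choose (2 ^ (m + 5)) 8
    norm_num [Nat.factorial] at this ⊢
    exact this
  have key : 2 ^ (8 * m + 21) * 40320 ≤ (25 * 2 ^ m) ^ 8 := by
    have : (25 * 2 ^ m) ^ 8 = 25 ^ 8 * 2 ^ (8 * m) := by
      rw [mul_pow, ← pow_mul]; ring
    rw [this, pow_add]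
    have : (2:ℕ) ^ 21 * 40320 ≤ 25 ^ 8 := by norm_num
    calc 2 ^ (8 * m) * 2 ^ 21 * 40320 = 2 ^ (8*m) * (2 ^ 21 * 40320) := by ring
      _ ≤ 2 ^ (8*m) * 25 ^ 8 := Nat.mul_le_mul_left _ this
      _ = 25 ^ 8 * 2 ^ (8*m) := by ring
  have : 2 ^ (8 * m + 21) * 40320 ≤ 40320 * (2 ^ (m + 5)).choose 8 := by
    rw [← hfact]
    exact le_trans key hdesc
  have h8 : 8 * (m + 5 - 3) + 5 = 8 * m + 21 := by omega
  rw [h8]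
  omega

/-- `4n + 2 ≤ 2^n` for `n ≥ 5`. -/
lemma linear_le_pow (n : ℕ) (hn : 5 ≤ n) : 4 * n + 2 ≤ 2 ^ n := by
  induction n, hn using Nat.le_induction with
  | base => norm_num
  | succ m hm ih =>
    have h : 2 ^ (m+1) = 2 * 2 ^ m := by ring
    omega

/-- the k = n-1 case: `2^(3n+3) ≤ C(2^n, 2^(n-1))` for `n ≥ 5`. -/
lemma choose_half (n : ℕ) (hn : 5 ≤ n) : 2 ^ (3 * n + 3) ≤ (2 ^ n).choose (2 ^ (n - 1)) := by
  have hM : 4 ≤ 2 ^ (n - 1) := by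
    calc (4:ℕ) = 2 ^ 2 := by norm_num
      _ ≤ 2 ^ (n-1) := Nat.pow_le_pow_right (by norm_num) (by omega)
  have hcb := Nat.four_pow_lt_mul_centralBinom (2 ^ (n-1)) hM
  have h2 : 2 * 2 ^ (n - 1) = 2 ^ n := by
    rw [← pow_succ']; congr 1; omega
  have hcbeq : Nat.centralBinom (2 ^ (n-1)) = (2 ^ n).choose (2 ^ (n-1)) := by
    rw [Nat.centralBinom, h2]
  have h4 : (4:ℕ) ^ 2 ^ (n-1) = 2 ^ 2 ^ n := by
    have h44 : (4:ℕ) = 2 ^ 2 := by norm_num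
    rw [h44, ← pow_mul, h2]
  -- 2^(n-1) * 2^(3n+3) ≤ 4^(2^(n-1)) since n-1 + 3n+3 ≤ 2^n
  have hexp : (n - 1) + (3 * n + 3) ≤ 2 ^ n := by
    have := linear_le_pow n hn
    omega
  have hle : 2 ^ (n-1) * 2 ^ (3*n+3) ≤ 2 ^ (n-1) * Nat.centralBinom (2 ^ (n-1)) := by
    calc 2 ^ (n-1) * 2 ^ (3*n+3) = 2 ^ ((n-1) + (3*n+3)) := (pow_add 2 (n-1) (3*n+3)).symm
      _ ≤ 2 ^ 2 ^ n := Nat.pow_le_pow_right (by norm_num) hexp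
      _ = 4 ^ 2 ^ (n-1) := h4.symm
      _ ≤ 2 ^ (n-1) * Nat.centralBinom (2 ^ (n-1)) := hcb.le
  have := Nat.le_of_mul_le_mul_left hle (by positivity)
  rwa [hcbeq] at this

/-- `5k + 8 ≤ 2^(k+1)` for `k ≥ 4`. -/
lemma five_le_pow (k : ℕ) (hk : 4 ≤ k) : 5 * k + 8 ≤ 2 ^ (k + 1) := by
  induction k, hk using Nat.le_induction with
  | base => norm_num
  | succ m hm ih =>
    have h : 2 ^ (m+1+1) = 2 * 2 ^ (m+1) := by ring
    omega

/-- the middle case `k ≥ 4`, `n - k ≥ 2`: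
`2(n-k)(k+1) + k + 4 ≤ (n-k) * 2^k`. -/
lemma middle_exp (k m : ℕ) (hk : 4 ≤ k) (hm : 2 ≤ m) :
    2 * m * (k + 1) + k + 4 ≤ m * 2 ^ k := by
  obtain ⟨j, rfl⟩ : ∃ j, m = j + 2 := ⟨m - 2, by omega⟩
  have h1 : 2 * k + 2 ≤ 2 ^ k := by
    have := five_le_pow k hk
    have : 2 ^ (k+1) = 2 * 2 ^ k := by ring
    omega
  have h2 : 5 * k + 8 ≤ 2 * 2 ^ k := by
    have := five_le_pow k hk
    have h : 2 ^ (k+1) = 2 * 2 ^ k := by ring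
    omega
  have h3 : j * (2 * k + 2) ≤ j * 2 ^ k := Nat.mul_le_mul_left j h1
  nlinarith

/-- `2^(k(k+1)/2) ≤ 4 * ∏_{j<k} (2^(j+1) - 1)`, strengthened: -/
lemma prod_aux (k : ℕ) :
    (2 ^ k + 2) * 2 ^ (k * (k + 1) / 2) ≤ 2 ^ (k + 2) * ∏ j ∈ range k, (2 ^ (j + 1) - 1) := by
  induction k with
  | zero => norm_num
  | succ m ih =>
    rcases Nat.eq_zero_or_pos m with rfl | hm0
    · norm_num
    rw [Finset.prod_range_succ]
    have hdiv : (m+1) * (m+1+1) / 2 = m * (m+1) / 2 + (m+1) := by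
      have h1 : 2 * (m * (m+1) / 2) = m * (m+1) := by
        apply Nat.two_mul_div_two_of_even
        exact Nat.even_mul_succ_self m
      have h2 : 2 * ((m+1) * (m+1+1) / 2) = (m+1) * (m+1+1) := by
        apply Nat.two_mul_div_two_of_even
        exact Nat.even_mul_succ_self (m+1)
      have h3 : (m+1) * (m+1+1) = m * (m+1) + 2 * (m+1) := by ring
      omega
    rw [hdiv, pow_add 2 (m * (m+1) / 2) (m+1)]
    have key' : (2 ^ (m+1) + 2) * 2 ^ (m+1) ≤ (2 ^ m + 2) * 2 * (2 ^ (m + 1) - 1) := by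
      have ha : 2 ≤ 2 ^ m := by
        calc (2:ℕ) = 2 ^ 1 := rfl
          _ ≤ 2 ^ m := Nat.pow_le_pow_right (by norm_num) hm0
      obtain ⟨d, hd⟩ : ∃ d, 2 ^ (m+1) - 1 = d := ⟨_, rfl⟩
      have hd' : d + 1 = 2 * 2 ^ m := by
        have : 2 ^ (m+1) = 2 * 2 ^ m := by ring
        omega
      rw [hd]
      have h2m : 2 ^ (m+1) = 2 * 2 ^ m := by ring
      rw [h2m]
      nlinarith [ha, hd', sq_nonneg (2 ^ m)]
    calc (2 ^ (m+1) + 2) * (2 ^ (m * (m+1) / 2) * 2 ^ (m+1))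
        = ((2 ^ (m+1) + 2) * 2 ^ (m+1)) * 2 ^ (m * (m+1) / 2) := by ring
      _ ≤ ((2 ^ m + 2) * 2 * (2 ^ (m+1) - 1)) * 2 ^ (m * (m+1) / 2) := by
          exact Nat.mul_le_mul_right _ key'
      _ = ((2 ^ m + 2) * 2 ^ (m * (m+1) / 2)) * (2 * (2 ^ (m+1) - 1)) := by ring
      _ ≤ (2 ^ (m + 2) * ∏ j ∈ range m, (2 ^ (j + 1) - 1)) * (2 * (2 ^ (m+1) - 1)) := by
          exact Nat.mul_le_mul_right _ ih
      _ = 2 ^ (m + 1 + 2) * ((∏ j ∈ range m, (2 ^ (j + 1) - 1)) * (2 ^ (m+1) - 1)) := by ring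

/-- `2^(k²) ≤ 4 * ∏_{i<k} (2^k - 2^i)` : the GL(k, F₂) cardinality bound. -/
lemma gl_lower (k : ℕ) : 2 ^ (k * k) ≤ 4 * ∏ i ∈ range k, (2 ^ k - 2 ^ i) := by
  have hsplit : ∀ i ∈ range k, 2 ^ k - 2 ^ i = 2 ^ i * (2 ^ (k - i) - 1) := by
    intro i hi
    have hik : i ≤ k := (Finset.mem_range.mp hi).le
    have hab : 2 ^ i * 2 ^ (k - i) = 2 ^ k := by rw [← pow_add]; congr 1; omega
    have h1 : (1:ℕ) ≤ 2 ^ (k-i) := Nat.one_le_two_pow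
    obtain ⟨c, hc⟩ : ∃ c, 2 ^ (k - i) = c + 1 := ⟨2 ^ (k-i) - 1, by omega⟩
    rw [hc] at hab ⊢
    have h2 : 2 ^ i * (c + 1) = 2 ^ i * c + 2 ^ i := by ring
    simp only [Nat.add_sub_cancel]
    omega
  rw [Finset.prod_congr rfl hsplit, Finset.prod_mul_distrib,
    Finset.prod_pow_eq_pow_sum]
  have hrefl : (∏ i ∈ range k, (2 ^ (k - i) - 1)) = ∏ j ∈ range k, (2 ^ (j + 1) - 1) := by
    rw [← Finset.prod_range_reflect]
    apply Finset.prod_congr rfl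
    intro j hj
    have : j < k := Finset.mem_range.mp hj
    congr 2
    omega
  rw [hrefl]
  have hP : 2 ^ (k * (k + 1) / 2) ≤ 4 * ∏ j ∈ range k, (2 ^ (j + 1) - 1) := by
    have h := prod_aux k
    have h1 : 2 ^ k * 2 ^ (k * (k+1) / 2) ≤ (2 ^ k + 2) * 2 ^ (k * (k+1) / 2) :=
      Nat.mul_le_mul_right _ (by omega)
    have h2 : 2 ^ (k + 2) * ∏ j ∈ range k, (2 ^ (j + 1) - 1)
        = 2 ^ k * (4 * ∏ j ∈ range k, (2 ^ (j + 1) - 1)) := by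
      rw [pow_add]; ring
    have := le_trans h1 h
    rw [h2] at this
    exact Nat.le_of_mul_le_mul_left this (by positivity)
  have hgauss : ∑ i ∈ range k, i = k * (k - 1) / 2 := Finset.sum_range_id k
  have hexp : k * (k - 1) / 2 + k * (k + 1) / 2 = k * k := by
    rcases Nat.eq_zero_or_pos k with rfl | hk
    · simp
    obtain ⟨j, rfl⟩ : ∃ j, k = j + 1 := ⟨k - 1, by omega⟩
    have e1 : (j+1) * (j+1-1) = (j+1) * j := by norm_num
    have e2 : (j+1) * (j+1+1) = (j+1) * (j+2) := by ring
    rw [e1, e2]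
    have h1 : 2 * ((j+1) * j / 2) = (j+1) * j := by
      apply Nat.two_mul_div_two_of_even
      have := Nat.even_mul_succ_self j
      rwa [mul_comm] at this
    have h2 : 2 * ((j+1) * (j+2) / 2) = (j+1) * (j+2) := by
      apply Nat.two_mul_div_two_of_even
      have := Nat.even_mul_succ_self (j+1)
      convert this using 2
    have h3 : (j+1) * j + (j+1) * (j+2) = 2 * ((j+1) * (j+1)) := by ring
    omega
  calc 2 ^ (k * k) = 2 ^ (k * (k-1) / 2) * 2 ^ (k * (k+1) / 2) := by
        rw [← pow_add, hexp]
    _ ≤ 2 ^ (k * (k-1) / 2) * (4 * ∏ j ∈ range k, (2 ^ (j + 1) - 1)) :=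
        Nat.mul_le_mul_left _ hP
    _ = 4 * (2 ^ (k * (k-1) / 2) * ∏ j ∈ range k, (2 ^ (j + 1) - 1)) := by ring
    _ = 4 * (2 ^ (∑ i ∈ range k, i) * ∏ j ∈ range k, (2 ^ (j + 1) - 1)) := by rw [hgauss]

section Geometry

variable {n : ℕ}

local notation "Vn" => (Fin n → ZMod 2)

lemma card_V : Fintype.card Vn = 2 ^ n := by
  simp [ZMod.card]

/-- Every `k`-flat has `2^k` elements. -/
lemma flat_ncard {k : ℕ} {X : Set Vn} (h : IsFlat (ZMod 2) k X) : Nat.card X = 2 ^ k := by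
  classical
  obtain ⟨U, x, hU, rfl⟩ := h
  rw [Nat.card_coe_set_eq, Set.ncard_image_of_injective _ (add_left_injective x),
    ← Nat.card_coe_set_eq]
  have : Nat.card U = Fintype.card U := Nat.card_eq_fintype_card
  rw [SetLike.coe_sort_coe, this, Module.card_eq_pow_finrank (K := ZMod 2) (V := U), ZMod.card, hU]

open Classical in
/-- The number of permutations mapping `X` onto `Y` is at most `|X|! * |Xᶜ|!`. -/
lemma card_perm_image_le {α : Type*} [Fintype α] [DecidableEq α] (X Y : Set α) :
    (Finset.univ.filter fun f : Equiv.Perm α => f '' X = Y).card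
      ≤ (Nat.card X)! * (Nat.card ↥(Xᶜ))! := by
  classical
  rcases Finset.eq_empty_or_nonempty
      (Finset.univ.filter fun f : Equiv.Perm α => f '' X = Y) with he | hne
  · simp [he]
  obtain ⟨f₀, hf₀⟩ := hne
  have hf₀' : (f₀ : α → α) '' X = Y := (Finset.mem_filter.mp hf₀).2
  have hcompl : ∀ f : Equiv.Perm α, (f : α → α) '' X = Y → (f : α → α) '' Xᶜ = Yᶜ := by
    intro f h
    rw [Set.image_compl_eq f.bijective, h]
  have hcard : (Finset.univ.filter fun f : Equiv.Perm α => f '' X = Y).card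
      = Fintype.card {f : Equiv.Perm α // (f : α → α) '' X = Y} := by
    rw [Fintype.card_subtype]
  rw [hcard]
  set Φ : {f : Equiv.Perm α // (f : α → α) '' X = Y} → (↥X ≃ ↥Y) × (↥(Xᶜ) ≃ ↥(Yᶜ)) :=
    fun fp => ((Equiv.Set.image fp.1 X fp.1.injective).trans (Equiv.setCongr fp.2),
      (Equiv.Set.image fp.1 Xᶜ fp.1.injective).trans (Equiv.setCongr (hcompl fp.1 fp.2)))
    with hΦ
  have hinj : Function.Injective Φ := by
    rintro ⟨f, hf⟩ ⟨g, hg⟩ hfg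
    simp only [hΦ, Prod.mk.injEq] at hfg
    obtain ⟨h1, h2⟩ := hfg
    apply Subtype.ext
    apply Equiv.ext
    intro a
    by_cases ha : a ∈ X
    · have := congrArg (fun e => ((e ⟨a, ha⟩ : ↥Y) : α)) h1
      simpa using this
    · have := congrArg (fun e => ((e ⟨a, ha⟩ : ↥(Yᶜ)) : α)) h2
      simpa using this
  calc Fintype.card {f : Equiv.Perm α // (f : α → α) '' X = Y}
      ≤ Fintype.card ((↥X ≃ ↥Y) × (↥(Xᶜ) ≃ ↥(Yᶜ))) := Fintype.card_le_of_injective Φ hinj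
    _ = (Nat.card X)! * (Nat.card ↥(Xᶜ))! := by
        rw [Fintype.card_prod, Fintype.card_equiv (Φ ⟨f₀, hf₀'⟩).1,
          Fintype.card_equiv (Φ ⟨f₀, hf₀'⟩).2, Nat.card_eq_fintype_card,
          Nat.card_eq_fintype_card]

open Classical in
/-- The finset of all `k`-flats. -/
noncomputable def flats (n k : ℕ) : Finset (Set (Fin n → ZMod 2)) :=
  Finset.univ.filter (fun X => IsFlat (ZMod 2) k X)

open Classical in
lemma flats_card_mul (k : ℕ) (hk0 : 0 < k) :
    (flats n k).card * 2 ^ (k * k + k) ≤ 2 ^ (n * (k + 1) + 2) := by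
  classical
  haveI : Nonempty (Fin k) := Fin.pos_iff_nonempty.mp hk0
  set Ψ : Vn × (Fin k → Vn) → Set Vn :=
    fun p => (fun u => u + p.1) '' ((Submodule.span (ZMod 2) (Set.range p.2) : Submodule (ZMod 2) Vn) : Set Vn)
    with hΨ
  -- fiber lower bound
  have hfib : ∀ X ∈ flats n k,
      2 ^ (k * k + k) ≤ 4 * ((Finset.univ : Finset (Vn × (Fin k → Vn))).filter
        (fun p => Ψ p = X)).card := by
    intro X hX
    have hX' : IsFlat (ZMod 2) k X := by
      simpa [flats] using hX
    obtain ⟨U, x₀, hU, hXeq⟩ := hX'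
    -- injection from X × bases of U
    have hfibcard : Nat.card (↥X × {s : Fin k → ↥U // LinearIndependent (ZMod 2) s})
        ≤ ((Finset.univ : Finset (Vn × (Fin k → Vn))).filter (fun p => Ψ p = X)).card := by
      have hcard2 : ((Finset.univ : Finset (Vn × (Fin k → Vn))).filter (fun p => Ψ p = X)).card
          = Nat.card {p : Vn × (Fin k → Vn) // Ψ p = X} := by
        rw [Nat.card_eq_fintype_card, Fintype.card_subtype]
      rw [hcard2]
      have hcoset : ∀ x ∈ X, (fun u => u + x) '' (U : Set Vn) = X := by
        intro x hx
        rw [hXeq] at hx ⊢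
        obtain ⟨u₀, hu₀, rfl⟩ := hx
        ext v
        constructor
        · rintro ⟨u, hu, rfl⟩
          exact ⟨u + u₀, U.add_mem hu hu₀, by abel⟩
        · rintro ⟨u, hu, rfl⟩
          exact ⟨u - u₀, U.sub_mem hu hu₀, by
            show u - u₀ + (u₀ + x₀) = u + x₀
            rw [sub_eq_add_neg, add_assoc, neg_add_cancel_left]⟩
      have hspan : ∀ s : {s : Fin k → ↥U // LinearIndependent (ZMod 2) s},
          (Submodule.span (ZMod 2) (Set.range (fun i => ((s.1 i : Vn)))) : Submodule (ZMod 2) Vn)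
            = U := by
        intro s
        have hr : Set.range (fun i => ((s.1 i : Vn))) = U.subtype '' (Set.range s.1) := by
          rw [← Set.range_comp]; rfl
        rw [hr, ← Submodule.map_span]
        have hcardk : Fintype.card (Fin k) = Module.finrank (ZMod 2) ↥U := by
          simp [hU]
        have hspan' : Submodule.span (ZMod 2) (Set.range s.1) = ⊤ := by
          have hb := coe_basisOfLinearIndependentOfCardEqFinrank s.2 hcardk
          rw [← hb]
          exact (basisOfLinearIndependentOfCardEqFinrank s.2 hcardk).span_eq
        rw [hspan', Submodule.map_top, Submodule.range_subtype]
      set Θ : ↥X × {s : Fin k → ↥U // LinearIndependent (ZMod 2) s}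
          → {p : Vn × (Fin k → Vn) // Ψ p = X} :=
        fun q => ⟨((q.1 : Vn), fun i => ((q.2.1 i : Vn))), by
          show Ψ ((q.1 : Vn), fun i => ((q.2.1 i : Vn))) = X
          rw [hΨ]
          simp only
          rw [hspan q.2]
          exact hcoset _ q.1.2⟩
        with hΘ
      have hΘinj : Function.Injective Θ := by
        rintro ⟨⟨x, hx⟩, ⟨s, hs⟩⟩ ⟨⟨y, hy⟩, ⟨t, ht⟩⟩ h
        simp only [hΘ, Subtype.mk.injEq, Prod.mk.injEq] at h
        obtain ⟨h1, h2⟩ := h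
        refine Prod.ext (Subtype.ext h1) (Subtype.ext ?_)
        funext i
        exact Subtype.ext (congrFun h2 i)
      exact Nat.card_le_card_of_injective Θ hΘinj
    -- compute the cardinality of the domain
    have hdom : Nat.card (↥X × {s : Fin k → ↥U // LinearIndependent (ZMod 2) s})
        = 2 ^ k * ∏ i ∈ range k, (2 ^ k - 2 ^ i) := by
      rw [Nat.card_prod]
      congr 1
      · exact flat_ncard ⟨U, x₀, hU, hXeq⟩
      · have hfinrank : Module.finrank (ZMod 2) ↥U = k := hU
        have := card_linearIndependent (K := ZMod 2) (V := ↥U) (k := k)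
          (by rw [hfinrank])
        rw [this, ZMod.card, hfinrank]
        rw [← Fin.prod_univ_eq_prod_range]
    have hgl : 2 ^ (k * k + k) ≤ 4 * (2 ^ k * ∏ i ∈ range k, (2 ^ k - 2 ^ i)) := by
      calc 2 ^ (k * k + k) = 2 ^ k * 2 ^ (k * k) := by rw [pow_add]; ring
        _ ≤ 2 ^ k * (4 * ∏ i ∈ range k, (2 ^ k - 2 ^ i)) :=
            Nat.mul_le_mul_left _ (gl_lower k)
        _ = 4 * (2 ^ k * ∏ i ∈ range k, (2 ^ k - 2 ^ i)) := by ring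
    calc 2 ^ (k * k + k) ≤ 4 * (2 ^ k * ∏ i ∈ range k, (2 ^ k - 2 ^ i)) := hgl
      _ = 4 * Nat.card (↥X × {s : Fin k → ↥U // LinearIndependent (ZMod 2) s}) := by
          rw [hdom]
      _ ≤ 4 * ((Finset.univ : Finset (Vn × (Fin k → Vn))).filter (fun p => Ψ p = X)).card :=
          Nat.mul_le_mul_left _ hfibcard
  -- sum over flats
  have hsum : ∑ X ∈ flats n k,
      ((Finset.univ : Finset (Vn × (Fin k → Vn))).filter (fun p => Ψ p = X)).card
        ≤ 2 ^ (n * (k + 1)) := by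
    have htot : (Finset.univ : Finset (Vn × (Fin k → Vn))).card
        = ∑ X ∈ (Finset.univ : Finset (Set Vn)),
          ((Finset.univ : Finset (Vn × (Fin k → Vn))).filter (fun p => Ψ p = X)).card := by
      exact Finset.card_eq_sum_card_fiberwise (fun p _ => Finset.mem_univ (Ψ p))
    have hcardtot : (Finset.univ : Finset (Vn × (Fin k → Vn))).card = 2 ^ (n * (k + 1)) := by
      rw [Finset.card_univ, Fintype.card_prod]
      simp only [Fintype.card_fun, Fintype.card_fin, ZMod.card]
      rw [← pow_mul, ← pow_add]
      congr 1
      ring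
    calc ∑ X ∈ flats n k,
        ((Finset.univ : Finset (Vn × (Fin k → Vn))).filter (fun p => Ψ p = X)).card
        ≤ ∑ X ∈ (Finset.univ : Finset (Set Vn)),
          ((Finset.univ : Finset (Vn × (Fin k → Vn))).filter (fun p => Ψ p = X)).card :=
          Finset.sum_le_sum_of_subset (Finset.subset_univ _)
      _ = 2 ^ (n * (k + 1)) := by rw [← htot, hcardtot]
  -- combine
  have hmain : (flats n k).card * 2 ^ (k * k + k)
      ≤ 4 * ∑ X ∈ flats n k,
        ((Finset.univ : Finset (Vn × (Fin k → Vn))).filter (fun p => Ψ p = X)).card := by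
    rw [Finset.mul_sum]
    calc (flats n k).card * 2 ^ (k * k + k)
        = ∑ _X ∈ flats n k, 2 ^ (k * k + k) := by rw [Finset.sum_const, smul_eq_mul]
      _ ≤ ∑ X ∈ flats n k, 4 * ((Finset.univ : Finset (Vn × (Fin k → Vn))).filter
            (fun p => Ψ p = X)).card := Finset.sum_le_sum hfib
  calc (flats n k).card * 2 ^ (k * k + k)
      ≤ 4 * ∑ X ∈ flats n k,
        ((Finset.univ : Finset (Vn × (Fin k → Vn))).filter (fun p => Ψ p = X)).card := hmain
    _ ≤ 4 * 2 ^ (n * (k + 1)) := Nat.mul_le_mul_left _ hsum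
    _ = 2 ^ (n * (k + 1) + 2) := by rw [pow_add]; ring

lemma flats_card_le (k : ℕ) (hk0 : 0 < k) (hk : k ≤ n) :
    (flats n k).card ≤ 2 ^ ((n - k) * (k + 1) + 2) := by
  have h := flats_card_mul (n := n) k hk0
  have hexp : (n - k) * (k + 1) + 2 + (k * k + k) = n * (k + 1) + 2 := by
    have : (n - k) * (k + 1) + k * (k + 1) = n * (k + 1) := by
      rw [← Nat.add_mul, Nat.sub_add_cancel hk]
    nlinarith [this]
  have h2 : 2 ^ (n * (k + 1) + 2) = 2 ^ ((n - k) * (k + 1) + 2) * 2 ^ (k * k + k) := by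
    rw [← pow_add, hexp]
  rw [h2] at h
  exact Nat.le_of_mul_le_mul_right h (by positivity)

end Geometry

/-- The per-`k` numeric bound. -/
lemma per_k_bound (n k : ℕ) (hn : 4 ≤ n) (h3 : 3 ≤ k) (hk : k ≤ n - 1) :
    (2 ^ ((n - k) * (k + 1) + 2)) ^ 2 * 2 ^ (if k = 3 then 1 else k)
      ≤ (2 ^ n).choose (2 ^ k) := by
  have hkn : k + 1 ≤ n := by omega
  rcases eq_or_lt_of_le h3 with rfl | h4
  · rw [if_pos rfl]
    have he : ((n - 3) * (3 + 1) + 2) * 2 + 1 = 8 * (n - 3) + 5 := by omega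
    have h8 : (2:ℕ) ^ 3 = 8 := by norm_num
    rw [h8]
    refine le_trans (le_of_eq ?_) (choose_eight n hn)
    rw [← pow_mul, ← pow_add, he]
  · have h4' : 4 ≤ k := h4
    rw [if_neg (by omega)]
    rcases Nat.lt_or_ge k (n - 1) with hmid | htop
    · -- middle case : n - k ≥ 2
      have hm : 2 ≤ n - k := by omega
      have hexp : ((n - k) * (k + 1) + 2) * 2 + k ≤ (n - k) * 2 ^ k := by
        have := middle_exp k (n - k) h4' hm
        nlinarith [this]
      refine le_trans ?_ (two_pow_choose n k (by omega))
      calc (2 ^ ((n - k) * (k + 1) + 2)) ^ 2 * 2 ^ k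
          = 2 ^ (((n - k) * (k + 1) + 2) * 2 + k) := by rw [← pow_mul, ← pow_add]
        _ ≤ 2 ^ ((n - k) * 2 ^ k) := Nat.pow_le_pow_right (by norm_num) hexp
    · -- top case : k = n - 1
      have hkeq : k = n - 1 := le_antisymm hk htop
      subst hkeq
      have hn5 : 5 ≤ n := by omega
      have h1 : n - (n - 1) = 1 := by omega
      rw [h1]
      have he : (1 * (n - 1 + 1) + 2) * 2 + (n - 1) = 3 * n + 3 := by omega
      refine le_trans (le_of_eq ?_) (choose_half n hn5)
      rw [← pow_mul, ← pow_add, he]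

/-- Downward-induction tail bound on geometric-style sums. -/
lemma tail_sum (F : ℕ) (t : ℕ → ℕ) (m : ℕ) (ht : ∀ k, 4 ≤ k → k ≤ m → 2 ^ k * t k ≤ F) :
    ∀ d j, 4 ≤ j → m + 1 ≤ j + d → 2 ^ j * ∑ k ∈ Finset.Icc j m, t k ≤ 2 * F := by
  intro d
  induction d with
  | zero =>
    intro j hj hjm
    rw [Finset.Icc_eq_empty (by omega)]
    simp
  | succ d ih =>
    intro j hj hjm
    rcases Nat.lt_or_ge m j with h | h
    · rw [Finset.Icc_eq_empty (by omega)]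
      simp
    · have hins : Finset.Icc j m = insert j (Finset.Icc (j + 1) m) := by
        ext a
        simp only [Finset.mem_Icc, Finset.mem_insert]
        omega
      have hnotmem : j ∉ Finset.Icc (j + 1) m := by
        simp only [Finset.mem_Icc]
        omega
      rw [hins, Finset.sum_insert hnotmem, Nat.mul_add]
      have h1 : 2 ^ j * t j ≤ F := ht j hj h
      have h2 : 2 ^ (j + 1) * ∑ k ∈ Finset.Icc (j + 1) m, t k ≤ 2 * F :=
        ih (j + 1) (by omega) (by omega)
      have h2' : 2 ^ (j + 1) * ∑ k ∈ Finset.Icc (j + 1) m, t k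
          = 2 * (2 ^ j * ∑ k ∈ Finset.Icc (j + 1) m, t k) := by ring
      omega

section Main

variable {n : ℕ}

local notation "Vn" => (Fin n → ZMod 2)

open Classical in
/-- Main existence lemma. -/
lemma exists_good_perm (hn : 4 ≤ n) :
    ∃ f : Equiv.Perm Vn, ∀ k ∈ Finset.Icc 3 (n - 1),
      (Finset.univ.filter (fun X : Set Vn =>
        IsFlat (ZMod 2) k X ∧ IsFlat (ZMod 2) k (⇑f '' X))) = ∅ := by
  classical
  by_contra hcon
  push_neg at hcon
  set Bdk : ℕ → Equiv.Perm Vn → Finset (Set Vn) := fun k f =>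
    Finset.univ.filter (fun X : Set Vn =>
      IsFlat (ZMod 2) k X ∧ IsFlat (ZMod 2) k (⇑f '' X)) with hBdk
  set F := (2 ^ n)! with hF
  have hcardPerm : Fintype.card (Equiv.Perm Vn) = F := by
    rw [Fintype.card_perm, card_V]
  -- lower bound
  have hlow : F ≤ ∑ f : Equiv.Perm Vn, ∑ k ∈ Finset.Icc 3 (n - 1), (Bdk k f).card := by
    rw [← hcardPerm]
    calc Fintype.card (Equiv.Perm Vn) = ∑ _f : Equiv.Perm Vn, 1 := by simp
      _ ≤ ∑ f : Equiv.Perm Vn, ∑ k ∈ Finset.Icc 3 (n - 1), (Bdk k f).card := by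
        apply Finset.sum_le_sum
        intro f _
        obtain ⟨k, hkmem, hkne⟩ := hcon f
        have h1 : 1 ≤ (Bdk k f).card := by
          rw [Nat.one_le_iff_ne_zero]
          exact Finset.card_ne_zero.mpr hkne
        calc 1 ≤ (Bdk k f).card := h1
          _ ≤ ∑ k ∈ Finset.Icc 3 (n - 1), (Bdk k f).card :=
            Finset.single_le_sum (f := fun j => (Bdk j f).card)
              (fun _ _ => Nat.zero_le _) hkmem
  -- upper bound per k
  have hTk : ∀ k, 3 ≤ k → k ≤ n - 1 →
      2 ^ (if k = 3 then 1 else k) * (∑ f : Equiv.Perm Vn, (Bdk k f).card) ≤ F := by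
    intro k h3 hk1
    have hkn : k ≤ n := by omega
    have hk0 : 0 < k := by omega
    have hQ : (2 : ℕ) ^ k ≤ 2 ^ n := Nat.pow_le_pow_right (by norm_num) hkn
    -- swap the sum to flats
    have hswap : (∑ f : Equiv.Perm Vn, (Bdk k f).card)
        = ∑ X ∈ flats n k,
          (Finset.univ.filter (fun f : Equiv.Perm Vn => IsFlat (ZMod 2) k (⇑f '' X))).card := by
      have e1 : (∑ f : Equiv.Perm Vn, (Bdk k f).card)
          = ∑ X : Set Vn, (Finset.univ.filter (fun f : Equiv.Perm Vn =>
              IsFlat (ZMod 2) k X ∧ IsFlat (ZMod 2) k (⇑f '' X))).card := by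
        simp only [hBdk, Finset.card_filter]
        rw [Finset.sum_comm]
      rw [e1]
      have e2 : ∀ X : Set Vn,
          (Finset.univ.filter (fun f : Equiv.Perm Vn =>
            IsFlat (ZMod 2) k X ∧ IsFlat (ZMod 2) k (⇑f '' X))).card
          = if IsFlat (ZMod 2) k X then
              (Finset.univ.filter (fun f : Equiv.Perm Vn =>
                IsFlat (ZMod 2) k (⇑f '' X))).card else 0 := by
        intro X
        split_ifs with h
        · congr 1
          apply Finset.filter_congr
          intro f _
          simp [h]
        · rw [Finset.filter_false_of_mem, Finset.card_empty]
          intro f _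
          tauto
      rw [Finset.sum_congr rfl (fun X _ => e2 X)]
      rw [← Finset.sum_filter]
      apply Finset.sum_congr _ (fun _ _ => rfl)
      unfold flats
      apply Finset.filter_congr_decidable
    -- bound each term
    have hterm : ∀ X ∈ flats n k,
        (Finset.univ.filter (fun f : Equiv.Perm Vn => IsFlat (ZMod 2) k (⇑f '' X))).card
          ≤ (flats n k).card * ((2 ^ k)! * (2 ^ n - 2 ^ k)!) := by
      intro X hX
      have hXflat : IsFlat (ZMod 2) k X := by
        have := hX
        unfold flats at this
        rw [Finset.mem_filter] at this
        exact this.2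
      have hXcard : Nat.card X = 2 ^ k := flat_ncard hXflat
      have hXccard : Nat.card ↥(Xᶜ) = 2 ^ n - 2 ^ k := by
        rw [Nat.card_eq_fintype_card, Fintype.card_compl_set, card_V,
          ← Nat.card_eq_fintype_card, hXcard]
      have hsub : (Finset.univ.filter (fun f : Equiv.Perm Vn => IsFlat (ZMod 2) k (⇑f '' X)))
          ⊆ (flats n k).biUnion (fun Y =>
            Finset.univ.filter (fun f : Equiv.Perm Vn => ⇑f '' X = Y)) := by
        intro f hf
        rw [Finset.mem_filter] at hf
        apply Finset.mem_biUnion.mpr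
        refine ⟨⇑f '' X, ?_, ?_⟩
        · unfold flats
          rw [Finset.mem_filter]
          exact ⟨Finset.mem_univ _, hf.2⟩
        · rw [Finset.mem_filter]
          exact ⟨Finset.mem_univ _, rfl⟩
      calc (Finset.univ.filter (fun f : Equiv.Perm Vn => IsFlat (ZMod 2) k (⇑f '' X))).card
          ≤ ((flats n k).biUnion (fun Y =>
            Finset.univ.filter (fun f : Equiv.Perm Vn => ⇑f '' X = Y))).card :=
            Finset.card_le_card hsub
        _ ≤ ∑ Y ∈ flats n k,
            (Finset.univ.filter (fun f : Equiv.Perm Vn => ⇑f '' X = Y)).card :=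
            Finset.card_biUnion_le
        _ ≤ ∑ _Y ∈ flats n k, (2 ^ k)! * (2 ^ n - 2 ^ k)! := by
            apply Finset.sum_le_sum
            intro Y _
            have := card_perm_image_le (α := Vn) X Y
            rwa [hXcard, hXccard] at this
        _ = (flats n k).card * ((2 ^ k)! * (2 ^ n - 2 ^ k)!) := by
            rw [Finset.sum_const, smul_eq_mul]
    -- put together
    have hN : (flats n k).card ≤ 2 ^ ((n - k) * (k + 1) + 2) := flats_card_le k hk0 hkn
    have hchoose := per_k_bound n k hn h3 hk1
    have hid : (2 ^ n).choose (2 ^ k) * ((2 ^ k)! * (2 ^ n - 2 ^ k)!) = F := by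
      rw [hF, ← Nat.choose_mul_factorial_mul_factorial hQ]
      ring
    calc 2 ^ (if k = 3 then 1 else k) * (∑ f : Equiv.Perm Vn, (Bdk k f).card)
        = 2 ^ (if k = 3 then 1 else k) * ∑ X ∈ flats n k,
          (Finset.univ.filter (fun f : Equiv.Perm Vn => IsFlat (ZMod 2) k (⇑f '' X))).card := by
          rw [hswap]
      _ ≤ 2 ^ (if k = 3 then 1 else k) *
          ((flats n k).card * ((flats n k).card * ((2 ^ k)! * (2 ^ n - 2 ^ k)!))) := by
          apply Nat.mul_le_mul_left
          calc ∑ X ∈ flats n k,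
              (Finset.univ.filter (fun f : Equiv.Perm Vn => IsFlat (ZMod 2) k (⇑f '' X))).card
              ≤ ∑ _X ∈ flats n k, (flats n k).card * ((2 ^ k)! * (2 ^ n - 2 ^ k)!) :=
                Finset.sum_le_sum hterm
            _ = (flats n k).card * ((flats n k).card * ((2 ^ k)! * (2 ^ n - 2 ^ k)!)) := by
                rw [Finset.sum_const, smul_eq_mul]
      _ ≤ 2 ^ (if k = 3 then 1 else k) *
          (2 ^ ((n - k) * (k + 1) + 2) * (2 ^ ((n - k) * (k + 1) + 2)
            * ((2 ^ k)! * (2 ^ n - 2 ^ k)!))) := by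
          apply Nat.mul_le_mul_left
          exact Nat.mul_le_mul hN (Nat.mul_le_mul_right _ hN)
      _ = ((2 ^ ((n - k) * (k + 1) + 2)) ^ 2 * 2 ^ (if k = 3 then 1 else k))
            * ((2 ^ k)! * (2 ^ n - 2 ^ k)!) := by ring
      _ ≤ (2 ^ n).choose (2 ^ k) * ((2 ^ k)! * (2 ^ n - 2 ^ k)!) :=
          Nat.mul_le_mul_right _ hchoose
      _ = F := hid
  -- assemble
  set T : ℕ → ℕ := fun k => ∑ f : Equiv.Perm Vn, (Bdk k f).card with hT
  have hsum_comm : ∑ f : Equiv.Perm Vn, ∑ k ∈ Finset.Icc 3 (n - 1), (Bdk k f).card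
      = ∑ k ∈ Finset.Icc 3 (n - 1), T k := Finset.sum_comm
  have hins : Finset.Icc 3 (n - 1) = insert 3 (Finset.Icc 4 (n - 1)) := by
    ext a
    simp only [Finset.mem_Icc, Finset.mem_insert]
    omega
  have hnotmem : 3 ∉ Finset.Icc 4 (n - 1) := by
    simp only [Finset.mem_Icc]
    omega
  have hsplit : ∑ k ∈ Finset.Icc 3 (n - 1), T k
      = T 3 + ∑ k ∈ Finset.Icc 4 (n - 1), T k := by
    rw [hins, Finset.sum_insert hnotmem]
  have h3bound : 2 * T 3 ≤ F := by
    have := hTk 3 le_rfl (by omega)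
    simpa using this
  have htail : 2 ^ 4 * ∑ k ∈ Finset.Icc 4 (n - 1), T k ≤ 2 * F := by
    apply tail_sum F T (n - 1) _ n 4 (by norm_num) (by omega)
    intro k h4 hk1
    have := hTk k (by omega) hk1
    rwa [if_neg (by omega)] at this
  have hFpos : 1 ≤ F := Nat.factorial_pos _
  have hcontra : ∑ k ∈ Finset.Icc 3 (n - 1), T k < F := by
    have h8 : 8 * (∑ k ∈ Finset.Icc 3 (n - 1), T k) ≤ 5 * F := by
      rw [hsplit]
      have e4 : (2:ℕ) ^ 4 = 16 := by norm_num
      omega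
    omega
  rw [hsum_comm] at hlow
  omega

end Main

end AffAux

/-- For every `n ≥ 4` there is a single permutation `f` of `𝔽₂ⁿ` with
`k`-affinity `0` simultaneously for all `3 ≤ k ≤ n - 1`. -/
theorem exists_perm_affinity_zero_all_k_q_two (n : ℕ) (hn : 4 ≤ n) :
    ∃ f : Equiv.Perm (Fin n → ZMod 2),
      ∀ k : ℕ, 3 ≤ k → k ≤ n - 1 →
        affinity (ZMod 2) k (⇑f : (Fin n → ZMod 2) → (Fin n → ZMod 2)) = 0 := by
  classical
  obtain ⟨f, hf⟩ := AffAux.exists_good_perm hn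
  refine ⟨f, fun k h3 hk1 => ?_⟩
  have hk := hf k (Finset.mem_Icc.mpr ⟨h3, hk1⟩)
  have hset : {X : Set (Fin n → ZMod 2) |
      IsFlat (ZMod 2) k X ∧ IsFlat (ZMod 2) k (⇑f '' X)} = ∅ := by
    ext X
    simp only [Set.mem_setOf_eq, Set.mem_empty_iff_false, iff_false]
    intro hX
    have hmem : X ∈ (Finset.univ.filter (fun X : Set (Fin n → ZMod 2) =>
        IsFlat (ZMod 2) k X ∧ IsFlat (ZMod 2) k (⇑f '' X))) :=
      Finset.mem_filter.mpr ⟨Finset.mem_univ X, hX⟩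
    rw [hk] at hmem
    exact absurd hmem (Finset.notMem_empty X)
  unfold affinity
  rw [hset, Set.ncard_empty]
end

section
/- For every prime power q ≥ 4 and every integer n ≥ 2 there exists a single permutation f of F_q^n such that k-affinity(f) = 0 simultaneously for all integers k with 1 ≤ k ≤ n−1. -/
/-!
A uniformly random permutation of `V ≅ F^n`, a set of `N = q^n` points, maps a given `k`-flat
onto a given `k`-flat with probability `1 / choose N (q^k)`. A point and a frame determine a
`k`-flat, and every `k`-flat arises from at least `q^k (q-1)^k` such pairs, so there are at most
`N^(k+1) / (q (q-1))^k` of them. By the union bound, the probability that some `k`-flat is mapped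
onto a `k`-flat is at most `(#k-flats)^2 / choose N (q^k)`, which is at most `2^-k` when `q ≥ 4`.
Summing over `1 ≤ k < n` leaves a total below `1`, so some permutation maps no such flat to a
flat.
-/

open Finset Nat

theorem Nat.pow_le_pow_mul_choose {n r : ℕ} (h : r ≤ n) : n ^ r ≤ r ^ r * n.choose r := by
  refine Nat.le_of_mul_le_mul_right ?_ r.factorial_pos
  have key : n ^ r * r ! ≤ r ^ r * n.descFactorial r := by
    have hpow : ∀ m : ℕ, m ^ r = ∏ _i ∈ range r, m := by simp
    rw [← r.descFactorial_self, descFactorial_eq_prod_range, descFactorial_eq_prod_range,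
      hpow, hpow, ← prod_mul_distrib, ← prod_mul_distrib]
    refine prod_le_prod' fun i _ => ?_
    rw [Nat.mul_sub, Nat.mul_sub, mul_comm r n]
    have : r * i ≤ n * i := Nat.mul_le_mul_right i h
    omega
  calc n ^ r * r ! ≤ r ^ r * n.descFactorial r := key
    _ = r ^ r * n.choose r * r ! := by rw [descFactorial_eq_factorial_mul_choose]; ring

theorem Nat.choose_le_choose_right {n a b : ℕ} (hab : a ≤ b) (hb : b ≤ n / 2) :
    n.choose a ≤ n.choose b := by
  induction b, hab using Nat.le_induction with
  | base => rfl
  | succ b _ ih => exact (ih (by omega)).trans (choose_le_succ_of_lt_half_left (by omega))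

theorem two_pow_mul_sum_Icc_add_le {s : ℕ → ℕ} {A : ℕ} :
    ∀ n, (∀ k ∈ Icc 1 n, 2 ^ k * s k ≤ A) →
      2 ^ n * ∑ k ∈ Icc 1 n, s k + A ≤ 2 ^ n * A
  | 0, _ => by simp
  | n + 1, h => by
    have ih := two_pow_mul_sum_Icc_add_le n fun k hk =>
      h k (by simp only [mem_Icc] at hk ⊢; omega)
    have hlast := h (n + 1) (by simp)
    rw [sum_Icc_succ_top (by omega), pow_succ] at *
    linarith

theorem sum_Icc_lt_of_two_pow_mul_le {s : ℕ → ℕ} {A n : ℕ} (hA : 0 < A)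
    (h : ∀ k ∈ Icc 1 n, 2 ^ k * s k ≤ A) : ∑ k ∈ Icc 1 n, s k < A := by
  have := two_pow_mul_sum_Icc_add_le n h
  exact Nat.lt_of_mul_lt_mul_left (a := 2 ^ n) (by omega)

theorem two_mul_sq_add_le_four_pow {k : ℕ} (hk : 2 ≤ k) : 2 * k ^ 2 + 2 * k + 2 ≤ 4 ^ k := by
  induction k, hk using Nat.le_induction with
  | base => norm_num
  | succ k _ ih => rw [pow_succ 4]; nlinarith

theorem two_mul_sq_le_choose {q n M : ℕ} (hq : 4 ≤ q) (hn : 2 ≤ n)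
    (hM : M * (q * (q - 1)) ≤ q ^ (2 * n)) : 2 * M ^ 2 ≤ (q ^ n).choose q := by
  -- `N^q ≤ q^q * choose N q` is too weak when `q = 4`, so compare with `choose N 4` instead.
  set N := q ^ n
  have hqN : q * q ≤ N := by simpa [sq] using Nat.pow_le_pow_right (by omega : 0 < q) hn
  have h4q : 4 * q ≤ q * q := Nat.mul_le_mul_right q hq
  have h12 : 12 * M ≤ N ^ 2 := by
    rw [← pow_mul, mul_comm n, mul_comm 12]
    exact (Nat.mul_le_mul_left M (Nat.mul_le_mul hq (by omega : 3 ≤ q - 1))).trans hM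
  have hsq : 144 * M ^ 2 ≤ N ^ 4 := by nlinarith
  have hratio : 256 * N ^ 4 ≤ 625 * (N - 3) ^ 4 := by
    simpa [mul_pow] using Nat.pow_le_pow_left (show 4 * N ≤ 5 * (N - 3) by omega) 4
  have hdesc : (N - 3) ^ 4 ≤ 24 * N.choose 4 := by
    rw [show 24 = 4 ! from rfl, ← descFactorial_eq_factorial_mul_choose]
    simpa [show N + 1 - 4 = N - 3 by omega] using N.pow_sub_le_descFactorial 4
  have hchoose : N.choose 4 ≤ N.choose q := Nat.choose_le_choose_right hq (by omega)
  linarith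

theorem two_pow_mul_sq_le_choose {q n k M : ℕ} (hq : 4 ≤ q) (hk : 1 ≤ k) (hkn : k < n)
    (hM : M * (q ^ k * (q - 1) ^ k) ≤ q ^ (n * (k + 1))) :
    2 ^ k * M ^ 2 ≤ (q ^ n).choose (q ^ k) := by
  obtain rfl | hk2 : k = 1 ∨ 2 ≤ k := by omega
  · simpa using two_mul_sq_le_choose hq hkn (by simpa [mul_comm n] using hM)
  obtain ⟨j, rfl⟩ : ∃ j, n = k + j + 1 := ⟨n - k - 1, by omega⟩
  have hq0 : 0 < q := by omega
  have hchoose : q ^ ((j + 1) * q ^ k) ≤ (q ^ (k + j + 1)).choose (q ^ k) := by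
    have h := Nat.pow_le_pow_mul_choose (Nat.pow_le_pow_right hq0 (by omega : k ≤ k + j + 1))
    rw [← pow_mul, ← pow_mul, show (k + j + 1) * q ^ k = k * q ^ k + (j + 1) * q ^ k by ring,
      pow_add] at h
    exact Nat.le_of_mul_le_mul_left h (by positivity)
  have hexp : 2 * ((k + j + 1) * (k + 1)) ≤ (j + 1) * q ^ k + 2 * k := by
    have := (two_mul_sq_add_le_four_pow hk2).trans (Nat.pow_le_pow_left hq k)
    nlinarith
  have htwo : 2 ^ k ≤ ((q - 1) ^ k) ^ 2 := by
    rw [← pow_mul, pow_mul']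
    exact Nat.pow_le_pow_left (by nlinarith [show 3 ≤ q - 1 by omega]) k
  refine le_trans ?_ hchoose
  refine Nat.le_of_mul_le_mul_right ?_ (show 0 < (q ^ k) ^ 2 by positivity)
  calc 2 ^ k * M ^ 2 * (q ^ k) ^ 2 ≤ ((q - 1) ^ k) ^ 2 * M ^ 2 * (q ^ k) ^ 2 := by gcongr
    _ = (M * (q ^ k * (q - 1) ^ k)) ^ 2 := by ring
    _ ≤ (q ^ ((k + j + 1) * (k + 1))) ^ 2 := Nat.pow_le_pow_left hM 2
    _ ≤ q ^ ((j + 1) * q ^ k) * (q ^ k) ^ 2 := by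
        rw [← pow_mul, ← pow_mul, ← pow_add]
        exact Nat.pow_le_pow_right hq0 (by linarith)

section Flats

variable {F V : Type*} [Field F] [AddCommGroup V] [Module F V] {k : ℕ}

variable (F) in
def flatSpan (x : V) (u : Fin k → V) : Set V :=
  Set.range fun t : Fin k → F => x + ∑ i, t i • u i

theorem flatSpan_add_sum_smul (x : V) (u : Fin k → V) (s : Fin k → F) :
    flatSpan F (x + ∑ i, s i • u i) u = flatSpan F x u := by
  ext v
  constructor
  · rintro ⟨t, rfl⟩
    exact ⟨s + t, by simp only [Pi.add_apply, add_smul, sum_add_distrib, add_assoc]⟩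
  · rintro ⟨t, rfl⟩
    exact ⟨t - s, by simp only [Pi.sub_apply, sub_smul, sum_sub_distrib]; abel⟩

theorem flatSpan_units_smul (x : V) (u : Fin k → V) (l : Fin k → Fˣ) :
    flatSpan F x (fun i => (l i : F) • u i) = flatSpan F x u := by
  ext v
  constructor
  · rintro ⟨t, rfl⟩
    exact ⟨fun i => t i * l i, by simp only [smul_smul]⟩
  · rintro ⟨t, rfl⟩
    refine ⟨fun i => t i * (l i)⁻¹, ?_⟩
    simp only [smul_smul, mul_assoc, Units.inv_mul, mul_one]

theorem IsFlat.exists_eq_flatSpan [FiniteDimensional F V] {X : Set V} (h : IsFlat F k X) :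
    ∃ (x : V) (u : Fin k → V), LinearIndependent F u ∧ X = flatSpan F x u := by
  obtain ⟨U, x, hU, rfl⟩ := h
  let b := Module.finBasisOfFinrankEq F U hU
  refine ⟨x, fun i => b i, b.linearIndependent.map' U.subtype U.ker_subtype, ?_⟩
  ext v
  simp only [flatSpan, Set.mem_image, Set.mem_range, SetLike.mem_coe]
  constructor
  · rintro ⟨w, hw, rfl⟩
    refine ⟨b.repr ⟨w, hw⟩, ?_⟩
    have hw := congrArg Subtype.val (b.sum_repr ⟨w, hw⟩)
    simp only [AddSubmonoidClass.coe_finsetSum, SetLike.val_smul] at hw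
    rw [hw, add_comm]
  · rintro ⟨t, rfl⟩
    exact ⟨_, (∑ i, t i • b i).2, by push_cast; rw [add_comm]⟩

theorem IsFlat.natCard [Fintype F] [Finite V] {X : Set V} (h : IsFlat F k X) :
    Nat.card X = Fintype.card F ^ k := by
  obtain ⟨U, x, hU, rfl⟩ := h
  rw [Nat.card_image_of_injective (add_left_injective x), ← hU, ← Nat.card_eq_fintype_card]
  exact Module.natCard_eq_pow_finrank (K := F)

theorem injective_add_sum_smul_units_smul {u : Fin k → V} (hu : LinearIndependent F u) (x : V) :
    Function.Injective fun p : (Fin k → F) × (Fin k → Fˣ) =>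
      (x + ∑ i, p.1 i • u i, fun i => (p.2 i : F) • u i) := by
  rintro ⟨s, l⟩ ⟨s', l'⟩ h
  simp only [Prod.mk.injEq, add_right_inj, funext_iff] at h
  refine Prod.ext (funext (Fintype.linearIndependent_iffₛ.1 hu s s' h.1)) (funext fun i => ?_)
  exact Units.ext (smul_left_injective F (hu.ne_zero i) (h.2 i))

theorem card_isFlat_mul_le [Fintype F] [Fintype V] (k : ℕ) :
    Nat.card {X : Set V // IsFlat F k X} * (Fintype.card F ^ k * (Fintype.card F - 1) ^ k)
      ≤ Fintype.card V ^ (k + 1) := by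
  classical
  choose x u hu hX using fun X : {X : Set V // IsFlat F k X} => X.2.exists_eq_flatSpan
  let Φ (P : {X : Set V // IsFlat F k X} × (Fin k → F) × (Fin k → Fˣ)) :
      V × (Fin k → V) := (x P.1 + ∑ i, P.2.1 i • u P.1 i, fun i => (P.2.2 i : F) • u P.1 i)
  have hΦ (P) : (P.1 : Set V) = flatSpan F (Φ P).1 (Φ P).2 := by
    rw [flatSpan_units_smul, flatSpan_add_sum_smul, hX]
  have hinj : Function.Injective Φ := by
    rintro ⟨X, p⟩ ⟨Y, p'⟩ h
    obtain rfl : X = Y := Subtype.ext ((hΦ (X, p)).trans (h ▸ (hΦ (Y, p')).symm))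
    exact Prod.ext rfl (injective_add_sum_smul_units_smul (hu X) (x X) h)
  simpa [Nat.card_eq_fintype_card, Fintype.card_units, pow_succ, mul_comm] using
    Nat.card_le_card_of_injective Φ hinj

end Flats

theorem card_perm_image_eq_le {α : Type*} [Fintype α] {X Y : Set α} {m : ℕ}
    (hX : Nat.card X = m) (hY : Nat.card Y = m) :
    Nat.card {f : Equiv.Perm α // f '' X = Y} ≤ m ! * (Fintype.card α - m)! := by
  classical
  rw [Nat.card_eq_fintype_card] at hX hY
  have hmaps {f : Equiv.Perm α} {s t : Set α} (h : f '' s = t) : Set.MapsTo f s t :=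
    h ▸ Set.mapsTo_image f s
  let restrict (f : {f : Equiv.Perm α // f '' X = Y}) : (X ↪ Y) × (↥Xᶜ ↪ ↥Yᶜ) :=
    (⟨_, (hmaps f.2).restrict_inj.2 f.1.injective.injOn⟩,
      ⟨_, (hmaps (by rw [Set.image_compl_eq f.1.bijective, f.2])).restrict_inj.2
        f.1.injective.injOn⟩)
  have hinj : Function.Injective restrict := by
    rintro ⟨f, _⟩ ⟨g, _⟩ h
    simp only [restrict, Prod.mk.injEq, Function.Embedding.mk.injEq, funext_iff] at h
    refine Subtype.ext (Equiv.ext fun v => ?_)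
    by_cases hv : v ∈ X
    · exact congrArg Subtype.val (h.1 ⟨v, hv⟩)
    · exact congrArg Subtype.val (h.2 ⟨v, hv⟩)
  have hXc : Fintype.card ↥Xᶜ = Fintype.card α - m := by
    rw [Fintype.card_compl_set, hX]
  have hYc : Fintype.card ↥Yᶜ = Fintype.card α - m := by
    rw [Fintype.card_compl_set, hY]
  simpa [Nat.card_eq_fintype_card, Fintype.card_embedding_eq, hX, hY, hXc, hYc,
    Nat.descFactorial_self] using Nat.card_le_card_of_injective restrict hinj

section Counting

variable {F V : Type*} [Field F] [AddCommGroup V] [Module F V]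

variable (F) in
def MapsFlatToFlat (k : ℕ) (f : V → V) : Prop :=
  ∃ X, IsFlat F k X ∧ IsFlat F k (f '' X)

variable [Fintype F] [Fintype V]

theorem card_perm_exists_isFlat_image_le (k : ℕ) :
    Nat.card {f : Equiv.Perm V // MapsFlatToFlat F k f} ≤
      Nat.card {X : Set V // IsFlat F k X} ^ 2 *
        ((Fintype.card F ^ k)! * (Fintype.card V - Fintype.card F ^ k)!) := by
  classical
  choose X hX hfX using fun f : {f : Equiv.Perm V // MapsFlatToFlat F k f} => f.2
  let flatPair (f : {f : Equiv.Perm V // MapsFlatToFlat F k f}) :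
      Σ P : {X : Set V // IsFlat F k X} × {Y : Set V // IsFlat F k Y},
        {f : Equiv.Perm V // f '' P.1 = P.2} :=
    ⟨(⟨X f, hX f⟩, ⟨f.1 '' X f, hfX f⟩), ⟨f.1, rfl⟩⟩
  have hinj : Function.Injective flatPair := fun f g h =>
    Subtype.ext (congrArg (fun s => s.2.1) h)
  refine (Nat.card_le_card_of_injective flatPair hinj).trans ?_
  rw [Nat.card_sigma, sq, ← Nat.card_prod, Nat.card_eq_fintype_card (α := _ × _),
    ← smul_eq_mul, ← Finset.card_univ]
  exact Finset.sum_le_card_nsmul _ _ _ fun P _ =>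
    card_perm_image_eq_le P.1.2.natCard P.2.2.natCard

theorem two_pow_mul_card_perm_exists_isFlat_image_le (hq : 4 ≤ Fintype.card F) {k : ℕ}
    (hk : 1 ≤ k) (hkd : k < Module.finrank F V) :
    2 ^ k * Nat.card {f : Equiv.Perm V // MapsFlatToFlat F k f} ≤
      (Fintype.card V)! := by
  set q := Fintype.card F
  have hV : Fintype.card V = q ^ Module.finrank F V := Module.card_eq_pow_finrank
  have hflats := card_isFlat_mul_le (F := F) (V := V) k
  rw [hV, ← pow_mul] at hflats
  have hchoose := two_pow_mul_sq_le_choose hq hk hkd hflats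
  refine (Nat.mul_le_mul_left _ (card_perm_exists_isFlat_image_le k)).trans ?_
  rw [hV, ← mul_assoc, ← Nat.choose_mul_factorial_mul_factorial
    (Nat.pow_le_pow_right (by omega) hkd.le), mul_assoc _ (q ^ k)!]
  exact Nat.mul_le_mul_right _ hchoose

theorem exists_perm_forall_not_isFlat_image (hq : 4 ≤ Fintype.card F) :
    ∃ f : Equiv.Perm V, ∀ k, 1 ≤ k → k < Module.finrank F V →
      ¬MapsFlatToFlat F k f := by
  classical
  let bad (k : ℕ) := Finset.univ.filter fun f : Equiv.Perm V => MapsFlatToFlat F k f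
  have hcard : #((Icc 1 (Module.finrank F V - 1)).biUnion bad) < #(univ : Finset (Equiv.Perm V)) :=
    calc _ ≤ ∑ k ∈ Icc 1 (Module.finrank F V - 1), (bad k).card := card_biUnion_le
      _ < (Fintype.card V)! := by
        refine sum_Icc_lt_of_two_pow_mul_le (factorial_pos _) fun k hk => ?_
        rw [mem_Icc] at hk
        simpa [bad, Fintype.card_subtype, Nat.card_eq_fintype_card] using
          two_pow_mul_card_perm_exists_isFlat_image_le (V := V) hq hk.1 (by omega)
      _ = _ := by rw [Finset.card_univ, Fintype.card_perm]
  obtain ⟨f, -, hf⟩ := exists_mem_notMem_of_card_lt_card hcard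
  refine ⟨f, fun k hk hkd hX => hf (mem_biUnion.2 ⟨k, mem_Icc.2 ⟨hk, by omega⟩, ?_⟩)⟩
  simpa [bad] using hX

end Counting

theorem exists_perm_affinity_zero_all_k_q_ge_four_general (F : Type*) [Field F] [Fintype F]
    (hq : 4 ≤ Fintype.card F) (n : ℕ) :
    ∃ f : Equiv.Perm (Fin n → F),
      ∀ k : ℕ, 1 ≤ k → k ≤ n - 1 →
        affinity F k (⇑f : (Fin n → F) → (Fin n → F)) = 0 := by
  obtain ⟨f, hf⟩ := exists_perm_forall_not_isFlat_image (V := Fin n → F) hq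
  refine ⟨f, fun k hk hkn => ?_⟩
  rw [affinity, Set.ncard_eq_zero, Set.eq_empty_iff_forall_notMem]
  exact fun X hX => hf k hk (by rw [Module.finrank_fin_fun]; omega) ⟨X, hX⟩

/-- For every finite field `F` with `|F| = q ≥ 4` and every `n ≥ 2` there is a single
permutation `f` of `F^n` with `k`-affinity `0` simultaneously for all `1 ≤ k ≤ n - 1`. -/
theorem exists_perm_affinity_zero_all_k_q_ge_four (F : Type*) [Field F] [Fintype F]
    (hq : 4 ≤ Fintype.card F) (n : ℕ) (hn : 2 ≤ n) :
    ∃ f : Equiv.Perm (Fin n → F),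
      ∀ k : ℕ, 1 ≤ k → k ≤ n - 1 →
        affinity F k (⇑f : (Fin n → F) → (Fin n → F)) = 0 :=
  exists_perm_affinity_zero_all_k_q_ge_four_general F hq n
end

section
/- For every integer n ≥ 2 there exists a permutation f of F_3^n such that 1-affinity(f) = 0, i.e., no 1-flat (line) of F_3^n is mapped by f onto a 1-flat. -/
/-!
Over `𝔽₃` the lines are exactly the triples `{a, b, -(a + b)}` with `a ≠ b`, and the points of
a line sum to zero. So a permutation maps no line onto a line as soon as it sends no line to a
zero-sum triple. This property passes to products `f × g` (distinct points differ in some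
factor, and there the triple is again a line), so from witnesses in `𝔽₃²` and `𝔽₃³`, found by
computer and checked by evaluation, one obtains witnesses in every `𝔽₃ⁿ` with `n ≥ 2`.
-/

open Function

/-- Over `ZMod 3` this says that `f` sends no line `{a, b, -(a + b)}` to a zero-sum triple. -/
def BreaksLines {G : Type*} [AddCommGroup G] (f : G → G) : Prop :=
  ∀ a b : G, a ≠ b → f a + f b + f (-(a + b)) ≠ 0

namespace ZModModule

variable {V : Type*} [AddCommGroup V] [Module (ZMod 3) V]

theorem neg_add_self_eq_self (a : V) : -(a + a) = a := by
  have h := ZModModule.char_nsmul_eq_zero 3 a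
  rw [succ_nsmul, two_nsmul, add_assoc] at h
  exact neg_eq_of_add_eq_zero_left h

theorem neg_add_ne_left {a b : V} (hab : a ≠ b) : -(a + b) ≠ a := by
  intro h
  apply hab
  calc a = -(a + a) := (neg_add_self_eq_self a).symm
    _ = -(a + -(a + b)) := by rw [h]
    _ = b := by abel

theorem neg_add_ne_right {a b : V} (hab : a ≠ b) : -(a + b) ≠ b :=
  add_comm a b ▸ neg_add_ne_left hab.symm

theorem finsum_mem_line {M : Type*} [AddCommMonoid M] (g : V → M) {a b : V} (hab : a ≠ b) :
    ∑ᶠ x ∈ ({a, b, -(a + b)} : Set V), g x = g a + g b + g (-(a + b)) := by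
  have ha : a ∉ ({b, -(a + b)} : Set V) := by
    simp only [Set.mem_insert_iff, Set.mem_singleton_iff, not_or]
    exact ⟨hab, (neg_add_ne_left hab).symm⟩
  rw [finsum_mem_insert _ ha (Set.toFinite _),
    finsum_mem_pair (neg_add_ne_right hab).symm, add_assoc]

end ZModModule

open ZModModule

section CharThree

variable {V : Type*} [AddCommGroup V] [Module (ZMod 3) V]

theorem IsFlat.exists_eq_line {X : Set V} (hX : IsFlat (ZMod 3) 1 X) :
    ∃ a b : V, a ≠ b ∧ X = {a, b, -(a + b)} := by
  obtain ⟨U, x, hU, rfl⟩ := hX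
  obtain ⟨⟨u, hu⟩, hu0, hspan⟩ := finrank_eq_one_iff'.mp hU
  have hU : (U : Set V) = {0, u, -u} := by
    ext y
    refine ⟨fun hy => ?_, ?_⟩
    · obtain ⟨c, hc⟩ := hspan ⟨y, hy⟩
      obtain rfl : c • u = y := congrArg Subtype.val hc
      obtain rfl | rfl | rfl := (by decide : ∀ d : ZMod 3, d = 0 ∨ d = 1 ∨ d = -1) c
      all_goals simp
    · rintro (rfl | rfl | rfl)
      exacts [U.zero_mem, hu, U.neg_mem hu]
  refine ⟨x, u + x, ?_, ?_⟩
  · simpa [eq_comm] using fun h : u = 0 => hu0 (Subtype.ext h)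
  · rw [hU]
    simp only [Set.image_insert_eq, Set.image_singleton, zero_add]
    congr
    calc -u + x = -u + -(x + x) := by rw [neg_add_self_eq_self]
      _ = -(x + (u + x)) := by abel

theorem IsFlat.finsum_mem_eq_zero {X : Set V} (hX : IsFlat (ZMod 3) 1 X) : ∑ᶠ x ∈ X, x = 0 := by
  obtain ⟨a, b, hab, rfl⟩ := hX.exists_eq_line
  rw [finsum_mem_line (fun x => x) hab, add_neg_cancel]

theorem affinity_one_eq_zero_of_breaksLines {f : V → V} (hinj : Injective f)
    (hf : BreaksLines f) : affinity (ZMod 3) 1 f = 0 := by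
  refine (congrArg Set.ncard (Set.eq_empty_of_forall_notMem ?_)).trans (Set.ncard_empty (Set V))
  rintro X ⟨hX, hfX⟩
  obtain ⟨a, b, hab, rfl⟩ := hX.exists_eq_line
  apply hf a b hab
  rw [← finsum_mem_line f hab, ← hfX.finsum_mem_eq_zero, finsum_mem_image hinj.injOn]

end CharThree

namespace BreaksLines

variable {G H : Type*} [AddCommGroup G] [AddCommGroup H]

theorem prodMap {f : G → G} {g : H → H} (hf : BreaksLines f) (hg : BreaksLines g) :
    BreaksLines (Prod.map f g) := by
  rintro ⟨a₁, a₂⟩ ⟨b₁, b₂⟩ hab h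
  by_cases h₁ : a₁ = b₁
  · subst h₁
    exact hg a₂ b₂ (fun h₂ => hab (h₂ ▸ rfl)) (by simpa using congrArg Prod.snd h)
  · exact hf a₁ b₁ h₁ (by simpa using congrArg Prod.fst h)

theorem permCongr {f : Equiv.Perm G} (hf : BreaksLines f) (e : G ≃+ H) :
    BreaksLines (e.toEquiv.permCongr f) := by
  intro a b hab h
  refine hf (e.symm a) (e.symm b) (e.symm.injective.ne hab) (e.injective ?_)
  simpa using h

end BreaksLines

/- The witnesses in dimensions 2 and 3, found by computer search: entry `[x][y]` (resp.
`[x][y][z]`) is the image of `![x, y]` (resp. `![x, y, z]`). Each fixes a cap of maximal size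
(no line may consist of fixed points) and permutes the remaining points in a single cycle. -/
def linesBreaker2 (v : Fin 2 → ZMod 3) : Fin 2 → ZMod 3 :=
  (![![![2, 2], ![0, 1], ![0, 0]],
    ![![1, 0], ![2, 0], ![1, 2]],
    ![![0, 2], ![2, 1], ![1, 1]]] : Fin 3 → Fin 3 → Fin 2 → ZMod 3) (v 0) (v 1)

def linesBreaker3 (v : Fin 3 → ZMod 3) : Fin 3 → ZMod 3 :=
  (![![![![0, 0, 0], ![0, 2, 0], ![0, 0, 2]],
      ![![0, 1, 0], ![0, 1, 1], ![1, 1, 0]],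
      ![![2, 1, 0], ![2, 0, 1], ![2, 0, 2]]],
    ![![![1, 2, 0], ![2, 2, 2], ![1, 0, 1]],
      ![![2, 1, 2], ![0, 1, 2], ![1, 1, 1]],
      ![![1, 2, 2], ![1, 2, 1], ![1, 1, 2]]],
    ![![![2, 0, 0], ![0, 0, 1], ![0, 2, 1]],
      ![![1, 0, 2], ![2, 1, 1], ![0, 2, 2]],
      ![![2, 2, 0], ![2, 2, 1], ![1, 0, 0]]]] : Fin 3 → Fin 3 → Fin 3 → Fin 3 → ZMod 3)
    (v 0) (v 1) (v 2)

theorem linesBreaker2_bijective : Bijective linesBreaker2 := by decide +kernel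

theorem linesBreaker3_bijective : Bijective linesBreaker3 := by decide +kernel

theorem breaksLines_linesBreaker2 : BreaksLines linesBreaker2 := by
  unfold BreaksLines; decide +kernel

theorem breaksLines_linesBreaker3 : BreaksLines linesBreaker3 := by
  unfold BreaksLines; decide +kernel

def finAddArrowEquivProd (R : Type*) [Semiring R] (m n : ℕ) :
    (Fin (m + n) → R) ≃ₗ[R] (Fin m → R) × (Fin n → R) :=
  (LinearEquiv.funCongrLeft R R finSumFinEquiv).trans (LinearEquiv.sumArrowLequivProdArrow _ _ _ _)

theorem exists_perm_breaksLines (n : ℕ) (hn : 2 ≤ n) :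
    ∃ f : Equiv.Perm (Fin n → ZMod 3), BreaksLines f := by
  have base2 : ∃ g : Equiv.Perm (Fin 2 → ZMod 3), BreaksLines g :=
    ⟨Equiv.ofBijective _ linesBreaker2_bijective, breaksLines_linesBreaker2⟩
  induction n using Nat.strong_induction_on with
  | _ n ih =>
    obtain rfl | rfl | hn : n = 2 ∨ n = 3 ∨ 4 ≤ n := by omega
    · exact base2
    · exact ⟨Equiv.ofBijective _ linesBreaker3_bijective, breaksLines_linesBreaker3⟩
    · obtain ⟨m, rfl⟩ : ∃ m, n = m + 2 := ⟨n - 2, by omega⟩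
      obtain ⟨f, hf⟩ := ih m (by omega) (by omega)
      obtain ⟨g, hg⟩ := base2
      have hfg : BreaksLines (f.prodCongr g) := hf.prodMap hg
      exact ⟨_, hfg.permCongr (finAddArrowEquivProd (ZMod 3) m 2).toAddEquiv.symm⟩

/-- For every `n ≥ 2` there exists a permutation `f` of `𝔽₃ⁿ` with `1`-affinity `0`. -/
theorem exists_perm_one_affinity_zero_q_three (n : ℕ) (hn : 2 ≤ n) :
    ∃ f : Equiv.Perm (Fin n → ZMod 3),
      affinity (ZMod 3) 1 (⇑f : (Fin n → ZMod 3) → (Fin n → ZMod 3)) = 0 := by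
  obtain ⟨f, hf⟩ := exists_perm_breaksLines n hn
  exact ⟨f, affinity_one_eq_zero_of_breaksLines f.injective hf⟩
end

section
/- Let n ≥ 2 and let f be the permutation of the finite field F_{2^n} defined by f(x) = x^{2^n − 2} (so f(0) = 0 and f(x) = x^{-1} for x ≠ 0), where F_{2^n} is regarded as an n-dimensional vector space over F_2. Then 2-affinity(f) = 0 if n is odd, and 2-affinity(f) = (2^n − 1)/3 if n is even. -/
set_option linter.unusedSectionVars false

namespace TwoAffAux

section Generic
variable {V : Type*} [AddCommGroup V] [Module (ZMod 2) V]

lemma span_pair_set (u v : V) :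
    ((Submodule.span (ZMod 2) {u, v} : Submodule (ZMod 2) V) : Set V) = {0, u, v, u + v} := by
  have hc : ∀ a : ZMod 2, a = 0 ∨ a = 1 := by decide
  ext w
  simp only [SetLike.mem_coe, Submodule.mem_span_pair, Set.mem_insert_iff, Set.mem_singleton_iff]
  constructor
  · rintro ⟨a, b, rfl⟩
    rcases hc a with rfl | rfl <;> rcases hc b with rfl | rfl <;> simp
  · rintro (rfl | rfl | rfl | rfl)
    · exact ⟨0, 0, by simp⟩
    · exact ⟨1, 0, by simp⟩
    · exact ⟨0, 1, by simp⟩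
    · exact ⟨1, 1, by simp⟩

lemma flat_rep {X : Set V} (h : IsFlat (ZMod 2) 2 X) :
    ∃ x u v : V, u ≠ 0 ∧ v ≠ 0 ∧ u ≠ v ∧
      X = {x, u + x, v + x, u + v + x} := by
  obtain ⟨U, x, hr, hX⟩ := h
  haveI : Module.Finite (ZMod 2) U := Module.finite_of_finrank_pos (by rw [hr]; norm_num)
  let b : Module.Basis (Fin 2) (ZMod 2) U := Module.finBasisOfFinrankEq (ZMod 2) U hr
  refine ⟨x, (b 0 : V), (b 1 : V), ?_, ?_, ?_, ?_⟩
  · simpa [Submodule.coe_eq_zero] using b.ne_zero 0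
  · simpa [Submodule.coe_eq_zero] using b.ne_zero 1
  · intro h
    have : b 0 = b 1 := Subtype.coe_injective h
    exact absurd (b.injective this) (by decide)
  · rw [hX]
    have hUset : (U : Set V) = {0, (b 0 : V), (b 1 : V), (b 0 : V) + (b 1 : V)} := by
      have hc : ∀ a : ZMod 2, a = 0 ∨ a = 1 := by decide
      ext w
      simp only [SetLike.mem_coe, Set.mem_insert_iff, Set.mem_singleton_iff]
      constructor
      · intro hw
        have hrepr := b.sum_repr ⟨w, hw⟩
        rw [Fin.sum_univ_two] at hrepr
        have hrepr' : (b.repr ⟨w, hw⟩ 0) • (b 0 : V) + (b.repr ⟨w, hw⟩ 1) • (b 1 : V) = w := by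
          have := congrArg (Subtype.val) hrepr
          simpa using this
        rcases hc (b.repr ⟨w, hw⟩ 0) with h0 | h0 <;> rcases hc (b.repr ⟨w, hw⟩ 1) with h1 | h1 <;>
          rw [h0, h1] at hrepr' <;> simp only [zero_smul, one_smul, add_zero, zero_add] at hrepr' <;>
          tauto
      · have m0 : (b 0 : V) ∈ U := SetLike.coe_mem _
        have m1 : (b 1 : V) ∈ U := SetLike.coe_mem _
        rintro (rfl | rfl | rfl | rfl)
        · exact U.zero_mem
        · exact m0
        · exact m1
        · exact U.add_mem m0 m1
    rw [hUset]
    simp only [Set.image_insert_eq, Set.image_singleton, zero_add]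


end Generic

section Alg
variable {F : Type*} [Field F] [CharP F 2] [Algebra (ZMod 2) F]

lemma two_eq_zero' : (2 : F) = 0 := by
  have := CharP.cast_eq_zero F 2
  exact_mod_cast this

lemma ncard_four {a b c d : F} (hab : a ≠ b) (hac : a ≠ c) (had : a ≠ d)
    (hbc : b ≠ c) (hbd : b ≠ d) (hcd : c ≠ d) : ({a, b, c, d} : Set F).ncard = 4 := by
  rw [Set.ncard_insert_of_notMem (by simp [hab, hac, had])
      (((Set.finite_singleton _).insert _).insert _),
    Set.ncard_insert_of_notMem (by simp [hbc, hbd])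
      ((Set.finite_singleton _).insert _),
    Set.ncard_insert_of_notMem (by simp [hcd]) (Set.finite_singleton _),
    Set.ncard_singleton]

lemma flat_of_four {a b c d : F} (hab : a ≠ b) (hac : a ≠ c) (hbc : b ≠ c)
    (hsum : a + b + c + d = 0) : IsFlat (ZMod 2) 2 ({a, b, c, d} : Set F) := by
  have h2 : (2 : F) = 0 := two_eq_zero'
  set u := a + b with hu
  set v := a + c with hv
  have hu0 : u ≠ 0 := fun h => hab (by linear_combination h - b * h2)
  have hv0 : v ≠ 0 := fun h => hac (by linear_combination h - c * h2)
  have huv : u ≠ v := fun h => hbc (by linear_combination h)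
  have huv0 : u + v ≠ 0 := fun h => huv (by linear_combination h - v * h2)
  refine ⟨Submodule.span (ZMod 2) {u, v}, a, ?_, ?_⟩
  · -- finrank = 2
    have hset := span_pair_set u v
    set U := Submodule.span (ZMod 2) {u, v} with hU
    have hfin : ((U : Submodule (ZMod 2) F) : Set F).Finite := by
      rw [hset]
      exact (Set.finite_singleton _).insert _ |>.insert _ |>.insert _
    haveI : Fintype U := hfin.fintype
    have hcard4 : ((U : Submodule (ZMod 2) F) : Set F).ncard = 4 := by
      rw [hset]
      exact ncard_four (Ne.symm hu0) (Ne.symm hv0) (Ne.symm huv0) huv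
        (fun h => hv0 (by linear_combination -h))
        (fun h => hu0 (by linear_combination -h))
    have hcard : Fintype.card U = 4 := by
      have hn : Nat.card (((U : Submodule (ZMod 2) F) : Set F) : Type _) = 4 := by
        rw [Nat.card_coe_set_eq]; exact hcard4
      rw [← Nat.card_eq_fintype_card]; exact hn
    have := Module.card_eq_pow_finrank (K := ZMod 2) (V := U)
    rw [hcard, ZMod.card] at this
    have h4 : (2 : ℕ) ^ 2 = 2 ^ Module.finrank (ZMod 2) U := this
    exact (Nat.pow_right_injective (le_refl 2) h4).symm
  · rw [span_pair_set]
    have himg : (fun z => z + a) '' ({0, u, v, u + v} : Set F)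
        = {0 + a, u + a, v + a, (u + v) + a} := by
      simp only [Set.image_insert_eq, Set.image_singleton]
    rw [himg]
    have e0 : 0 + a = a := zero_add a
    have e1 : u + a = b := by rw [hu]; linear_combination a * h2
    have e2 : v + a = c := by rw [hv]; linear_combination a * h2
    have e3 : (u + v) + a = d := by rw [hu, hv]; linear_combination hsum + (a - d) * h2
    rw [e0, e1, e2, e3]

lemma sum_four [DecidableEq F] {a b c d : F} (hab : a ≠ b) (hac : a ≠ c) (had : a ≠ d)
    (hbc : b ≠ c) (hbd : b ≠ d) (hcd : c ≠ d) :
    ∑ x ∈ ({a, b, c, d} : Finset F), x = a + b + c + d := by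
  rw [Finset.sum_insert (by simp [hab, hac, had]),
    Finset.sum_insert (by simp [hbc, hbd]),
    Finset.sum_insert (by simp [hcd]), Finset.sum_singleton]
  ring


lemma flat_four_iff {a b c d : F} (hab : a ≠ b) (hac : a ≠ c) (had : a ≠ d)
    (hbc : b ≠ c) (hbd : b ≠ d) (hcd : c ≠ d) :
    IsFlat (ZMod 2) 2 ({a, b, c, d} : Set F) ↔ a + b + c + d = 0 := by
  classical
  have h2 : (2 : F) = 0 := two_eq_zero'
  constructor
  · intro h
    obtain ⟨x, u, v, hu0, hv0, huv, hX⟩ := flat_rep h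
    have huv0 : u + v ≠ 0 := fun h => huv (by linear_combination h - v * h2)
    have d12 : x ≠ u + x := fun h => hu0 (by linear_combination -h)
    have d13 : x ≠ v + x := fun h => hv0 (by linear_combination -h)
    have d14 : x ≠ u + v + x := fun h => huv0 (by linear_combination -h)
    have d23 : u + x ≠ v + x := fun h => huv (by linear_combination h)
    have d24 : u + x ≠ u + v + x := fun h => hv0 (by linear_combination -h)
    have d34 : v + x ≠ u + v + x := fun h => hu0 (by linear_combination -h)
    have hfin : ({a, b, c, d} : Finset F) = {x, u + x, v + x, u + v + x} :=
      Finset.coe_injective (by simpa using hX)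
    have := sum_four hab hac had hbc hbd hcd
    rw [hfin, sum_four d12 d13 d14 d23 d24 d34] at this
    rw [← this]
    linear_combination (u + v + 2 * x) * h2
  · intro hsum
    exact flat_of_four hab hac hbc hsum


lemma no_flat_without_zero {a b c d : F} (ha : a ≠ 0) (hb : b ≠ 0) (hc : c ≠ 0) (hd : d ≠ 0)
    (hab : a ≠ b) (hac : a ≠ c) (hbc : b ≠ c)
    (hsum : a + b + c + d = 0) (hinv : a⁻¹ + b⁻¹ + c⁻¹ + d⁻¹ = 0) : False := by
  have h2 : (2 : F) = 0 := two_eq_zero'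
  have hd' : d = a + b + c := by linear_combination hsum - (a + b + c) * h2
  subst hd'
  field_simp at hinv
  have key : (a + b) * (a + c) * (b + c) = 0 := by linear_combination hinv - a * b * c * h2
  rcases mul_eq_zero.mp key with h | h
  · rcases mul_eq_zero.mp h with h | h
    · exact hab (by linear_combination h - b * h2)
    · exact hac (by linear_combination h - c * h2)
  · exact hbc (by linear_combination h - c * h2)

lemma case_zero {p q r : F} (hp : p ≠ 0) (hq : q ≠ 0) (hr : r ≠ 0)
    (hpq : p ≠ q) (hsum : p + q + r = 0) (hinv : p⁻¹ + q⁻¹ + r⁻¹ = 0) :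
    ∃ b ω : F, b ≠ 0 ∧ ω ^ 2 + ω + 1 = 0 ∧
      ({0, p, q, r} : Set F) = {0, b, ω * b, ω ^ 2 * b} := by
  have h2 : (2 : F) = 0 := two_eq_zero'
  have hr' : r = p + q := by linear_combination hsum - (p + q) * h2
  subst hr'
  field_simp at hinv
  have key : p ^ 2 + p * q + q ^ 2 = 0 := by linear_combination hinv - p * q * h2
  refine ⟨q, p * q⁻¹, hq, ?_, ?_⟩
  · field_simp
    linear_combination key
  · have eq1 : p * q⁻¹ * q = p := by field_simp
    have eq2 : (p * q⁻¹) ^ 2 * q = p + q := by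
      field_simp
      linear_combination key - (p * q + q ^ 2) * h2
    rw [eq1, eq2]
    ext y
    simp only [Set.mem_insert_iff, Set.mem_singleton_iff]
    tauto


set_option maxHeartbeats 2000000 in
lemma mem_S_iff (X : Set F) :
    (IsFlat (ZMod 2) 2 X ∧ IsFlat (ZMod 2) 2 ((fun x : F => x⁻¹) '' X)) ↔
      ∃ b ω : F, b ≠ 0 ∧ ω ^ 2 + ω + 1 = 0 ∧ X = {0, b, ω * b, ω ^ 2 * b} := by
  have h2 : (2 : F) = 0 := two_eq_zero'
  constructor
  · rintro ⟨hX, hX'⟩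
    obtain ⟨x, u, v, hu0, hv0, huv, hXeq⟩ := flat_rep hX
    have huv0 : u + v ≠ 0 := fun h => huv (by linear_combination h - v * h2)
    have d12 : x ≠ u + x := fun h => hu0 (by linear_combination -h)
    have d13 : x ≠ v + x := fun h => hv0 (by linear_combination -h)
    have d14 : x ≠ u + v + x := fun h => huv0 (by linear_combination -h)
    have d23 : u + x ≠ v + x := fun h => huv (by linear_combination h)
    have d24 : u + x ≠ u + v + x := fun h => hv0 (by linear_combination -h)
    have d34 : v + x ≠ u + v + x := fun h => hu0 (by linear_combination -h)
    have hsum : x + (u + x) + (v + x) + (u + v + x) = 0 := by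
      linear_combination (u + v + 2 * x) * h2
    have himg : (fun x : F => x⁻¹) '' X = {x⁻¹, (u + x)⁻¹, (v + x)⁻¹, (u + v + x)⁻¹} := by
      rw [hXeq]; simp only [Set.image_insert_eq, Set.image_singleton]
    rw [himg] at hX'
    have hinv : x⁻¹ + (u + x)⁻¹ + (v + x)⁻¹ + (u + v + x)⁻¹ = 0 :=
      (flat_four_iff (fun h => d12 (inv_injective h)) (fun h => d13 (inv_injective h))
        (fun h => d14 (inv_injective h)) (fun h => d23 (inv_injective h))
        (fun h => d24 (inv_injective h)) (fun h => d34 (inv_injective h))).mp hX'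
    by_cases h0 : (0 : F) ∈ X
    · rw [hXeq] at h0
      simp only [Set.mem_insert_iff, Set.mem_singleton_iff] at h0
      rcases h0 with h0 | h0 | h0 | h0
      · -- 0 = x
        have hz : x⁻¹ = 0 := by rw [← h0]; exact inv_zero
        obtain ⟨b, ω, hb, hω, hset⟩ := case_zero
          (p := u + x) (q := v + x) (r := u + v + x)
          (fun h => d12 (h0.symm.trans h.symm)) (fun h => d13 (h0.symm.trans h.symm))
          (fun h => d14 (h0.symm.trans h.symm)) d23
          (by linear_combination hsum + h0) (by linear_combination hinv - hz)
        refine ⟨b, ω, hb, hω, ?_⟩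
        rw [hXeq, ← hset, ← h0]
        all_goals (ext y; simp only [Set.mem_insert_iff, Set.mem_singleton_iff]; tauto)
      · -- 0 = u + x
        have hz : (u + x)⁻¹ = 0 := by rw [← h0]; exact inv_zero
        obtain ⟨b, ω, hb, hω, hset⟩ := case_zero
          (p := x) (q := v + x) (r := u + v + x)
          (fun h => d12 (h.trans h0)) (fun h => d23 (h0.symm.trans h.symm))
          (fun h => d24 (h0.symm.trans h.symm)) d13
          (by linear_combination hsum + h0) (by linear_combination hinv - hz)
        refine ⟨b, ω, hb, hω, ?_⟩
        rw [hXeq, ← hset, ← h0]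
        all_goals (ext y; simp only [Set.mem_insert_iff, Set.mem_singleton_iff]; tauto)
      · -- 0 = v + x
        have hz : (v + x)⁻¹ = 0 := by rw [← h0]; exact inv_zero
        obtain ⟨b, ω, hb, hω, hset⟩ := case_zero
          (p := x) (q := u + x) (r := u + v + x)
          (fun h => d13 (h.trans h0)) (fun h => d23 (h.trans h0))
          (fun h => d34 (h0.symm.trans h.symm)) d12
          (by linear_combination hsum + h0) (by linear_combination hinv - hz)
        refine ⟨b, ω, hb, hω, ?_⟩
        rw [hXeq, ← hset, ← h0]
        all_goals (ext y; simp only [Set.mem_insert_iff, Set.mem_singleton_iff]; tauto)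
      · -- 0 = u + v + x
        have hz : (u + v + x)⁻¹ = 0 := by rw [← h0]; exact inv_zero
        obtain ⟨b, ω, hb, hω, hset⟩ := case_zero
          (p := x) (q := u + x) (r := v + x)
          (fun h => d14 (h.trans h0)) (fun h => d24 (h.trans h0))
          (fun h => d34 (h.trans h0)) d12
          (by linear_combination hsum + h0) (by linear_combination hinv - hz)
        refine ⟨b, ω, hb, hω, ?_⟩
        rw [hXeq, ← hset, ← h0]
        all_goals (ext y; simp only [Set.mem_insert_iff, Set.mem_singleton_iff]; tauto)
    · exfalso
      have hmem : ∀ y ∈ X, y ≠ 0 := fun y hy h => h0 (h ▸ hy)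
      exact no_flat_without_zero
        (hmem x (by rw [hXeq]; exact Or.inl rfl))
        (hmem (u + x) (by rw [hXeq]; exact Or.inr (Or.inl rfl)))
        (hmem (v + x) (by rw [hXeq]; exact Or.inr (Or.inr (Or.inl rfl))))
        (hmem (u + v + x) (by rw [hXeq]; exact Or.inr (Or.inr (Or.inr rfl))))
        d12 d13 d23 hsum hinv
  · rintro ⟨b, ω, hb, hω, rfl⟩
    have hω0 : ω ≠ 0 := by
      intro h; rw [h] at hω; simpa using hω
    have hω1 : ω ≠ 1 := by
      intro h; rw [h] at hω
      exact one_ne_zero ((by linear_combination hω - h2) : (1:F) = 0)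
    have hω21 : ω ^ 2 ≠ 1 := by
      intro h
      have h1 : (ω + 1) ^ 2 = 0 := by linear_combination h + (ω + 1) * h2
      have h3 := pow_eq_zero_iff (n := 2) (by norm_num) |>.mp h1
      exact hω1 (by linear_combination h3 - h2)
    have hω2ω : ω ^ 2 ≠ ω := by
      intro h
      have h' : ω * (ω - 1) = 0 := by linear_combination h
      rcases mul_eq_zero.mp h' with h'' | h''
      · exact hω0 h''
      · exact hω1 (by linear_combination h'')
    have hω3 : ω ^ 3 = 1 := by linear_combination (ω - 1) * hω
    have d01 : (0 : F) ≠ b := Ne.symm hb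
    have d02 : (0 : F) ≠ ω * b := Ne.symm (mul_ne_zero hω0 hb)
    have d03 : (0 : F) ≠ ω ^ 2 * b := Ne.symm (mul_ne_zero (pow_ne_zero 2 hω0) hb)
    have d12' : b ≠ ω * b := fun h => hω1 (mul_right_cancel₀ hb (by linear_combination h)).symm
    have d13' : b ≠ ω ^ 2 * b := fun h =>
      hω21 (mul_right_cancel₀ hb (by linear_combination h)).symm
    have d23' : ω * b ≠ ω ^ 2 * b := fun h =>
      hω2ω (mul_right_cancel₀ hb (by linear_combination h)).symm
    constructor
    · rw [flat_four_iff d01 d02 d03 d12' d13' d23']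
      linear_combination b * hω
    · have himg : (fun x : F => x⁻¹) '' ({0, b, ω * b, ω ^ 2 * b} : Set F)
          = {(0:F)⁻¹, b⁻¹, (ω * b)⁻¹, (ω ^ 2 * b)⁻¹} := by
        simp only [Set.image_insert_eq, Set.image_singleton]
      rw [himg, inv_zero]
      have j01 : (0 : F) ≠ b⁻¹ := Ne.symm (inv_ne_zero hb)
      have j02 : (0 : F) ≠ (ω * b)⁻¹ := Ne.symm (inv_ne_zero (mul_ne_zero hω0 hb))
      have j03 : (0 : F) ≠ (ω ^ 2 * b)⁻¹ :=
        Ne.symm (inv_ne_zero (mul_ne_zero (pow_ne_zero 2 hω0) hb))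
      have j12 : b⁻¹ ≠ (ω * b)⁻¹ := fun h => d12' (inv_injective h)
      have j13 : b⁻¹ ≠ (ω ^ 2 * b)⁻¹ := fun h => d13' (inv_injective h)
      have j23 : (ω * b)⁻¹ ≠ (ω ^ 2 * b)⁻¹ := fun h => d23' (inv_injective h)
      rw [flat_four_iff j01 j02 j03 j12 j13 j23]
      field_simp
      linear_combination hω


end Alg

lemma three_dvd_iff (n : ℕ) : 3 ∣ 2 ^ n - 1 ↔ Even n := by
  have h1 : 1 ≤ 2 ^ n := Nat.one_le_two_pow
  rw [← ZMod.natCast_eq_zero_iff]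
  push_cast [Nat.cast_sub h1]
  have h2 : (2 : ZMod 3) = -1 := by decide
  rcases Nat.even_or_odd n with he | ho
  · simp only [he, iff_true]
    push_cast
    rw [h2, he.neg_one_pow]
    ring
  · constructor
    · intro h
      push_cast at h
      rw [h2, ho.neg_one_pow] at h
      exact absurd h (by decide)
    · intro h
      exact absurd h (Nat.not_even_iff_odd.mpr ho)

variable (n : ℕ)

lemma gf_card (hn : 2 ≤ n) : Nat.card (GaloisField 2 n) = 2 ^ n :=
  GaloisField.card 2 n (by omega)

lemma gf_card_units (hn : 2 ≤ n) : Nat.card (GaloisField 2 n)ˣ = 2 ^ n - 1 := by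
  rw [Nat.card_units, gf_card n hn]

lemma exists_omega (hn : 2 ≤ n) (he : Even n) :
    ∃ ω : GaloisField 2 n, ω ^ 2 + ω + 1 = 0 := by
  haveI : Fact (Nat.Prime 3) := ⟨by norm_num⟩
  haveI : Fintype (GaloisField 2 n)ˣ := Fintype.ofFinite _
  have hdvd : 3 ∣ Fintype.card (GaloisField 2 n)ˣ := by
    rw [← Nat.card_eq_fintype_card, gf_card_units n hn]
    exact (three_dvd_iff n).mpr he
  obtain ⟨ζ, hζ⟩ := exists_prime_orderOf_dvd_card 3 hdvd
  refine ⟨(ζ : GaloisField 2 n), ?_⟩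
  have hζ3 : ζ ^ 3 = 1 := by rw [← hζ]; exact pow_orderOf_eq_one ζ
  have hζ1 : ζ ≠ 1 := by
    intro h; rw [h, orderOf_one] at hζ; norm_num at hζ
  have hv3 : (ζ : GaloisField 2 n) ^ 3 = 1 := by
    have := congrArg Units.val hζ3
    push_cast at this
    exact this
  have hv1 : (ζ : GaloisField 2 n) ≠ 1 := fun h => hζ1 (Units.ext h)
  have hfact : ((ζ : GaloisField 2 n) - 1) * ((ζ : GaloisField 2 n) ^ 2 + ζ + 1) = 0 := by
    linear_combination hv3
  rcases mul_eq_zero.mp hfact with h | h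
  · exact absurd (by linear_combination h) hv1
  · exact h

lemma even_of_omega (hn : 2 ≤ n) (ω : GaloisField 2 n) (hω : ω ^ 2 + ω + 1 = 0) :
    Even n := by
  haveI : Fact (Nat.Prime 3) := ⟨by norm_num⟩
  have h2 : (2 : GaloisField 2 n) = 0 := two_eq_zero'
  have hω0 : ω ≠ 0 := by intro h; rw [h] at hω; simp at hω
  have hω1 : ω ≠ 1 := by
    intro h; rw [h] at hω
    exact one_ne_zero ((by linear_combination hω - h2) : (1 : GaloisField 2 n) = 0)
  have hω3 : ω ^ 3 = 1 := by linear_combination (ω - 1) * hω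
  set u : (GaloisField 2 n)ˣ := Units.mk0 ω hω0 with hu
  have hu3 : u ^ 3 = 1 := by
    ext; push_cast [hu]; exact hω3
  have hu1 : u ≠ 1 := by
    intro h
    exact hω1 (by rw [show ω = (u : GaloisField 2 n) from rfl, h]; rfl)
  have hord : orderOf u = 3 := orderOf_eq_prime hu3 hu1
  have := orderOf_dvd_natCard u
  rw [hord, gf_card_units n hn] at this
  exact (three_dvd_iff n).mp this

lemma pow_eq_inv (hn : 2 ≤ n) :
    (fun x : GaloisField 2 n => x ^ (2 ^ n - 2)) = (fun x : GaloisField 2 n => x⁻¹) := by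
  have h4 : 4 ≤ 2 ^ n := by
    calc (4 : ℕ) = 2 ^ 2 := by norm_num
    _ ≤ 2 ^ n := Nat.pow_le_pow_right (by norm_num) hn
  funext x
  by_cases hx : x = 0
  · rw [hx, zero_pow (by omega), inv_zero]
  · have h1 : x ^ (2 ^ n - 1) = 1 := by
      have hcu := gf_card_units n hn
      have := pow_card_eq_one' (G := (GaloisField 2 n)ˣ) (x := Units.mk0 x hx)
      rw [hcu] at this
      have hval := congrArg Units.val this
      push_cast at hval
      exact hval
    have hmul : x ^ (2 ^ n - 2) * x = 1 := by
      rw [← pow_succ]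
      have : 2 ^ n - 2 + 1 = 2 ^ n - 1 := by omega
      rw [this, h1]
    exact eq_inv_of_mul_eq_one_left hmul


section Count

variable {F : Type*} [Field F] [CharP F 2] [Algebra (ZMod 2) F]
variable [Fintype F] [DecidableEq F] [DecidableEq (Set F)]
variable (ω : F)

lemma omega_facts (hω : ω ^ 2 + ω + 1 = 0) : ω ≠ 0 ∧ ω ≠ 1 ∧ ω ^ 2 ≠ 1 ∧ ω ^ 2 ≠ ω ∧ ω ^ 3 = 1 := by
  have h2 : (2 : F) = 0 := two_eq_zero'
  have hω0 : ω ≠ 0 := by intro h; rw [h] at hω; simp at hω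
  have hω1 : ω ≠ 1 := by
    intro h; rw [h] at hω
    exact one_ne_zero ((by linear_combination hω - h2) : (1 : F) = 0)
  have hω21 : ω ^ 2 ≠ 1 := by
    intro h
    have h1 : (ω + 1) ^ 2 = 0 := by linear_combination h + (ω + 1) * h2
    have h3 := pow_eq_zero_iff (n := 2) (by norm_num) |>.mp h1
    exact hω1 (by linear_combination h3 - h2)
  have hω2ω : ω ^ 2 ≠ ω := by
    intro h
    have h' : ω * (ω - 1) = 0 := by linear_combination h
    rcases mul_eq_zero.mp h' with h'' | h''
    · exact hω0 h''
    · exact hω1 (by linear_combination h'')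
  exact ⟨hω0, hω1, hω21, hω2ω, by linear_combination (ω - 1) * hω⟩

lemma S_eq (hω : ω ^ 2 + ω + 1 = 0) :
    {X : Set F | IsFlat (ZMod 2) 2 X ∧ IsFlat (ZMod 2) 2 ((fun x : F => x⁻¹) '' X)} =
      ↑((Finset.univ.erase (0 : F)).image
        (fun b => ({0, b, ω * b, ω ^ 2 * b} : Set F))) := by
  obtain ⟨hω0, hω1, hω21, hω2ω, hω3⟩ := omega_facts ω hω
  ext X
  simp only [Set.mem_setOf_eq, Finset.coe_image, Set.mem_image, Finset.mem_coe,
    Finset.mem_erase, Finset.mem_univ, and_true]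
  rw [mem_S_iff]
  constructor
  · rintro ⟨b, ω', hb, hω', rfl⟩
    refine ⟨b, hb, ?_⟩
    have hfac : (ω' - ω) * (ω' - ω ^ 2) = 0 := by
      linear_combination hω' + (ω - 1 - ω') * hω
    rcases mul_eq_zero.mp hfac with h | h
    · have hh : ω' = ω := by linear_combination h
      rw [hh]
    · have hh : ω' = ω ^ 2 := by linear_combination h
      have e1 : (ω ^ 2) ^ 2 * b = ω * b := by linear_combination b * ω * hω3
      rw [hh, e1]
      ext y
      simp only [Set.mem_insert_iff, Set.mem_singleton_iff]
      tauto
  · rintro ⟨b, hb, rfl⟩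
    exact ⟨b, ω, hb, hω, rfl⟩

lemma count_S (hω : ω ^ 2 + ω + 1 = 0) :
    3 * ((Finset.univ.erase (0 : F)).image
        (fun b => ({0, b, ω * b, ω ^ 2 * b} : Set F))).card = Fintype.card F - 1 := by
  obtain ⟨hω0, hω1, hω21, hω2ω, hω3⟩ := omega_facts ω hω
  set T : Finset F := Finset.univ.erase (0 : F) with hTdef
  set g : F → Set F := fun b => ({0, b, ω * b, ω ^ 2 * b} : Set F) with hg
  have hT : T.card = Fintype.card F - 1 := by
    rw [hTdef, Finset.card_erase_of_mem (Finset.mem_univ 0), Finset.card_univ]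
  have hfib : T.card = ∑ X ∈ T.image g, (T.filter (fun b => g b = X)).card :=
    Finset.card_eq_sum_card_fiberwise (fun b hb => Finset.mem_image_of_mem g hb)
  have hcount : ∀ X ∈ T.image g, (T.filter (fun b => g b = X)).card = 3 := by
    intro X hX
    obtain ⟨b, hb, rfl⟩ := Finset.mem_image.mp hX
    have hb0 : b ≠ 0 := (Finset.mem_erase.mp hb).1
    have d12 : b ≠ ω * b := fun h => hω1 (mul_right_cancel₀ hb0 (by linear_combination h)).symm
    have d13 : b ≠ ω ^ 2 * b := fun h =>
      hω21 (mul_right_cancel₀ hb0 (by linear_combination h)).symm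
    have d23 : ω * b ≠ ω ^ 2 * b := fun h =>
      hω2ω (mul_right_cancel₀ hb0 (by linear_combination h)).symm
    have hfil : T.filter (fun c => g c = g b) = {b, ω * b, ω ^ 2 * b} := by
      ext c
      simp only [Finset.mem_filter, hTdef, Finset.mem_erase, Finset.mem_univ, true_and,
        and_true, Finset.mem_insert, Finset.mem_singleton]
      constructor
      · rintro ⟨hc0, hgc⟩
        have hcmem : c ∈ g b := by
          rw [← hgc, hg]
          right; left; rfl
        rw [hg] at hcmem
        simp only [Set.mem_insert_iff, Set.mem_singleton_iff] at hcmem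
        tauto
      · rintro (rfl | rfl | rfl)
        · exact ⟨hb0, rfl⟩
        · refine ⟨mul_ne_zero hω0 hb0, ?_⟩
          rw [hg]
          have e1 : ω * (ω * b) = ω ^ 2 * b := by ring
          have e2 : ω ^ 2 * (ω * b) = b := by linear_combination b * hω3
          show ({0, ω * b, ω * (ω * b), ω ^ 2 * (ω * b)} : Set F) = {0, b, ω * b, ω ^ 2 * b}
          rw [e1, e2]
          ext y; simp only [Set.mem_insert_iff, Set.mem_singleton_iff]; tauto
        · refine ⟨mul_ne_zero (pow_ne_zero 2 hω0) hb0, ?_⟩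
          rw [hg]
          have e1 : ω * (ω ^ 2 * b) = b := by linear_combination b * hω3
          have e2 : ω ^ 2 * (ω ^ 2 * b) = ω * b := by linear_combination ω * b * hω3
          show ({0, ω ^ 2 * b, ω * (ω ^ 2 * b), ω ^ 2 * (ω ^ 2 * b)} : Set F)
            = {0, b, ω * b, ω ^ 2 * b}
          rw [e1, e2]
          ext y; simp only [Set.mem_insert_iff, Set.mem_singleton_iff]; tauto
    rw [hfil, Finset.card_insert_of_notMem (by simp [d12, d13]),
      Finset.card_insert_of_notMem (by simp [d23]), Finset.card_singleton]
  calc 3 * (T.image g).card = ∑ _X ∈ T.image g, 3 := by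
        rw [Finset.sum_const, smul_eq_mul, mul_comm]
    _ = ∑ X ∈ T.image g, (T.filter (fun b => g b = X)).card :=
        Finset.sum_congr rfl (fun X hX => (hcount X hX).symm)
    _ = T.card := hfib.symm
    _ = Fintype.card F - 1 := hT

end Count

end TwoAffAux

/-- The 2-affinity of the inversion map `x ↦ x^(2^n - 2)` on `𝔽_{2^n}` (an `n`-dimensional
vector space over `𝔽₂`) is `0` if `n` is odd and `(2^n - 1)/3` if `n` is even. -/
theorem two_affinity_inversion (n : ℕ) (hn : 2 ≤ n) :
    (Odd n →
      affinity (ZMod 2) 2 (fun x : GaloisField 2 n => x ^ (2 ^ n - 2)) = 0) ∧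
    (Even n →
      3 * affinity (ZMod 2) 2 (fun x : GaloisField 2 n => x ^ (2 ^ n - 2)) = 2 ^ n - 1) := by
  classical
  have hf := TwoAffAux.pow_eq_inv n hn
  have haff : affinity (ZMod 2) 2 (fun x : GaloisField 2 n => x ^ (2 ^ n - 2)) =
      {X : Set (GaloisField 2 n) | IsFlat (ZMod 2) 2 X ∧
        IsFlat (ZMod 2) 2 ((fun x : GaloisField 2 n => x⁻¹) '' X)}.ncard := by
    unfold affinity
    rw [hf]
  constructor
  · intro hodd
    rw [haff]
    have hempty : {X : Set (GaloisField 2 n) | IsFlat (ZMod 2) 2 X ∧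
        IsFlat (ZMod 2) 2 ((fun x : GaloisField 2 n => x⁻¹) '' X)} = ∅ := by
      apply Set.eq_empty_iff_forall_notMem.mpr
      intro X hX
      obtain ⟨b, ω, hb, hω, hXeq⟩ := (TwoAffAux.mem_S_iff X).mp hX
      exact (Nat.not_even_iff_odd.mpr hodd) (TwoAffAux.even_of_omega n hn ω hω)
    rw [hempty, Set.ncard_empty]
  · intro heven
    obtain ⟨ω, hω⟩ := TwoAffAux.exists_omega n hn heven
    haveI : Fintype (GaloisField 2 n) := Fintype.ofFinite _
    rw [haff, TwoAffAux.S_eq ω hω, Set.ncard_coe_finset, TwoAffAux.count_S ω hω,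
      ← Nat.card_eq_fintype_card, TwoAffAux.gf_card n hn]
end

section
/- Let q, m, n be integers with n > m such that one of the following holds: (a) q = 2 and m = 3; (b) q = 3 and m = 2; (c) q ≥ 4 and m = 1. Then Σ_{k=m}^{n−1} q^{2(n−k)} · ([n choose k]_q)^2 · (q^k)! · (q^n − q^k)! < (q^n)! . -/
/-- The Gaussian (`q`-)binomial coefficient
`[n choose k]_q = ((qⁿ−1)(qⁿ⁻¹−1)⋯(qⁿ⁻ᵏ⁺¹−1)) / ((qᵏ−1)(qᵏ⁻¹−1)⋯(q−1))`, as a rational. -/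
noncomputable def gaussBinomial (q n k : ℕ) : ℚ :=
  (∏ i ∈ Finset.range k, ((q : ℚ) ^ (n - i) - 1)) /
    (∏ i ∈ Finset.range k, ((q : ℚ) ^ (i + 1) - 1))

/-!
Dividing the `k`-th summand by `(qⁿ)!` leaves `termRatio q n k = q^{2(n-k)} [n k]_q² / C(qⁿ, qᵏ)`.
From `[n k]_q ≤ q^{k(n-k)} / (1 - 1/q - 1/q²)` and `C(qⁿ, qᵏ) ≥ q^{(n-k)qᵏ}` this ratio is at most
`q^{2k+2-qᵏ} / (1 - 1/q - 1/q²)²`, a bound that at least halves from `k` to `k + 1` once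
`qᵏ ≥ 2k + 2`; so the ratios sum to at most twice the first bound. That settles `q = 3`; for `q ≥ 4`
the term `k = 1`, and for `q = 2` the term `k = 3`, need sharper lower bounds for the binomial
coefficient, and `q = 2, n = 4` is a single explicit term.
-/

open Finset Nat

namespace Nat

theorem pow_mul_descFactorial_le_descFactorial_mul {d : ℕ} (hd : 1 ≤ d) (m s : ℕ) :
    d ^ s * m.descFactorial s ≤ (d * m).descFactorial s := by
  induction s with
  | zero => simp
  | succ s ih =>
    rw [descFactorial_succ, descFactorial_succ, pow_succ]
    have hfactor : d * (m - s) ≤ d * m - s := by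
      rw [Nat.mul_sub]; exact Nat.sub_le_sub_left (Nat.le_mul_of_pos_left s hd) _
    calc d ^ s * d * ((m - s) * m.descFactorial s)
        = d * (m - s) * (d ^ s * m.descFactorial s) := by ring
      _ ≤ (d * m - s) * (d * m).descFactorial s := Nat.mul_le_mul hfactor ih

theorem pow_le_choose_mul {d : ℕ} (hd : 1 ≤ d) (r : ℕ) : d ^ r ≤ (d * r).choose r := by
  have h := pow_mul_descFactorial_le_descFactorial_mul hd r r
  rw [descFactorial_self, descFactorial_eq_factorial_mul_choose, mul_comm] at h
  exact Nat.le_of_mul_le_mul_left h r.factorial_pos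

theorem pow_pred_mul_le_choose_mul {d r : ℕ} (hd : 1 ≤ d) (hr : 1 ≤ r) :
    d ^ (r - 1) * (d * r - (r - 1)) ≤ (d * r).choose r := by
  obtain ⟨s, rfl⟩ := Nat.exists_eq_add_of_le' hr
  have h := pow_mul_descFactorial_le_descFactorial_mul hd (s + 1) s
  have hfac : (s + 1).descFactorial s = (s + 1)! := by
    simpa [descFactorial_succ] using descFactorial_self (s + 1)
  rw [hfac] at h
  have key : (s + 1)! * (d ^ s * (d * (s + 1) - s)) ≤ (s + 1)! * (d * (s + 1)).choose (s + 1) := by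
    rw [← descFactorial_eq_factorial_mul_choose, descFactorial_succ]
    calc (s + 1)! * (d ^ s * (d * (s + 1) - s))
        = (d * (s + 1) - s) * (d ^ s * (s + 1)!) := by ring
      _ ≤ _ := Nat.mul_le_mul_left _ h
  simpa using Nat.le_of_mul_le_mul_left key (s + 1).factorial_pos

end Nat

-- A truncation of Euler's pentagonal series `∏ (1 - xⁱ) = 1 - x - x² + x⁵ + x⁷ - ⋯`.
theorem one_sub_sub_sq_le_prod_one_sub_pow {R : Type*} [CommRing R] [LinearOrder R]
    [IsStrictOrderedRing R] {x : R} (hx₀ : 0 ≤ x) (hx₁ : x ≤ 1) (k : ℕ) :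
    1 - x - x ^ 2 ≤ ∏ i ∈ range k, (1 - x ^ (i + 1)) := by
  have key : ∀ k : ℕ, 1 - x - x ^ 2 + x ^ (k + 2) ≤ ∏ i ∈ range (k + 1), (1 - x ^ (i + 1)) := by
    intro k
    induction k with
    | zero => simp
    | succ k ih =>
      rw [prod_range_succ]
      have hy₀ : 0 ≤ x ^ (k + 2) := by positivity
      have hy₁ : x ^ (k + 2) ≤ 1 := pow_le_one₀ hx₀ hx₁
      have hy₂ : x ^ (k + 2) ≤ x ^ 2 := pow_le_pow_of_le_one hx₀ hx₁ (by omega)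
      calc 1 - x - x ^ 2 + x ^ (k + 1 + 2)
          ≤ (1 - x - x ^ 2 + x ^ (k + 2)) * (1 - x ^ (k + 2)) := by
            rw [show x ^ (k + 1 + 2) = x * x ^ (k + 2) by ring]
            nlinarith [mul_nonneg hy₀ (sub_nonneg.2 hy₂)]
        _ ≤ _ := mul_le_mul_of_nonneg_right ih (by linarith)
  rcases k with _ | k
  · simp only [range_zero, prod_empty]
    nlinarith
  · exact (le_add_of_nonneg_right (pow_nonneg hx₀ _)).trans (key k)

theorem gaussBinomial_mul_prod_le {q : ℕ} (hq : 2 ≤ q) {n k : ℕ} (hkn : k ≤ n) :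
    gaussBinomial q n k * ∏ i ∈ range k, (1 - (q : ℚ)⁻¹ ^ (i + 1)) ≤ (q : ℚ) ^ (k * (n - k)) := by
  have hq₁ : (1 : ℚ) < q := by exact_mod_cast hq
  have hfactor_pos : ∀ i : ℕ, 0 < 1 - (q : ℚ)⁻¹ ^ (i + 1) := fun i ↦
    sub_pos.2 (pow_lt_one₀ (by positivity) (inv_lt_one_of_one_lt₀ hq₁) (by omega))
  have hden : ∏ i ∈ range k, ((q : ℚ) ^ (i + 1) - 1)
      = (∏ i ∈ range k, (q : ℚ) ^ (i + 1)) * ∏ i ∈ range k, (1 - (q : ℚ)⁻¹ ^ (i + 1)) := by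
    rw [← prod_mul_distrib]
    refine prod_congr rfl fun i _ ↦ ?_
    rw [mul_sub, mul_one, inv_pow, mul_inv_cancel₀ (by positivity)]
  have hreflect : ∏ i ∈ range k, (q : ℚ) ^ (k - i) = ∏ i ∈ range k, (q : ℚ) ^ (i + 1) := by
    rw [← prod_range_reflect]
    exact prod_congr rfl fun i hi ↦ by rw [mem_range] at hi; congr 1; omega
  have hnum : ∏ i ∈ range k, ((q : ℚ) ^ (n - i) - 1)
      ≤ (q : ℚ) ^ (k * (n - k)) * ∏ i ∈ range k, (q : ℚ) ^ (i + 1) :=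
    calc ∏ i ∈ range k, ((q : ℚ) ^ (n - i) - 1)
        ≤ ∏ i ∈ range k, ((q : ℚ) ^ (n - k) * (q : ℚ) ^ (k - i)) := by
          refine prod_le_prod (fun i _ ↦ sub_nonneg.2 (one_le_pow₀ hq₁.le)) fun i hi ↦ ?_
          rw [mem_range] at hi
          rw [← pow_add, show n - k + (k - i) = n - i by omega]
          linarith
      _ = (q : ℚ) ^ (k * (n - k)) * ∏ i ∈ range k, (q : ℚ) ^ (i + 1) := by
          rw [prod_mul_distrib, prod_const, card_range, hreflect, ← pow_mul, mul_comm (n - k)]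
  have hprod_pos := prod_pos fun i (_ : i ∈ range k) ↦ hfactor_pos i
  rw [gaussBinomial, hden, div_mul_eq_mul_div, mul_div_mul_right _ _ hprod_pos.ne',
    div_le_iff₀ (by positivity)]
  exact hnum

theorem gaussBinomial_nonneg {q : ℕ} (hq : 1 ≤ q) (n k : ℕ) : 0 ≤ gaussBinomial q n k := by
  have hq₁ : (1 : ℚ) ≤ q := by exact_mod_cast hq
  exact div_nonneg (prod_nonneg fun i _ ↦ sub_nonneg.2 (one_le_pow₀ hq₁))
    (prod_nonneg fun i _ ↦ sub_nonneg.2 (one_le_pow₀ hq₁))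

noncomputable def termRatio (q n k : ℕ) : ℚ :=
  (q : ℚ) ^ (2 * (n - k)) * gaussBinomial q n k ^ 2 / ((q ^ n).choose (q ^ k) : ℚ)

theorem termRatio_mul_factorial {q n k : ℕ} (hq : 1 ≤ q) (hkn : k ≤ n) :
    termRatio q n k * ((q ^ n)! : ℚ)
      = (q : ℚ) ^ (2 * (n - k)) * gaussBinomial q n k ^ 2 * ((q ^ k)! : ℚ)
          * ((q ^ n - q ^ k)! : ℚ) := by
  have hpow : q ^ k ≤ q ^ n := Nat.pow_le_pow_right hq hkn
  have hchoose : ((q ^ n).choose (q ^ k) : ℚ) ≠ 0 := by exact_mod_cast (Nat.choose_pos hpow).ne'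
  rw [termRatio, ← Nat.choose_mul_factorial_mul_factorial hpow]
  push_cast
  field_simp

theorem termRatio_le {q n k : ℕ} (hq : 2 ≤ q) (hkn : k < n) (hk : 2 * k + 2 ≤ q ^ k) :
    termRatio q n k
      ≤ (q : ℚ) ^ (2 * k + 2) / (q : ℚ) ^ q ^ k / (1 - (q : ℚ)⁻¹ - (q : ℚ)⁻¹ ^ 2) ^ 2 := by
  have hq₁ : (1 : ℚ) ≤ q := by exact_mod_cast (by omega : 1 ≤ q)
  have hx : (q : ℚ)⁻¹ ≤ 1 / 2 := by
    rw [one_div]; exact inv_anti₀ (by norm_num) (by exact_mod_cast hq)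
  have hx₀ : 0 ≤ (q : ℚ)⁻¹ := by positivity
  have ha : 1 / 4 ≤ 1 - (q : ℚ)⁻¹ - (q : ℚ)⁻¹ ^ 2 := by nlinarith
  have hG : gaussBinomial q n k * (1 - (q : ℚ)⁻¹ - (q : ℚ)⁻¹ ^ 2) ≤ (q : ℚ) ^ (k * (n - k)) :=
    (mul_le_mul_of_nonneg_left (one_sub_sub_sq_le_prod_one_sub_pow hx₀ (by linarith) k)
      (gaussBinomial_nonneg (by omega) n k)).trans (gaussBinomial_mul_prod_le hq hkn.le)
  have hC : (q : ℚ) ^ ((n - k) * q ^ k) ≤ ((q ^ n).choose (q ^ k) : ℚ) := by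
    have h := Nat.pow_le_choose_mul (Nat.one_le_pow (n - k) q (by omega)) (q ^ k)
    rw [← pow_add, Nat.sub_add_cancel hkn.le, ← pow_mul] at h
    exact_mod_cast h
  have hexp : (n - k) * (2 * k + 2) + q ^ k ≤ 2 * k + 2 + (n - k) * q ^ k := by
    obtain ⟨d, hd⟩ : ∃ d, n - k = d + 1 := ⟨n - k - 1, by omega⟩
    rw [hd]; nlinarith
  rw [le_div_iff₀ (by positivity), termRatio, div_mul_eq_mul_div,
    div_le_div_iff₀ ((pow_pos (by positivity) _).trans_le hC) (by positivity)]
  calc (q : ℚ) ^ (2 * (n - k)) * gaussBinomial q n k ^ 2 * (1 - (q : ℚ)⁻¹ - (q : ℚ)⁻¹ ^ 2) ^ 2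
        * (q : ℚ) ^ q ^ k
      = (q : ℚ) ^ (2 * (n - k)) * (gaussBinomial q n k * (1 - (q : ℚ)⁻¹ - (q : ℚ)⁻¹ ^ 2)) ^ 2
        * (q : ℚ) ^ q ^ k := by ring
    _ ≤ (q : ℚ) ^ (2 * (n - k)) * ((q : ℚ) ^ (k * (n - k))) ^ 2 * (q : ℚ) ^ q ^ k := by
      gcongr
      exact mul_nonneg (gaussBinomial_nonneg (by omega) n k) (by linarith)
    _ = (q : ℚ) ^ ((n - k) * (2 * k + 2) + q ^ k) := by
      rw [← pow_mul, ← pow_add, ← pow_add]; congr 1; ring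
    _ ≤ (q : ℚ) ^ (2 * k + 2 + (n - k) * q ^ k) := pow_le_pow_right₀ hq₁ hexp
    _ ≤ (q : ℚ) ^ (2 * k + 2) * ((q ^ n).choose (q ^ k) : ℚ) := by
      rw [pow_add]; gcongr

theorem sum_Icc_le_two_mul_of_two_mul_succ_le {R : Type*} [CommRing R] [LinearOrder R]
    [IsStrictOrderedRing R] {f : ℕ → R} (hf : ∀ k, 0 ≤ f k) {a : ℕ}
    (hhalf : ∀ k, a ≤ k → 2 * f (k + 1) ≤ f k) (b : ℕ) : ∑ k ∈ Icc a b, f k ≤ 2 * f a := by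
  have key : ∀ b, a ≤ b → ∑ k ∈ Icc a b, f k + f b ≤ 2 * f a := by
    intro b hab
    induction b, hab using Nat.le_induction with
    | base => simp; linarith
    | succ b hab ih =>
      rw [sum_Icc_succ_top (by omega)]
      linarith [hhalf b hab]
  rcases le_or_gt a b with hab | hab
  · linarith [key b hab, hf b]
  · rw [Icc_eq_empty_of_lt hab, sum_empty]
    linarith [hf a]

theorem sum_termRatio_Icc_le {q k₀ : ℕ} (hq : 2 ≤ q) (hk₀ : 2 * k₀ + 2 ≤ q ^ k₀) (n : ℕ) :
    ∑ k ∈ Icc k₀ (n - 1), termRatio q n k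
      ≤ 2 * ((q : ℚ) ^ (2 * k₀ + 2) / (q : ℚ) ^ q ^ k₀) / (1 - (q : ℚ)⁻¹ - (q : ℚ)⁻¹ ^ 2) ^ 2 := by
  have hq₁ : (1 : ℚ) ≤ q := by exact_mod_cast (by omega : 1 ≤ q)
  have hgrowth : ∀ k, k₀ ≤ k → 2 * k + 2 ≤ q ^ k := by
    intro k hk
    induction k, hk using Nat.le_induction with
    | base => exact hk₀
    | succ k _ ih => rw [pow_succ]; nlinarith
  have hk₀_pos : 0 < k₀ := Nat.pos_of_ne_zero (by rintro rfl; simp at hk₀)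
  have hhalf : ∀ k, k₀ ≤ k → 2 * ((q : ℚ) ^ (2 * (k + 1) + 2) / (q : ℚ) ^ q ^ (k + 1))
      ≤ (q : ℚ) ^ (2 * k + 2) / (q : ℚ) ^ q ^ k := by
    intro k hk
    have hexp : 2 * k + 5 + q ^ k ≤ 2 * k + 2 + q ^ (k + 1) := by
      have := hgrowth k hk
      rw [pow_succ]; nlinarith
    rw [mul_div_assoc', div_le_div_iff₀ (by positivity) (by positivity)]
    calc 2 * (q : ℚ) ^ (2 * (k + 1) + 2) * (q : ℚ) ^ q ^ k
        ≤ (q : ℚ) * (q : ℚ) ^ (2 * (k + 1) + 2) * (q : ℚ) ^ q ^ k := by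
          gcongr; exact_mod_cast hq
      _ = (q : ℚ) ^ (2 * k + 5 + q ^ k) := by ring
      _ ≤ (q : ℚ) ^ (2 * k + 2 + q ^ (k + 1)) := pow_le_pow_right₀ hq₁ hexp
      _ = _ := pow_add _ _ _
  calc ∑ k ∈ Icc k₀ (n - 1), termRatio q n k
      ≤ ∑ k ∈ Icc k₀ (n - 1), (q : ℚ) ^ (2 * k + 2) / (q : ℚ) ^ q ^ k
          / (1 - (q : ℚ)⁻¹ - (q : ℚ)⁻¹ ^ 2) ^ 2 := by
        refine sum_le_sum fun k hk ↦ ?_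
        rw [mem_Icc] at hk
        exact termRatio_le hq (by omega) (hgrowth k hk.1)
    _ = (∑ k ∈ Icc k₀ (n - 1), (q : ℚ) ^ (2 * k + 2) / (q : ℚ) ^ q ^ k)
          / (1 - (q : ℚ)⁻¹ - (q : ℚ)⁻¹ ^ 2) ^ 2 := (sum_div ..).symm
    _ ≤ _ := by
        gcongr
        exact sum_Icc_le_two_mul_of_two_mul_succ_le (fun k ↦ by positivity) hhalf _

theorem termRatio_one_le {q n : ℕ} (hq : 4 ≤ q) (hn : 2 ≤ n) : termRatio q n 1 ≤ 16 / 27 := by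
  set u : ℚ := (q : ℚ) ^ (n - 1) with hu
  have hq₄ : (4 : ℚ) ≤ q := by exact_mod_cast hq
  have hu₄ : 4 ≤ u := hq₄.trans (le_self_pow₀ (by linarith) (by omega))
  have hqn : (q : ℚ) ^ n = u * q := by rw [hu, ← pow_succ, Nat.sub_add_cancel (by omega)]
  have hG : gaussBinomial q n 1 * ((q : ℚ) - 1) ≤ u * q := by
    have h := gaussBinomial_mul_prod_le (by omega : 2 ≤ q) (by omega : 1 ≤ n)
    rw [prod_range_one, zero_add, pow_one, one_mul] at h
    have hq₀ : (q : ℚ) ≠ 0 := by positivity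
    calc gaussBinomial q n 1 * ((q : ℚ) - 1) = gaussBinomial q n 1 * (1 - (q : ℚ)⁻¹) * q := by
          field_simp
      _ ≤ u * q := by gcongr
  have hC : u ^ 3 * (3 / 4 * u * q) ≤ ((q ^ n).choose q : ℚ) := by
    have h := Nat.pow_pred_mul_le_choose_mul (Nat.one_le_pow (n - 1) q (by omega))
      (by omega : 1 ≤ q)
    rw [← pow_succ, Nat.sub_add_cancel (by omega : 1 ≤ n)] at h
    have hle : q - 1 ≤ q ^ n := (Nat.sub_le q 1).trans (Nat.le_self_pow (by omega) q)
    have h' : u ^ (q - 1) * (u * q - ((q : ℚ) - 1)) ≤ ((q ^ n).choose q : ℚ) := by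
      have := (Nat.cast_le (α := ℚ)).2 h
      push_cast [Nat.cast_sub hle, Nat.cast_sub (by omega : 1 ≤ q)] at this
      rwa [hqn] at this
    refine le_trans (mul_le_mul (pow_le_pow_right₀ (by linarith) (by omega)) ?_ (by positivity)
      (by positivity)) h'
    nlinarith
  have hCpos : (0 : ℚ) < ((q ^ n).choose q : ℚ) := lt_of_lt_of_le (by positivity) hC
  rw [termRatio, pow_one, div_le_iff₀ hCpos, show 2 * (n - 1) = (n - 1) * 2 by ring, pow_mul, ← hu]
  have hG₀ : 0 ≤ gaussBinomial q n 1 * ((q : ℚ) - 1) :=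
    mul_nonneg (gaussBinomial_nonneg (by omega) n 1) (by linarith)
  have hq₁ : (0 : ℚ) < ((q : ℚ) - 1) ^ 2 := by nlinarith
  refine le_of_mul_le_mul_right ?_ hq₁
  calc u ^ 2 * gaussBinomial q n 1 ^ 2 * ((q : ℚ) - 1) ^ 2
      = u ^ 2 * (gaussBinomial q n 1 * ((q : ℚ) - 1)) ^ 2 := by ring
    _ ≤ u ^ 2 * (u * q) ^ 2 := by gcongr
    _ ≤ 16 / 27 * (u ^ 3 * (3 / 4 * u * q)) * ((q : ℚ) - 1) ^ 2 := by
        have : 9 * (q : ℚ) ≤ 4 * ((q : ℚ) - 1) ^ 2 := by nlinarith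
        have hu₀ : 0 ≤ u ^ 4 * q := by positivity
        nlinarith [mul_le_mul_of_nonneg_left this hu₀]
    _ ≤ 16 / 27 * ((q ^ n).choose q : ℚ) * ((q : ℚ) - 1) ^ 2 := by gcongr

theorem termRatio_two_three_le {n : ℕ} (hn : 5 ≤ n) : termRatio 2 n 3 ≤ 1 / 4 := by
  set u : ℚ := 2 ^ (n - 3) with hu
  have hu₄ : 4 ≤ u := by
    rw [hu]; exact le_trans (by norm_num) (pow_le_pow_right₀ (by norm_num : (1 : ℚ) ≤ 2)
      (by omega : 2 ≤ n - 3))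
  have hpow : (2 : ℚ) ^ n = 8 * u := by
    rw [hu, show (8 : ℚ) = 2 ^ 3 by norm_num, ← pow_add, show 3 + (n - 3) = n by omega]
  have hG : gaussBinomial 2 n 3 * (21 / 64) ≤ u ^ 3 := by
    have h := gaussBinomial_mul_prod_le le_rfl (by omega : 3 ≤ n)
    norm_num [prod_range_succ] at h
    rwa [hu, ← pow_mul, mul_comm (n - 3)]
  have hC : (25 / 4 * u) ^ 8 / 40320 ≤ ((2 ^ n).choose (2 ^ 3) : ℚ) := by
    have h := Nat.pow_le_choose (α := ℚ) 8 (2 ^ n)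
    have h8 : 8 ≤ 2 ^ n := le_trans (by norm_num) (Nat.pow_le_pow_right two_pos (by omega : 3 ≤ n))
    have hcast : ((2 ^ n + 1 - 8 : ℕ) : ℚ) = 8 * u - 7 := by
      rw [show 2 ^ n + 1 - 8 = 2 ^ n - 7 by omega, Nat.cast_sub (by omega)]
      push_cast
      rw [hpow]
    rw [hcast] at h
    refine le_trans ?_ (by simpa [Nat.factorial] using h)
    gcongr
    linarith
  have hCpos : (0 : ℚ) < ((2 ^ n).choose (2 ^ 3) : ℚ) := lt_of_lt_of_le (by positivity) hC
  have hG' : gaussBinomial 2 n 3 ≤ 64 / 21 * u ^ 3 := by linarith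
  have hfirst : ((2 : ℕ) : ℚ) ^ (2 * (n - 3)) = u ^ 2 := by rw [hu, ← pow_mul, mul_comm]; norm_num
  have hbound : u ^ 2 * gaussBinomial 2 n 3 ^ 2 ≤ 1 / 4 * ((2 ^ n).choose (2 ^ 3) : ℚ) :=
    calc u ^ 2 * gaussBinomial 2 n 3 ^ 2 ≤ u ^ 2 * (64 / 21 * u ^ 3) ^ 2 := by
          gcongr
          exact gaussBinomial_nonneg one_le_two n 3
      _ ≤ 1 / 4 * ((25 / 4 * u) ^ 8 / 40320) := by
          have : 0 ≤ u ^ 8 := by positivity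
          nlinarith
      _ ≤ 1 / 4 * ((2 ^ n).choose (2 ^ 3) : ℚ) := by gcongr
  rw [termRatio, hfirst]
  exact (div_le_iff₀ hCpos).2 hbound

theorem termRatio_two_four_three : termRatio 2 4 3 = 10 / 143 := by
  have hchoose : (16 : ℕ).choose 8 = 12870 := by decide
  norm_num [termRatio, gaussBinomial, prod_range_succ, hchoose]

theorem sum_termRatio_two_lt_one {n : ℕ} (hn : 3 < n) :
    ∑ k ∈ Icc 3 (n - 1), termRatio 2 n k < 1 := by
  rcases (show n = 4 ∨ 5 ≤ n by omega) with rfl | hn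
  · norm_num [termRatio_two_four_three]
  rw [← insert_Icc_add_one_left_eq_Icc (by omega), sum_insert (by simp)]
  norm_num only
  have htail := sum_termRatio_Icc_le (q := 2) (k₀ := 4) le_rfl (by norm_num) n
  norm_num at htail
  linarith [termRatio_two_three_le hn]

theorem sum_termRatio_three_lt_one (n : ℕ) : ∑ k ∈ Icc 2 (n - 1), termRatio 3 n k < 1 :=
  (sum_termRatio_Icc_le (q := 3) (k₀ := 2) (by norm_num) (by norm_num) n).trans_lt (by norm_num)

theorem sum_termRatio_lt_one_of_four_le {q n : ℕ} (hq : 4 ≤ q) (hn : 1 < n) :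
    ∑ k ∈ Icc 1 (n - 1), termRatio q n k < 1 := by
  have hq₄ : (4 : ℚ) ≤ q := by exact_mod_cast hq
  have hx : (q : ℚ)⁻¹ ≤ 1 / 4 := by rw [one_div]; exact inv_anti₀ (by norm_num) hq₄
  have hx₀ : 0 ≤ (q : ℚ)⁻¹ := by positivity
  have ha : 11 / 16 ≤ 1 - (q : ℚ)⁻¹ - (q : ℚ)⁻¹ ^ 2 := by nlinarith
  have hweight : (q : ℚ) ^ (2 * 2 + 2) / (q : ℚ) ^ q ^ 2 ≤ 1 / 16 := by
    have hexp : 2 * 2 + 2 + 2 ≤ q ^ 2 := by nlinarith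
    rw [div_le_div_iff₀ (by positivity) (by norm_num), one_mul]
    calc (q : ℚ) ^ (2 * 2 + 2) * 16 ≤ (q : ℚ) ^ (2 * 2 + 2) * (q : ℚ) ^ 2 := by gcongr; nlinarith
      _ ≤ (q : ℚ) ^ q ^ 2 := by
          rw [← pow_add]; exact pow_le_pow_right₀ (by linarith) hexp
  have htail := sum_termRatio_Icc_le (by omega : 2 ≤ q) (k₀ := 2) (by nlinarith) n
  have htail' : 2 * ((q : ℚ) ^ (2 * 2 + 2) / (q : ℚ) ^ q ^ 2) / (1 - (q : ℚ)⁻¹ - (q : ℚ)⁻¹ ^ 2) ^ 2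
      ≤ 2 * (1 / 16) / (11 / 16) ^ 2 := by gcongr
  rw [← insert_Icc_add_one_left_eq_Icc (by omega), sum_insert (by simp)]
  norm_num only
  linarith [termRatio_one_le hq hn]

/-- If `n > m` and either `q = 2, m = 3`, or `q = 3, m = 2`, or `q ≥ 4, m = 1`, then
`Σ_{k=m}^{n−1} q^{2(n−k)} [n choose k]_q² (q^k)! (q^n − q^k)! < (q^n)!`. -/
theorem sum_gaussBinomial_factorial_lt (q m n : ℕ) (hmn : m < n)
    (h : (q = 2 ∧ m = 3) ∨ (q = 3 ∧ m = 2) ∨ (4 ≤ q ∧ m = 1)) :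
    ∑ k ∈ Finset.Icc m (n - 1),
        (q : ℚ) ^ (2 * (n - k)) * (gaussBinomial q n k) ^ 2 *
          (Nat.factorial (q ^ k) : ℚ) * (Nat.factorial (q ^ n - q ^ k) : ℚ)
      < (Nat.factorial (q ^ n) : ℚ) := by
  have hq : 1 ≤ q := by omega
  rw [← sum_congr rfl fun k hk ↦ termRatio_mul_factorial hq (by rw [mem_Icc] at hk; omega),
    ← sum_mul]
  refine mul_lt_of_lt_one_left (by positivity) ?_
  rcases h with ⟨rfl, rfl⟩ | ⟨rfl, rfl⟩ | ⟨hq, rfl⟩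
  · exact sum_termRatio_two_lt_one hmn
  · exact sum_termRatio_three_lt_one n
  · exact sum_termRatio_lt_one_of_four_le hq hmn
end

section
/- Let q and k be integers with q ≥ 4 and k ≥ 1, or q = 3 and k ≥ 2, or q = 2 and k ≥ 3. Then ([k+1 choose k]_q)^2 / C(q^{k+1}, q^k) < 1 / q^{q^k − k}, where C(a, b) denotes the ordinary binomial coefficient; equivalently, ([k+1 choose k]_q)^2 · q^{q^k − k} < C(q^{k+1}, q^k). -/
lemma aux1 (q M j : ℕ) (hq : 1 ≤ q) (hj : j ≤ M) :
    q ^ j * Nat.choose (q * M - j) (M - j) ≤ Nat.choose (q * M) M := by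
  induction j with
  | zero => simp
  | succ j ih =>
    have hj' : j ≤ M := Nat.le_of_succ_le hj
    refine le_trans ?_ (ih hj')
    rw [pow_succ, mul_assoc]
    refine Nat.mul_le_mul_left _ ?_
    have hjM : j < M := hj
    have hMq : M ≤ q * M := Nat.le_mul_of_pos_left _ hq
    have hqj : j ≤ q * j := Nat.le_mul_of_pos_left _ hq
    have hm : q * (M - j) + q * j = q * M := by
      rw [← Nat.mul_add]; congr 1; omega
    set n := q * M - j with hn
    set r := M - j with hr
    have hr1 : 1 ≤ r := by omega
    have hn1 : 1 ≤ n := by omega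
    have heq1 : q * M - (j + 1) = n - 1 := by omega
    have heq2 : M - (j + 1) = r - 1 := by omega
    rw [heq1, heq2]
    have key := Nat.add_one_mul_choose_eq (n - 1) (r - 1)
    simp only [Nat.succ_eq_add_one, Nat.sub_add_cancel hn1, Nat.sub_add_cancel hr1] at key
    have hqr : q * r ≤ n := by omega
    have : q * Nat.choose (n - 1) (r - 1) * r ≤ Nat.choose n r * r := by
      calc q * Nat.choose (n - 1) (r - 1) * r
          = q * r * Nat.choose (n - 1) (r - 1) := by ring
        _ ≤ n * Nat.choose (n - 1) (r - 1) := Nat.mul_le_mul_right _ hqr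
        _ = Nat.choose n r * r := key
    exact Nat.le_of_mul_le_mul_right this hr1

lemma helper3 (a : ℕ) : 6 * Nat.choose (a + 3) 3 = (a + 3) * (a + 2) * (a + 1) := by
  have h1 := Nat.add_one_mul_choose_eq (a + 2) 2
  have h2 := Nat.add_one_mul_choose_eq (a + 1) 1
  simp only [Nat.succ_eq_add_one, Nat.choose_one_right] at h1 h2
  calc 6 * Nat.choose (a + 3) 3 = 2 * (Nat.choose (a + 3) 3 * 3) := by ring
    _ = 2 * ((a + 3) * Nat.choose (a + 2) 2) := by rw [h1]
    _ = (a + 3) * (Nat.choose (a + 2) 2 * 2) := by ring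
    _ = (a + 3) * ((a + 2) * (a + 1)) := by rw [← h2]
    _ = (a + 3) * (a + 2) * (a + 1) := by ring

lemma key_ineq (q k : ℕ)
    (h : (5 ≤ q ∧ 1 ≤ k) ∨ (q = 4 ∧ 2 ≤ k) ∨ (q = 3 ∧ 2 ≤ k) ∨ (q = 2 ∧ 4 ≤ k)) :
    6 * q ^ 5 ≤ (q - 1) ^ 5 * q ^ (2 * k) := by
  rcases h with ⟨h5, hk⟩ | ⟨rfl, hk⟩ | ⟨rfl, hk⟩ | ⟨rfl, hk⟩
  · have hq2 : q ^ 2 ≤ q ^ (2 * k) := Nat.pow_le_pow_right (by omega) (by omega)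
    have hr : q - 1 + 1 = q := by omega
    set r := q - 1 with hrdef
    have hr4 : 4 ≤ r := by omega
    have hcube : 6 * q ^ 3 ≤ r ^ 5 := by
      rw [← hr]
      zify
      have h0 : (4:ℤ) ≤ (r:ℤ) := by exact_mod_cast hr4
      have hrn : (0:ℤ) ≤ (r:ℤ) := by positivity
      nlinarith [mul_nonneg (mul_nonneg (sub_nonneg.2 h0) hrn) hrn,
        mul_nonneg (sub_nonneg.2 h0) hrn,
        mul_nonneg (mul_nonneg (mul_nonneg (sub_nonneg.2 h0) hrn) hrn) (mul_nonneg hrn hrn)]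
    calc 6 * q ^ 5 = 6 * q ^ 3 * q ^ 2 := by ring
      _ ≤ r ^ 5 * q ^ 2 := Nat.mul_le_mul_right _ hcube
      _ ≤ r ^ 5 * q ^ (2 * k) := Nat.mul_le_mul_left _ hq2
  · calc 6 * 4 ^ 5 ≤ 3 ^ 5 * 4 ^ (2 * 2) := by norm_num
      _ ≤ 3 ^ 5 * 4 ^ (2 * k) := Nat.mul_le_mul_left _ (Nat.pow_le_pow_right (by norm_num) (by omega))
  · calc 6 * 3 ^ 5 ≤ 2 ^ 5 * 3 ^ (2 * 2) := by norm_num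
      _ ≤ 2 ^ 5 * 3 ^ (2 * k) := Nat.mul_le_mul_left _ (Nat.pow_le_pow_right (by norm_num) (by omega))
  · calc 6 * 2 ^ 5 ≤ 1 ^ 5 * 2 ^ (2 * 4) := by norm_num
      _ ≤ 1 ^ 5 * 2 ^ (2 * k) := Nat.mul_le_mul_left _ (Nat.pow_le_pow_right (by norm_num) (by omega))

lemma main_nat (q k : ℕ)
    (h : (5 ≤ q ∧ 1 ≤ k) ∨ (q = 4 ∧ 2 ≤ k) ∨ (q = 3 ∧ 2 ≤ k) ∨ (q = 2 ∧ 4 ≤ k)) :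
    q ^ (q ^ k + k + 2) ≤ (q - 1) ^ 2 * Nat.choose (q ^ (k + 1)) (q ^ k) := by
  have hq2 : 2 ≤ q := by rcases h with ⟨h5, _⟩ | ⟨rfl, _⟩ | ⟨rfl, _⟩ | ⟨rfl, _⟩ <;> omega
  set M := q ^ k with hM
  have hM3 : 3 ≤ M := by
    have hq : q ≤ q ^ k :=
      Nat.le_self_pow (by rcases h with ⟨_, hk⟩ | ⟨_, hk⟩ | ⟨_, hk⟩ | ⟨_, hk⟩ <;> omega) q
    rcases h with ⟨h5, hk⟩ | ⟨rfl, hk⟩ | ⟨rfl, hk⟩ | ⟨rfl, hk⟩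
    · omega
    · omega
    · omega
    · calc 3 ≤ 2 ^ 4 := by norm_num
        _ ≤ 2 ^ k := Nat.pow_le_pow_right (by norm_num) hk
  have hqk1 : q ^ (k + 1) = q * M := by rw [hM, pow_succ, mul_comm]
  rw [hqk1]
  have h1 := aux1 q M (M - 3) (by omega) (by omega)
  have hMq : M ≤ q * M := Nat.le_mul_of_pos_left _ (by omega)
  have hsub1 : M - (M - 3) = 3 := by omega
  have hsub2 : q * M - (M - 3) = (q - 1) * M + 3 := by
    have := Nat.sub_one_mul q M
    omega
  rw [hsub1, hsub2] at h1
  have h3 : ((q - 1) * M) ^ 3 ≤ 6 * Nat.choose ((q - 1) * M + 3) 3 := by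
    rw [helper3]; nlinarith [Nat.zero_le ((q - 1) * M)]
  have key := key_ineq q k h
  have e1 : q ^ (M + k + 2) = q ^ (M - 3) * q ^ k * q ^ 5 := by
    rw [← pow_add, ← pow_add]; congr 1; omega
  have e2 : q ^ k * q ^ (2 * k) = M ^ 3 := by
    rw [← pow_add, hM, ← pow_mul]; congr 1; omega
  have e3 : (q - 1) ^ 3 * M ^ 3 = ((q - 1) * M) ^ 3 := (mul_pow _ _ 3).symm
  have hs : 6 * q ^ (M + k + 2) ≤ 6 * ((q - 1) ^ 2 * Nat.choose (q * M) M) := by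
    calc 6 * q ^ (M + k + 2) = q ^ (M - 3) * q ^ k * (6 * q ^ 5) := by rw [e1]; ring
      _ ≤ q ^ (M - 3) * q ^ k * ((q - 1) ^ 5 * q ^ (2 * k)) := Nat.mul_le_mul_left _ key
      _ = (q - 1) ^ 2 * q ^ (M - 3) * ((q - 1) ^ 3 * (q ^ k * q ^ (2 * k))) := by ring
      _ = (q - 1) ^ 2 * q ^ (M - 3) * (((q - 1) * M) ^ 3) := by rw [e2, e3]
      _ ≤ (q - 1) ^ 2 * q ^ (M - 3) * (6 * Nat.choose ((q - 1) * M + 3) 3) :=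
          Nat.mul_le_mul_left _ h3
      _ = 6 * ((q - 1) ^ 2 * (q ^ (M - 3) * Nat.choose ((q - 1) * M + 3) 3)) := by ring
      _ ≤ 6 * ((q - 1) ^ 2 * Nat.choose (q * M) M) :=
          Nat.mul_le_mul_left _ (Nat.mul_le_mul_left _ h1)
  omega

lemma gauss_eq (q k : ℕ) (hq : 2 ≤ q) :
    gaussBinomial q (k + 1) k = ((q : ℚ) ^ (k + 1) - 1) / ((q : ℚ) - 1) := by
  have hq1 : (1 : ℚ) < (q : ℚ) := by exact_mod_cast hq
  have hpos : ∀ j : ℕ, 0 < (q : ℚ) ^ (j + 1) - 1 := fun j => by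
    have := one_lt_pow₀ hq1 (by omega : j + 1 ≠ 0)
    linarith
  have hne : ∀ j : ℕ, ((q : ℚ) ^ (j + 1) - 1) ≠ 0 := fun j => ne_of_gt (hpos j)
  unfold gaussBinomial
  have hnum : ∏ i ∈ Finset.range k, ((q : ℚ) ^ (k + 1 - i) - 1)
      = ∏ i ∈ Finset.range k, ((q : ℚ) ^ (i + 2) - 1) := by
    rw [← Finset.prod_range_reflect (fun j => ((q : ℚ) ^ (k + 1 - j) - 1)) k]
    apply Finset.prod_congr rfl
    intro i hi
    simp only [Finset.mem_range] at hi
    have : k + 1 - (k - 1 - i) = i + 2 := by omega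
    rw [this]
  rw [hnum]
  have hden_ne : (∏ i ∈ Finset.range k, ((q : ℚ) ^ (i + 1) - 1)) ≠ 0 :=
    Finset.prod_ne_zero_iff.2 fun i _ => hne i
  have hq_ne : ((q : ℚ) - 1) ≠ 0 := by linarith
  rw [div_eq_div_iff hden_ne hq_ne]
  calc (∏ i ∈ Finset.range k, ((q : ℚ) ^ (i + 2) - 1)) * ((q : ℚ) - 1)
      = (∏ i ∈ Finset.range k, ((q : ℚ) ^ (i + 1 + 1) - 1)) * ((q : ℚ) ^ (0 + 1) - 1) := by
        norm_num
    _ = ∏ i ∈ Finset.range (k + 1), ((q : ℚ) ^ (i + 1) - 1) :=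
        (Finset.prod_range_succ' (fun i => ((q : ℚ) ^ (i + 1) - 1)) k).symm
    _ = (∏ i ∈ Finset.range k, ((q : ℚ) ^ (i + 1) - 1)) * ((q : ℚ) ^ (k + 1) - 1) :=
        Finset.prod_range_succ _ k
    _ = ((q : ℚ) ^ (k + 1) - 1) * ∏ i ∈ Finset.range k, ((q : ℚ) ^ (i + 1) - 1) := mul_comm _ _

/-- If `q ≥ 4, k ≥ 1`, or `q = 3, k ≥ 2`, or `q = 2, k ≥ 3`, then
`[k+1 choose k]_q² / C(q^{k+1}, q^k) < 1 / q^{q^k − k}`. -/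
theorem gaussBinomial_sq_div_choose_lt (q k : ℕ)
    (h : (4 ≤ q ∧ 1 ≤ k) ∨ (q = 3 ∧ 2 ≤ k) ∨ (q = 2 ∧ 3 ≤ k)) :
    (gaussBinomial q (k + 1) k) ^ 2 / (Nat.choose (q ^ (k + 1)) (q ^ k) : ℚ)
      < 1 / (q : ℚ) ^ (q ^ k - k) := by
  have hq2 : 2 ≤ q := by rcases h with ⟨h4, _⟩ | ⟨rfl, _⟩ | ⟨rfl, _⟩ <;> omega
  have hk1 : 1 ≤ k := by rcases h with ⟨_, hk⟩ | ⟨_, hk⟩ | ⟨_, hk⟩ <;> omega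
  have hq1 : (1 : ℚ) < (q : ℚ) := by exact_mod_cast hq2
  have hA := gauss_eq q k hq2
  have hC : 0 < (Nat.choose (q ^ (k + 1)) (q ^ k) : ℚ) := by
    have : 0 < Nat.choose (q ^ (k + 1)) (q ^ k) :=
      Nat.choose_pos (Nat.pow_le_pow_right (by omega) (by omega))
    exact_mod_cast this
  have hqp : (0 : ℚ) < (q : ℚ) ^ (q ^ k - k) := by positivity
  rw [div_lt_div_iff₀ hC hqp, one_mul, hA]
  have hkq : k ≤ q ^ k := le_of_lt (Nat.lt_pow_self (by omega))
  have h' : (q = 4 ∧ k = 1) ∨ (q = 2 ∧ k = 3) ∨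
      ((5 ≤ q ∧ 1 ≤ k) ∨ (q = 4 ∧ 2 ≤ k) ∨ (q = 3 ∧ 2 ≤ k) ∨ (q = 2 ∧ 4 ≤ k)) := by omega
  rcases h' with ⟨rfl, rfl⟩ | ⟨rfl, rfl⟩ | hgen
  · have hch : Nat.choose (4 ^ (1 + 1)) (4 ^ 1) = 1820 := by decide
    rw [hch]
    norm_num
  · have hch : Nat.choose (2 ^ (3 + 1)) (2 ^ 3) = 12870 := by decide
    rw [hch]
    norm_num
  · have hq1' : (0 : ℚ) < (q : ℚ) - 1 := by linarith
    have hAlt : ((q : ℚ) ^ (k + 1) - 1) / ((q : ℚ) - 1)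
        < (q : ℚ) ^ (k + 1) / ((q : ℚ) - 1) := by
      apply div_lt_div_of_pos_right ?_ hq1'
      linarith [pow_pos (by linarith : (0:ℚ) < (q:ℚ)) (k + 1)]
    have hAnn : 0 ≤ ((q : ℚ) ^ (k + 1) - 1) / ((q : ℚ) - 1) := by
      apply div_nonneg ?_ (le_of_lt hq1')
      have := one_le_pow₀ (le_of_lt hq1) (n := k + 1)
      linarith
    have hA2 : (((q : ℚ) ^ (k + 1) - 1) / ((q : ℚ) - 1)) ^ 2
        < ((q : ℚ) ^ (k + 1) / ((q : ℚ) - 1)) ^ 2 := by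
      exact pow_lt_pow_left₀ hAlt hAnn (by norm_num)
    have hnatQ : ((q : ℚ)) ^ (q ^ k + k + 2)
        ≤ ((q : ℚ) - 1) ^ 2 * (Nat.choose (q ^ (k + 1)) (q ^ k) : ℚ) := by
      have hn := main_nat q k hgen
      calc ((q : ℚ)) ^ (q ^ k + k + 2) = ((q ^ (q ^ k + k + 2) : ℕ) : ℚ) := by push_cast; ring
        _ ≤ (((q - 1) ^ 2 * Nat.choose (q ^ (k + 1)) (q ^ k) : ℕ) : ℚ) := Nat.cast_le.2 hn
        _ = ((q : ℚ) - 1) ^ 2 * (Nat.choose (q ^ (k + 1)) (q ^ k) : ℚ) := by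
            push_cast [Nat.cast_sub (by omega : 1 ≤ q)]; ring
    have eexp : (q : ℚ) ^ (k + 1) * (q : ℚ) ^ (k + 1) * (q : ℚ) ^ (q ^ k - k)
        = (q : ℚ) ^ (q ^ k + k + 2) := by
      rw [← pow_add, ← pow_add]; congr 1; omega
    calc (((q : ℚ) ^ (k + 1) - 1) / ((q : ℚ) - 1)) ^ 2 * (q : ℚ) ^ (q ^ k - k)
        < ((q : ℚ) ^ (k + 1) / ((q : ℚ) - 1)) ^ 2 * (q : ℚ) ^ (q ^ k - k) :=
          mul_lt_mul_of_pos_right hA2 hqp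
      _ = (q : ℚ) ^ (q ^ k + k + 2) / ((q : ℚ) - 1) ^ 2 := by
          rw [div_pow, ← eexp]; ring
      _ ≤ (Nat.choose (q ^ (k + 1)) (q ^ k) : ℚ) := by
          rw [div_le_iff₀ (by positivity : (0:ℚ) < ((q : ℚ) - 1) ^ 2)]
          linarith [hnatQ]
end

section
/- Let q, n, k be integers with q ≥ 4 and n > k ≥ 1, or q = 3 and n > k ≥ 2, or q = 2 and n > k ≥ 3. Then ([n choose k]_q)^2 / C(q^n, q^k) < 1 / q^{(n−k)(q^k − 2k) + k}; equivalently, ([n choose k]_q)^2 · q^{(n−k)(q^k − 2k) + k} < C(q^n, q^k). -/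
/-!
Put `m = q^k` and induct on `n ≥ k + 1`. Passing from `n` to `n + 1` multiplies `[n choose k]_q`
by `(M - 1)/(q^{n+1-k} - 1) < m M/(M - m)`, where `M = q^{n+1}`, and the power of `q` by
`q^{m-2k}`; so the left side grows by less than `q^m (M/(M - m))^2`. The binomial coefficient grows
by `C(M, m)/C(M/q, m) = q^m ∏_{j<m} (M - j)/(M - qj) ≥ q^m (1 + (q-1)m(m-1)/(2M))`, which is enough
as soon as `(q-1)(m-1) ≥ 7` and `M ≥ 4m`. In the base case `n = k + 1` the claim reads
`(qm - 1)^2 q^m < (q-1)^2 m C(qm, m)`; since `C(qm, m) = ∏_{i ≤ m} ((q-1)m + i)/i` and every factor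
is at least `q`, keeping only the first four factors exactly leaves a polynomial inequality in
`q` and `m`.
-/

open Finset

theorem gaussBinomial_self {q : ℕ} (hq : 1 < q) (k : ℕ) : gaussBinomial q k k = 1 := by
  rw [gaussBinomial, div_eq_one_iff_eq]
  · rw [← prod_range_reflect]
    refine prod_congr rfl fun i hi => ?_
    rw [mem_range] at hi
    congr 2
    omega
  · refine prod_ne_zero_iff.mpr fun i _ => sub_ne_zero.mpr ?_
    exact_mod_cast (Nat.one_lt_pow i.succ_ne_zero hq).ne'

theorem gaussBinomial_succ_mul (q n k : ℕ) :
    gaussBinomial q (n + 1) k * ((q : ℚ) ^ (n + 1 - k) - 1)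
      = gaussBinomial q n k * ((q : ℚ) ^ (n + 1) - 1) := by
  have hnum : (∏ i ∈ range k, ((q : ℚ) ^ (n + 1 - i) - 1)) * ((q : ℚ) ^ (n + 1 - k) - 1)
      = (∏ i ∈ range k, ((q : ℚ) ^ (n - i) - 1)) * ((q : ℚ) ^ (n + 1) - 1) := by
    rw [← prod_range_succ (fun i => (q : ℚ) ^ (n + 1 - i) - 1), prod_range_succ']
    simp only [Nat.add_sub_add_right, Nat.sub_zero]
  simp only [gaussBinomial, div_mul_eq_mul_div, hnum]

theorem pow_mul_choose_le_choose {q a r m : ℕ} (hrm : r ≤ m) (hqa : (q - 1) * m ≤ a) :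
    q ^ (m - r) * (a + r).choose r ≤ (a + m).choose m := by
  induction m, hrm using Nat.le_induction with
  | base => simp
  | succ m hrm ih =>
    have hfactor : q * (m + 1) ≤ a + m + 1 := by
      rcases q with _ | q
      · simp
      · simp only [Nat.add_sub_cancel] at hqa; nlinarith
    refine Nat.le_of_mul_le_mul_right ?_ m.succ_pos
    calc q ^ (m + 1 - r) * (a + r).choose r * (m + 1)
        = q * (m + 1) * (q ^ (m - r) * (a + r).choose r) := by
          rw [Nat.sub_add_comm hrm, pow_succ]; ring
      _ ≤ (a + m + 1) * (a + m).choose m :=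
          Nat.mul_le_mul hfactor (ih (le_trans (Nat.mul_le_mul_left _ m.le_succ) hqa))
      _ = (a + (m + 1)).choose (m + 1) * (m + 1) := by
          rw [← add_assoc, Nat.add_one_mul_choose_eq]

theorem cast_add_four_choose_four (x : ℕ) :
    ((x + 4).choose 4 : ℚ) = (x + 1) * (x + 2) * (x + 3) * (x + 4) / 24 := by
  rw [Nat.cast_choose_eq_ascPochhammer_div]
  simp only [ascPochhammer_succ_eval, ascPochhammer_zero, Polynomial.eval_one, Nat.factorial]
  push_cast
  ring

theorem cast_choose_succ_right {N m : ℕ} (h : m ≤ N) :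
    (N.choose (m + 1) : ℚ) = N.choose m * (N - m) / (m + 1) := by
  have hchoose : ((N.choose (m + 1) * (m + 1) : ℕ) : ℚ) = (N.choose m * (N - m) : ℕ) :=
    congrArg _ (Nat.choose_succ_right_eq N m)
  push_cast [Nat.cast_sub h] at hchoose
  rw [eq_div_iff (by positivity), hchoose]

theorem pow_mul_choose_mul_le_mul_choose {q N m : ℕ} (hq : 1 ≤ q) (hmN : m ≤ N) :
    (q : ℚ) ^ m * N.choose m * (2 * (q * N) + (q - 1) * m * (m - 1))
      ≤ 2 * (q * N) * ((q * N).choose m : ℕ) := by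
  induction m with
  | zero => simp
  | succ m ih =>
    have hmN' : m ≤ N := by omega
    have hqN : m ≤ q * N := le_trans hmN' (Nat.le_mul_of_pos_left N hq)
    have hMm : (0 : ℚ) ≤ q * N - m := by rw [sub_nonneg]; exact_mod_cast hqN
    have hfactor : (q : ℚ) * (N - m) * (2 * (q * N) + (q - 1) * (m + 1) * m)
        ≤ (2 * (q * N) + (q - 1) * m * (m - 1)) * (q * N - m) := by
      have hslack : (2 * (q * N) + (q - 1) * m * (m - 1)) * (q * N - m)
          - (q : ℚ) * (N - m) * (2 * (q * N) + (q - 1) * (m + 1) * m)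
          = (q - 1) * m ^ 2 * ((q - 1) * m + q + 1) := by ring
      have hq1 : (0 : ℚ) ≤ q - 1 := by rw [sub_nonneg]; exact_mod_cast hq
      rw [← sub_nonneg, hslack]
      positivity
    have hrest : (0 : ℚ) ≤ q ^ m * N.choose m := by positivity
    rw [cast_choose_succ_right hmN', cast_choose_succ_right hqN, Nat.cast_mul]
    push_cast
    rw [← mul_div_assoc, ← mul_div_assoc, div_mul_eq_mul_div,
      div_le_div_iff_of_pos_right (by positivity)]
    calc (q : ℚ) ^ (m + 1) * (N.choose m * (N - m))
          * (2 * (q * N) + (q - 1) * (m + 1) * (m + 1 - 1))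
        = q ^ m * N.choose m * (q * (N - m) * (2 * (q * N) + (q - 1) * (m + 1) * m)) := by ring
      _ ≤ q ^ m * N.choose m * ((2 * (q * N) + (q - 1) * m * (m - 1)) * (q * N - m)) :=
          mul_le_mul_of_nonneg_left hfactor hrest
      _ = q ^ m * N.choose m * (2 * (q * N) + (q - 1) * m * (m - 1)) * (q * N - m) := by ring
      _ ≤ 2 * (q * N) * ((q * N).choose m) * (q * N - m) := by
          refine mul_le_mul_of_nonneg_right ?_ hMm
          exact_mod_cast ih hmN'
      _ = 2 * (q * N) * (((q * N).choose m) * (q * N - m)) := by ring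

theorem pow_mul_choose_mul_sq_le_sq_mul_choose {q m N : ℕ} (hqm : 7 ≤ (q - 1) * (m - 1))
    (hN : q * m ≤ N) :
    (q : ℚ) ^ m * N.choose m * (q * N) ^ 2 ≤ ((q : ℚ) * N - m) ^ 2 * ((q * N).choose m : ℕ) := by
  have hq : 2 ≤ q := by rcases q with _ | _ | q <;> simp_all
  have hm : 1 ≤ m := by rcases m with _ | m <;> simp_all
  have hmN : m ≤ N := le_trans (Nat.le_mul_of_pos_left m (by omega)) hN
  have hprod := pow_mul_choose_mul_le_mul_choose (by omega : 1 ≤ q) hmN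
  have hM : 4 * (m : ℚ) ≤ q * N := by
    have h4 : 4 * m ≤ q * N := calc
      4 * m = 2 * (2 * m) := by ring
      _ ≤ q * (q * m) := Nat.mul_le_mul hq (Nat.mul_le_mul_right m hq)
      _ ≤ q * N := Nat.mul_le_mul_left q hN
    exact_mod_cast h4
  set M : ℚ := q * N
  set a : ℚ := (q - 1) * (m - 1)
  have ha : 7 ≤ a := by
    have : ((7 : ℕ) : ℚ) ≤ ((q - 1) * (m - 1) : ℕ) := by exact_mod_cast hqm
    push_cast [Nat.cast_sub (by omega : 1 ≤ q), Nat.cast_sub hm] at this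
    exact this
  have hm0 : (0 : ℚ) ≤ m := m.cast_nonneg
  -- (M - m)² (2M + a m) - 2M³ = m (a - 7)(M - m)² + m (3M (M - 4m) + 7m²)
  have hcubic : 2 * M ^ 3 ≤ (M - m) ^ 2 * (2 * M + a * m) := by
    nlinarith [mul_nonneg (mul_nonneg hm0 (sub_nonneg.mpr ha)) (sq_nonneg (M - m)),
      mul_nonneg (mul_nonneg hm0 (by linarith : (0 : ℚ) ≤ M)) (sub_nonneg.mpr hM),
      pow_nonneg hm0 3]
  have hpos : 0 < 2 * M + a * m := by nlinarith
  refine le_of_mul_le_mul_right ?_ hpos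
  calc (q : ℚ) ^ m * N.choose m * M ^ 2 * (2 * M + a * m)
      = q ^ m * N.choose m * (2 * M + (q - 1) * m * (m - 1)) * M ^ 2 := by ring
    _ ≤ 2 * M * ((q * N).choose m : ℕ) * M ^ 2 := mul_le_mul_of_nonneg_right hprod (sq_nonneg M)
    _ = 2 * M ^ 3 * ((q * N).choose m : ℕ) := by ring
    _ ≤ (M - m) ^ 2 * (2 * M + a * m) * ((q * N).choose m : ℕ) :=
        mul_le_mul_of_nonneg_right hcubic (Nat.cast_nonneg _)
    _ = (M - m) ^ 2 * ((q * N).choose m : ℕ) * (2 * M + a * m) := by ring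

theorem sq_mul_pow_lt_mul_choose {q m : ℕ} (h : (2 ≤ q ∧ 8 ≤ m) ∨ (4 ≤ q ∧ q ≤ m)) :
    ((q : ℚ) * m - 1) ^ 2 * q ^ m < (q - 1) ^ 2 * m * ((q * m).choose m : ℕ) := by
  have hq : 1 ≤ q := by omega
  have hm : 4 ≤ m := by omega
  have hpoly : 24 * (q : ℚ) ^ 4 * (q * m - 1) ^ 2 < m * (q - 1) ^ 2 *
      (((q - 1) * m + 1) * ((q - 1) * m + 2) * ((q - 1) * m + 3) * ((q - 1) * m + 4)) := by
    -- after shifting `q` and `m` to their least values, all coefficients are positive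
    rw [← sub_pos]
    rcases h with ⟨hq₀, hm₀⟩ | ⟨hq₀, hm₀⟩ <;>
    · obtain ⟨a, rfl⟩ := Nat.exists_eq_add_of_le hq₀
      obtain ⟨b, rfl⟩ := Nat.exists_eq_add_of_le hm₀
      push_cast
      ring_nf
      positivity
  have hchoose :
      ((q ^ (m - 4) * ((q - 1) * m + 4).choose 4 : ℕ) : ℚ) ≤ ((q * m).choose m : ℕ) := by
    have hqm : (q - 1) * m + m = q * m := by
      rw [← Nat.succ_mul, Nat.succ_eq_add_one, Nat.sub_add_cancel hq]
    exact_mod_cast hqm ▸ pow_mul_choose_le_choose hm le_rfl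
  push_cast [cast_add_four_choose_four, Nat.cast_sub hq] at hchoose
  set P : ℚ := ((q - 1) * m + 1) * ((q - 1) * m + 2) * ((q - 1) * m + 3) * ((q - 1) * m + 4)
  calc ((q : ℚ) * m - 1) ^ 2 * q ^ m
        = (q : ℚ) ^ (m - 4) * (24 * q ^ 4 * (q * m - 1) ^ 2) / 24 := by
        rw [← pow_sub_mul_pow (q : ℚ) hm]; ring
    _ < (q : ℚ) ^ (m - 4) * (m * (q - 1) ^ 2 * P) / 24 := by gcongr
    _ = ((q : ℚ) - 1) ^ 2 * m * (q ^ (m - 4) * (P / 24)) := by ring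
    _ ≤ ((q : ℚ) - 1) ^ 2 * m * ((q * m).choose m : ℕ) := by gcongr

theorem two_mul_le_pow {q : ℕ} (hq : 2 ≤ q) (k : ℕ) : 2 * k ≤ q ^ k :=
  (Nat.mul_le_pow (by decide) k).trans (Nat.pow_le_pow_left hq k)

theorem gaussBinomial_succ_self_sq_mul_pow_lt_choose {q k : ℕ}
    (h : (2 ≤ q ∧ 8 ≤ q ^ k) ∨ (4 ≤ q ∧ q ≤ q ^ k)) :
    gaussBinomial q (k + 1) k ^ 2 * (q : ℚ) ^ ((k + 1 - k) * (q ^ k - 2 * k) + k)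
      < ((q ^ (k + 1)).choose (q ^ k) : ℕ) := by
  have hq : 2 ≤ q := by omega
  have hG : gaussBinomial q (k + 1) k * ((q : ℚ) - 1) = q ^ (k + 1) - 1 := by
    simpa [gaussBinomial_self hq] using gaussBinomial_succ_mul q k k
  have hexp : (q : ℚ) ^ ((k + 1 - k) * (q ^ k - 2 * k) + k) * q ^ k = q ^ q ^ k := by
    rw [← pow_add]
    congr 1
    have := two_mul_le_pow hq k
    rw [Nat.add_sub_cancel_left, one_mul]
    omega
  have hbase := sq_mul_pow_lt_mul_choose h
  rw [← pow_succ'] at hbase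
  push_cast at hbase
  have hpos : (0 : ℚ) < (q - 1) ^ 2 * q ^ k := by
    have : (1 : ℚ) < q := by exact_mod_cast hq
    have : (0 : ℚ) < q - 1 := by linarith
    positivity
  refine lt_of_mul_lt_mul_right ?_ hpos.le
  calc gaussBinomial q (k + 1) k ^ 2 * (q : ℚ) ^ ((k + 1 - k) * (q ^ k - 2 * k) + k)
        * ((q - 1) ^ 2 * q ^ k)
      = (gaussBinomial q (k + 1) k * (q - 1)) ^ 2
        * ((q : ℚ) ^ ((k + 1 - k) * (q ^ k - 2 * k) + k) * q ^ k) := by ring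
    _ = ((q : ℚ) * q ^ k - 1) ^ 2 * q ^ q ^ k := by rw [hG, hexp, pow_succ' (q : ℚ) k]
    _ < (q - 1) ^ 2 * q ^ k * ((q ^ (k + 1)).choose (q ^ k) : ℕ) := hbase
    _ = _ := mul_comm _ _

theorem gaussBinomial_sq_mul_pow_lt_choose_succ {q k n : ℕ} (hqk : 7 ≤ (q - 1) * (q ^ k - 1))
    (hkn : k < n)
    (ih : gaussBinomial q n k ^ 2 * (q : ℚ) ^ ((n - k) * (q ^ k - 2 * k) + k)
      < ((q ^ n).choose (q ^ k) : ℕ)) :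
    gaussBinomial q (n + 1) k ^ 2 * (q : ℚ) ^ ((n + 1 - k) * (q ^ k - 2 * k) + k)
      < ((q ^ (n + 1)).choose (q ^ k) : ℕ) := by
  have hq : 2 ≤ q := by rcases q with _ | _ | q <;> simp_all
  have hG : gaussBinomial q (n + 1) k * ((q : ℚ) ^ (n + 1) - q ^ k)
      = gaussBinomial q n k * ((q : ℚ) ^ (n + 1) - 1) * q ^ k := by
    rw [← gaussBinomial_succ_mul, ← pow_sub_mul_pow (q : ℚ) (by omega : k ≤ n + 1)]
    ring
  have hexp : (q : ℚ) ^ ((n + 1 - k) * (q ^ k - 2 * k) + k) * (q ^ k) ^ 2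
      = q ^ ((n - k) * (q ^ k - 2 * k) + k) * q ^ q ^ k := by
    rw [← pow_mul, ← pow_add, ← pow_add, Nat.sub_add_comm hkn.le, add_one_mul]
    have := two_mul_le_pow hq k
    congr 1
    omega
  have hchoose := pow_mul_choose_mul_sq_le_sq_mul_choose hqk
    (by rw [← pow_succ']; exact Nat.pow_le_pow_right (by omega) hkn : q * q ^ k ≤ q ^ n)
  rw [← pow_succ'] at hchoose
  push_cast [← pow_succ'] at hchoose
  have hM1 : (0 : ℚ) < q ^ (n + 1) - 1 := by
    rw [sub_pos]
    exact one_lt_pow₀ (by exact_mod_cast hq) (by omega)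
  refine lt_of_mul_lt_mul_right ?_ (sq_nonneg ((q : ℚ) ^ (n + 1) - q ^ k))
  calc gaussBinomial q (n + 1) k ^ 2 * (q : ℚ) ^ ((n + 1 - k) * (q ^ k - 2 * k) + k)
        * ((q : ℚ) ^ (n + 1) - q ^ k) ^ 2
      = (gaussBinomial q (n + 1) k * ((q : ℚ) ^ (n + 1) - q ^ k)) ^ 2
        * (q : ℚ) ^ ((n + 1 - k) * (q ^ k - 2 * k) + k) := by ring
    _ = gaussBinomial q n k ^ 2 * (q : ℚ) ^ ((n - k) * (q ^ k - 2 * k) + k)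
        * (((q : ℚ) ^ (n + 1) - 1) ^ 2 * q ^ q ^ k) := by
      rw [hG]; linear_combination (gaussBinomial q n k * ((q : ℚ) ^ (n + 1) - 1)) ^ 2 * hexp
    _ < ((q ^ n).choose (q ^ k) : ℕ) * (((q : ℚ) ^ (n + 1) - 1) ^ 2 * q ^ q ^ k) := by
      gcongr
    _ ≤ ((q ^ n).choose (q ^ k) : ℕ) * (((q : ℚ) ^ (n + 1)) ^ 2 * q ^ q ^ k) := by
      gcongr; linarith
    _ = (q : ℚ) ^ q ^ k * ((q ^ n).choose (q ^ k) : ℕ) * ((q : ℚ) ^ (n + 1)) ^ 2 := by ring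
    _ ≤ ((q : ℚ) ^ (n + 1) - q ^ k) ^ 2 * ((q ^ (n + 1)).choose (q ^ k) : ℕ) := hchoose
    _ = _ := mul_comm _ _

theorem gaussBinomial_sq_mul_pow_lt_choose {q k n : ℕ}
    (h : (2 ≤ q ∧ 8 ≤ q ^ k) ∨ (4 ≤ q ∧ q ≤ q ^ k)) (hkn : k < n) :
    gaussBinomial q n k ^ 2 * (q : ℚ) ^ ((n - k) * (q ^ k - 2 * k) + k)
      < ((q ^ n).choose (q ^ k) : ℕ) := by
  have hqk : 7 ≤ (q - 1) * (q ^ k - 1) := by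
    rcases h with ⟨hq, hm⟩ | ⟨hq, hm⟩ <;>
      nlinarith [Nat.sub_le_sub_right hq 1, Nat.sub_le_sub_right hm 1]
  induction n, hkn using Nat.le_induction with
  | base => exact gaussBinomial_succ_self_sq_mul_pow_lt_choose h
  | succ n hkn ih => exact gaussBinomial_sq_mul_pow_lt_choose_succ hqk hkn ih

/-- If `q ≥ 4, n > k ≥ 1`, or `q = 3, n > k ≥ 2`, or `q = 2, n > k ≥ 3`, then
`[n choose k]_q² / C(q^n, q^k) < 1 / q^{(n−k)(q^k − 2k) + k}`. -/
theorem gaussBinomial_sq_div_choose_lt_general (q n k : ℕ) (hkn : k < n)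
    (h : (4 ≤ q ∧ 1 ≤ k) ∨ (q = 3 ∧ 2 ≤ k) ∨ (q = 2 ∧ 3 ≤ k)) :
    (gaussBinomial q n k) ^ 2 / (Nat.choose (q ^ n) (q ^ k) : ℚ)
      < 1 / (q : ℚ) ^ ((n - k) * (q ^ k - 2 * k) + k) := by
  have hm : (2 ≤ q ∧ 8 ≤ q ^ k) ∨ (4 ≤ q ∧ q ≤ q ^ k) := by
    rcases h with ⟨hq, hk⟩ | ⟨rfl, hk⟩ | ⟨rfl, hk⟩
    · exact .inr ⟨hq, Nat.le_self_pow (by omega) q⟩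
    · exact .inl ⟨by norm_num,
        (by norm_num : 8 ≤ 3 ^ 2).trans (Nat.pow_le_pow_right (by norm_num) hk)⟩
    · exact .inl ⟨le_rfl, (by norm_num : 8 ≤ 2 ^ 3).trans (Nat.pow_le_pow_right (by norm_num) hk)⟩
  have hq : 0 < q := by omega
  have hchoose : 0 < (q ^ n).choose (q ^ k) :=
    Nat.choose_pos (Nat.pow_le_pow_right hq hkn.le)
  rw [div_lt_div_iff₀ (by exact_mod_cast hchoose) (by positivity), one_mul]
  exact gaussBinomial_sq_mul_pow_lt_choose hm hkn
end

section
/- Let f be a permutation of F_2^n and let V_f = {0} ∪ { a ∈ F_2^n \ {0} : f(H(a, 0)) is an (n−1)-flat }, where H(a, 0) = { x ∈ F_2^n : ⟨a, x⟩ = 0 }. Then V_f is an F_2-subspace of F_2^n. -/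
/-
Identify `a` with the functional `φ = ⟨a, ·⟩`, so that `H(a, 0) = ker φ` and `f(H(a, 0))` is the
zero set of `φ ∘ f⁻¹`. The hyperplane-flats are the level sets of nonzero functionals, and over
`𝔽₂` a function has a level set as its zero set only if it is itself affine. Hence `V_f` is the
set of `φ` for which `φ ∘ f⁻¹` is affine: the preimage of the subspace of affine functions under
the linear map `φ ↦ φ ∘ f⁻¹`.
-/

open Module LinearMap

theorem image_add_right_ker {R M M₂ : Type*} [Ring R] [AddCommGroup M] [Module R M]
    [AddCommGroup M₂] [Module R M₂] (φ : M →ₗ[R] M₂) (x : M) :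
    (fun u => u + x) '' (ker φ : Set M) = {y | φ y = φ x} := by
  ext y
  constructor
  · rintro ⟨u, hu, rfl⟩
    simp_all
  · intro hy
    exact ⟨y - x, by simpa [sub_eq_zero] using hy, sub_add_cancel y x⟩

section Field

variable {k V : Type*} [Field k] [AddCommGroup V] [Module k V]

variable (k V) in
def affineFunctions : Submodule k (V → k) where
  carrier := Set.range ((⇑) : (V →ᵃ[k] k) → V → k)
  add_mem' := by
    rintro _ _ ⟨g, rfl⟩ ⟨h, rfl⟩
    exact ⟨g + h, AffineMap.coe_add g h⟩
  zero_mem' := ⟨0, AffineMap.coe_zero⟩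
  smul_mem' := by
    rintro c _ ⟨g, rfl⟩
    exact ⟨c • g, AffineMap.coe_smul c g⟩

def affineDuals (f : Equiv.Perm V) : Submodule k (Dual k V) :=
  (affineFunctions k V).comap (LinearMap.pi fun y => Dual.eval k V (f.symm y))

theorem mem_affineDuals {f : Equiv.Perm V} {φ : Dual k V} :
    φ ∈ affineDuals f ↔ ∃ g : V →ᵃ[k] k, ⇑g = φ ∘ f.symm :=
  Iff.rfl

variable [FiniteDimensional k V]

theorem isFlat_setOf_apply_eq {φ : Dual k V} (hφ : φ ≠ 0) (ε : k) :
    IsFlat k (finrank k V - 1) {y | φ y = ε} := by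
  obtain ⟨x, rfl⟩ := LinearMap.surjective hφ ε
  refine ⟨ker φ, x, ?_, (image_add_right_ker φ x).symm⟩
  have := Dual.finrank_ker_add_one_of_ne_zero hφ
  omega

theorem IsFlat.exists_eq_setOf_apply_eq (hV : 0 < finrank k V) {X : Set V}
    (h : IsFlat k (finrank k V - 1) X) : ∃ φ : Dual k V, φ ≠ 0 ∧ ∃ ε, X = {y | φ y = ε} := by
  obtain ⟨U, x, hU, rfl⟩ := h
  obtain ⟨φ, hφ, hUφ⟩ := U.exists_le_ker_of_lt_top
    (Submodule.lt_top_of_finrank_lt_finrank (by omega))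
  obtain rfl : U = ker φ := Submodule.eq_of_le_of_finrank_eq hUφ <| by
    have := Dual.finrank_ker_add_one_of_ne_zero hφ
    omega
  exact ⟨φ, hφ, φ x, image_add_right_ker φ x⟩

end Field

section ZModTwo

variable {V : Type*} [AddCommGroup V] [Module (ZMod 2) V] [FiniteDimensional (ZMod 2) V]

theorem isFlat_setOf_eq_zero_iff_exists_affineMap {g : V → ZMod 2}
    (hg : Function.Surjective g) :
    IsFlat (ZMod 2) (finrank (ZMod 2) V - 1) {y | g y = 0} ↔
      ∃ g' : V →ᵃ[ZMod 2] ZMod 2, ⇑g' = g := by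
  constructor
  · intro h
    obtain ⟨x₀, hx₀⟩ := hg 0
    obtain ⟨x₁, hx₁⟩ := hg 1
    have : Nontrivial V := nontrivial_of_ne x₀ x₁ fun h => by simp [h, hx₁] at hx₀
    obtain ⟨φ, -, ε, hX⟩ := h.exists_eq_setOf_apply_eq finrank_pos
    have two_valued : ∀ u v e : ZMod 2, (u = 0 ↔ v = e) → v + e = u := by decide
    exact ⟨φ.toAffineMap + AffineMap.const _ _ ε, funext fun y =>
      two_valued _ _ _ (Set.ext_iff.mp hX y)⟩
  · rintro ⟨g', rfl⟩
    have hdecomp (y : V) : g' y = g'.linear y + g' 0 := congrFun g'.decomp y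
    have hlin : g'.linear ≠ 0 := by
      intro h0
      obtain ⟨y, hy⟩ := hg (g' 0 + 1)
      simp [hdecomp y, h0] at hy
    convert isFlat_setOf_apply_eq hlin (-g' 0) using 1
    ext y
    simp only [Set.mem_ofPred_eq, hdecomp y, add_eq_zero_iff_eq_neg]

theorem mem_affineDuals_iff_isFlat (f : Equiv.Perm V) (φ : Dual (ZMod 2) V) :
    φ ∈ affineDuals f ↔ φ = 0 ∨ IsFlat (ZMod 2) (finrank (ZMod 2) V - 1) (f '' ker φ) := by
  rcases eq_or_ne φ 0 with rfl | hφ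
  · simp [zero_mem]
  have himage : f '' ker φ = {y | (φ ∘ f.symm) y = 0} := by
    ext y
    simp [Equiv.image_eq_preimage_symm]
  rw [mem_affineDuals, himage, isFlat_setOf_eq_zero_iff_exists_affineMap
    ((LinearMap.surjective hφ).comp f.symm.surjective)]
  simp [hφ]

end ZModTwo

/-- For a permutation `f` of `𝔽₂ⁿ`, the set
`V_f = {0} ∪ { a ≠ 0 : f(H(a,0)) is an (n−1)-flat }` is an `𝔽₂`-subspace of `𝔽₂ⁿ`,
where `H(a,0) = { x : ⟨a,x⟩ = 0 }`. -/
theorem Vf_is_subspace (n : ℕ) (f : Equiv.Perm (Fin n → ZMod 2)) :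
    ∃ U : Submodule (ZMod 2) (Fin n → ZMod 2),
      (U : Set (Fin n → ZMod 2)) =
        insert (0 : Fin n → ZMod 2)
          {a : Fin n → ZMod 2 | a ≠ 0 ∧
            IsFlat (ZMod 2) (n - 1) (⇑f '' {x : Fin n → ZMod 2 | ∑ i, a i * x i = 0})} := by
  refine ⟨(affineDuals f).comap (dotProductEquiv (ZMod 2) (Fin n)).toLinearMap, ?_⟩
  ext a
  have hker : (ker (dotProductEquiv (ZMod 2) (Fin n) a) : Set (Fin n → ZMod 2)) =
      {x | ∑ i, a i * x i = 0} := rfl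
  simp only [SetLike.mem_coe, Submodule.mem_comap, LinearEquiv.coe_coe,
    mem_affineDuals_iff_isFlat, hker, finrank_fin_fun, LinearEquiv.map_eq_zero_iff,
    Set.mem_insert_iff, Set.mem_ofPred_eq]
  tauto
end
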